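/- arXiv:2503.12598 — 10 statements merged into one kernel-verified Lean document; each statement's English description precedes it below -/
import Mathlib

section
/- Let T be a bounded linear operator on a complex Hilbert space H. If T² is normal and Re(T^{2k+1}) ≥ 0 for some positive integer k, then Tⁿ is normal for every integer n ≥ 2. -/
noncomputable section

namespace PNAux

open NormedSpace Bornology Set ContinuousLinearMap

variable {H : Type*} [NormedAddCommGroup H] [InnerProductSpace ℂ H] [CompleteSpace H]

local notation "⟪" x ", " y "⟫" => (inner ℂ x y : ℂ)

/-- **Fuglede's theorem** (commutant form): if `T` commutes with a normal operator `N`,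
then it commutes with `star N`. -/
theorem fuglede {N T : H →L[ℂ] H} (hN : IsStarNormal N) (hc : Commute T N) :
    Commute T (star N) := by
  let _ : NormedAlgebra ℚ (H →L[ℂ] H) := .restrictScalars ℚ ℂ (H →L[ℂ] H)
  have hNsN : Commute N (star N) := hN.star_comm_self.symm
  have hconj : ∀ μ : ℂ, exp (μ • N) * T * exp (-(μ • N)) = T := by
    intro μ
    have h1 : exp (μ • N) * exp (-(μ • N)) = 1 := by
      rw [← exp_add_of_commute (Commute.refl (μ • N)).neg_right, add_neg_cancel, exp_zero]
    have h2 : exp (μ • N) * T = T * exp (μ • N) :=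
      ((hc.smul_right μ).exp_right).symm
    rw [h2, mul_assoc, h1, mul_one]
  set f : ℂ → (H →L[ℂ] H) := fun z => exp (-(z • star N)) * T * exp (z • star N) with hf
  have hdiffexp : ∀ S : H →L[ℂ] H, Differentiable ℂ (fun z : ℂ => exp (z • S)) := fun S =>
    fun z => (hasDerivAt_exp_smul_const S z).differentiableAt
  have hdiff : Differentiable ℂ f := by
    have d1 : Differentiable ℂ (fun z : ℂ => exp (-(z • star N))) := by
      have : (fun z : ℂ => exp (-(z • star N))) = fun z : ℂ => exp (z • (-(star N))) := by
        funext z; rw [smul_neg]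
      rw [this]; exact hdiffexp _
    exact (d1.mul (differentiable_const T)).mul (hdiffexp (star N))
  have hbound : ∀ z, ‖f z‖ = ‖T‖ := by
    intro z
    set w := (starRingEnd ℂ) z with hw
    set u := w • N - z • star N with hu
    have hu_skew : u ∈ skewAdjoint (H →L[ℂ] H) := by
      rw [skewAdjoint.mem_iff, hu]
      simp only [star_sub, star_smul, star_star, RCLike.star_def, hw]
      rw [starRingEnd_self_apply]
      abel
    have hnu_skew : -u ∈ skewAdjoint (H →L[ℂ] H) := neg_mem hu_skew
    have hcm : Commute (-(z • star N)) (w • N) :=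
      (((hNsN.symm).smul_left z).smul_right w).neg_left
    have h1 : exp (-(z • star N)) * exp (w • N) = exp u := by
      rw [← exp_add_of_commute hcm, hu, neg_add_eq_sub]
    have hcm2 : Commute (-(w • N)) (z • star N) :=
      ((hNsN.smul_left w).smul_right z).neg_left
    have h2 : exp (-(w • N)) * exp (z • star N) = exp (-u) := by
      rw [← exp_add_of_commute hcm2, hu, neg_sub, neg_add_eq_sub]
    have : f z = exp u * (T * exp (-u)) := by
      rw [hf]
      calc exp (-(z • star N)) * T * exp (z • star N)
          = exp (-(z • star N)) * (exp (w • N) * T * exp (-(w • N))) * exp (z • star N) := by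
            rw [hconj w]
        _ = (exp (-(z • star N)) * exp (w • N)) * (T * (exp (-(w • N)) * exp (z • star N))) := by
            simp only [mul_assoc]
        _ = exp u * (T * exp (-u)) := by rw [h1, h2]
    rw [this, CStarRing.norm_mem_unitary_mul _ (exp_mem_unitary_of_mem_skewAdjoint hu_skew),
      CStarRing.norm_mul_mem_unitary _ (exp_mem_unitary_of_mem_skewAdjoint hnu_skew)]
  have hb : IsBounded (range f) := by
    rw [isBounded_iff_forall_norm_le]
    exact ⟨‖T‖, by rintro x ⟨z, rfl⟩; exact (hbound z).le⟩
  have hconst : ∀ z : ℂ, exp (-(z • star N)) * T * exp (z • star N) = T := by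
    intro z
    have := hdiff.apply_eq_apply_of_bounded hb z 0
    simpa [hf] using this
  have hTE : ∀ z : ℂ, T * exp (z • star N) = exp (z • star N) * T := by
    intro z
    have h1 : exp (z • star N) * exp (-(z • star N)) = 1 := by
      rw [← exp_add_of_commute (Commute.refl (z • star N)).neg_right, add_neg_cancel, exp_zero]
    calc T * exp (z • star N)
        = (exp (z • star N) * exp (-(z • star N))) * T * exp (z • star N) := by
          rw [h1, one_mul]
      _ = exp (z • star N) * (exp (-(z • star N)) * T * exp (z • star N)) := by
          simp only [mul_assoc]
      _ = exp (z • star N) * T := by rw [hconst z]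
  have hD : HasDerivAt (fun z : ℂ => exp (z • star N)) (star N) 0 := by
    simpa using hasDerivAt_exp_smul_const' (star N) (0 : ℂ)
  have h₁ : HasDerivAt (fun z : ℂ => T * exp (z • star N)) (T * star N) 0 := hD.const_mul T
  have h₂ : HasDerivAt (fun z : ℂ => exp (z • star N) * T) (star N * T) 0 := hD.mul_const T
  have hfun : (fun z : ℂ => T * exp (z • star N)) = fun z : ℂ => exp (z • star N) * T :=
    funext hTE
  rw [hfun] at h₁
  exact h₁.unique h₂

/-- Anything commuting with a selfadjoint operator commutes with continuous functions of it. -/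
theorem commute_cfc {R X : H →L[ℂ] H} (hR : IsSelfAdjoint R)
    (h : Commute X R) (f : ℝ → ℝ) : Commute X (cfc f R) := by
  by_cases hf : ContinuousOn f (spectrum ℝ R)
  · have key : ∀ g : C(spectrum ℝ R, ℝ), Commute X (cfcHom (R := ℝ) hR g) := by
      intro g
      let S : Subalgebra ℝ C(spectrum ℝ R, ℝ) :=
        { carrier := {g | Commute X (cfcHom (R := ℝ) hR g)}
          mul_mem' := by
            intro a b ha hb
            simpa only [mem_setOf_eq, map_mul] using ha.mul_right hb
          add_mem' := by
            intro a b ha hb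
            simpa only [mem_setOf_eq, map_add] using ha.add_right hb
          one_mem' := by
            simpa only [mem_setOf_eq, map_one] using Commute.one_right X
          zero_mem' := by
            simpa only [mem_setOf_eq, map_zero] using Commute.zero_right X
          algebraMap_mem' := fun r => by
            simp only [mem_setOf_eq, AlgHomClass.commutes]
            exact (Algebra.commutes r X).symm }
      have hclosed : IsClosed (S : Set C(spectrum ℝ R, ℝ)) := by
        have hφ : Continuous (cfcHom (R := ℝ) hR (A := H →L[ℂ] H)) :=
          (cfcHom_isClosedEmbedding (R := ℝ) hR).continuous
        have : (S : Set C(spectrum ℝ R, ℝ)) =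
            {g | X * cfcHom (R := ℝ) hR g = cfcHom (R := ℝ) hR g * X} := rfl
        rw [this]
        exact isClosed_eq (continuous_const.mul hφ) (hφ.mul continuous_const)
      have hid : (ContinuousMap.id ℝ).restrict (spectrum ℝ R) ∈ S := by
        show Commute X _
        rw [cfcHom_id (R := ℝ) hR]
        exact h
      have hsep : S.SeparatesPoints := by
        intro x y hxy
        refine ⟨_, ⟨(ContinuousMap.id ℝ).restrict (spectrum ℝ R), hid, rfl⟩, ?_⟩
        simpa using Subtype.coe_injective.ne hxy
      have htop := ContinuousMap.subalgebra_topologicalClosure_eq_top_of_separatesPoints S hsep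
      have hg : g ∈ S.topologicalClosure := htop ▸ Algebra.mem_top
      have hg' : g ∈ closure (S : Set C(spectrum ℝ R, ℝ)) := hg
      rwa [hclosed.closure_eq] at hg'
    rw [cfc_apply f R hR hf]
    exact key _
  · rw [cfc_apply_of_not_continuousOn R hf]
    exact Commute.zero_right X

lemma star_inner_left (S : H →L[ℂ] H) (x y : H) : ⟪(star S) x, y⟫ = ⟪x, S y⟫ := by
  rw [star_eq_adjoint]; exact adjoint_inner_left S y x

lemma inner_star_right (S : H →L[ℂ] H) (x y : H) : ⟪x, (star S) y⟫ = ⟪S x, y⟫ := by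
  rw [star_eq_adjoint]; exact adjoint_inner_right S x y

lemma selfadj_inner_move {S : H →L[ℂ] H} (hS : IsSelfAdjoint S) (y x : H) :
    ⟪S y, x⟫ = ⟪y, S x⟫ := by
  conv_lhs => rw [← hS.star_eq]
  exact star_inner_left S y x

lemma normal_inner_self {S : H →L[ℂ] H} (hS : IsStarNormal S) (y : H) :
    ⟪S y, S y⟫ = ⟪(star S) y, (star S) y⟫ := by
  have h1 : ⟪(star S * S) y, y⟫ = ⟪S y, S y⟫ := by
    rw [mul_apply_eq_comp]; exact star_inner_left S (S y) y
  have h2 : ⟪(S * star S) y, y⟫ = ⟪(star S) y, (star S) y⟫ := by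
    rw [mul_apply_eq_comp]; exact (inner_star_right S ((star S) y) y).symm
  rw [← h1, hS.star_comm_self.eq, h2]

lemma normal_apply_eq_zero_iff {S : H →L[ℂ] H} (hS : IsStarNormal S) (y : H) :
    S y = 0 ↔ (star S) y = 0 := by
  rw [← inner_self_eq_zero (𝕜 := ℂ) (x := S y),
    ← inner_self_eq_zero (𝕜 := ℂ) (x := (star S) y), normal_inner_self hS]

lemma normal_sq_apply_eq_zero {S : H →L[ℂ] H} (hS : IsStarNormal S) (y : H)
    (h : S (S y) = 0) : S y = 0 := by
  have h' : (star S) (S y) = 0 := (normal_apply_eq_zero_iff hS (S y)).mp h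
  have : ⟪S y, S y⟫ = 0 := by
    rw [← star_inner_left S (S y) y, h', inner_zero_left]
  exact inner_self_eq_zero.mp this

lemma normal_pow_apply_eq_zero {S : H →L[ℂ] H} (hS : IsStarNormal S) (j : ℕ) (y : H)
    (h : (S ^ (j + 1)) y = 0) : S y = 0 := by
  induction j generalizing y with
  | zero => simpa using h
  | succ j ih =>
    have h1 : (S ^ (j + 1)) (S y) = 0 := by
      rw [← mul_apply_eq_comp, ← pow_succ]; exact h
    exact normal_sq_apply_eq_zero hS y (ih (S y) h1)

omit [CompleteSpace H] in
/-- An operator with vanishing quadratic form is zero. -/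
lemma eq_zero_of_inner_self_eq_zero {W : H →L[ℂ] H} (h : ∀ x : H, ⟪W x, x⟫ = 0) : W = 0 := by
  have := (inner_map_self_eq_zero (W : H →ₗ[ℂ] H)).mp (fun x => h x)
  exact ContinuousLinearMap.coe_injective (by rw [this]; rfl)

/-- **Key lemma**: an accretive operator whose square is normal is normal. -/
theorem isStarNormal_of_accretive {B : H →L[ℂ] H} (hsq : IsStarNormal (B * B))
    (hRe : ∀ x : H, 0 ≤ (⟪B x, x⟫).re) : IsStarNormal B := by
  have hF : B * (star B * star B) = star B * star B * B := by
    have := (fuglede hsq ((Commute.refl B).mul_right (Commute.refl B))).eq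
    rwa [star_mul] at this
  have h2 : B * (B * star B) = star B * (B * B) := by
    have := congrArg star hF
    simpa only [star_mul, star_star, mul_assoc] using this
  set D := B * star B - star B * B with hD
  have hDsa : IsSelfAdjoint D := by
    rw [IsSelfAdjoint, hD, star_sub, star_mul, star_mul, star_star]
  have hBD : B * D + D * B = 0 := by
    have hexp : B * D + D * B = B * (B * star B) - star B * (B * B) := by
      rw [hD]; noncomm_ring
    rw [hexp, h2, sub_self]
  have hsBD : star B * D + D * star B = 0 := by
    have := congrArg star hBD
    simpa only [star_add, star_mul, star_zero, hDsa.star_eq, add_comm] using this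
  set R := B + star B with hR
  have hRsa : IsSelfAdjoint R := by
    rw [IsSelfAdjoint, hR, star_add, star_star, add_comm]
  have hRD : R * D + D * R = 0 := by
    have hexp : R * D + D * R = (B * D + D * B) + (star B * D + D * star B) := by
      rw [hR]; noncomm_ring
    rw [hexp, hBD, hsBD, add_zero]
  have hRD' : R * D = -(D * R) := eq_neg_of_add_eq_zero_left hRD
  have hRpos : ∀ x : H, 0 ≤ (⟪R x, x⟫).re := by
    intro x
    have hexp : ⟪R x, x⟫ = ⟪B x, x⟫ + ⟪x, B x⟫ := by
      rw [hR, add_apply, inner_add_left, star_inner_left]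
    have hcj : ⟪x, B x⟫ = (starRingEnd ℂ) ⟪B x, x⟫ := (inner_conj_symm x (B x)).symm
    rw [hexp, hcj]
    simp only [Complex.add_re, Complex.conj_re]
    linarith [hRe x]
  have hR0 : (0 : H →L[ℂ] H) ≤ R := by
    rw [ContinuousLinearMap.nonneg_iff_isPositive]
    exact ⟨ContinuousLinearMap.isSelfAdjoint_iff_isSymmetric.mp hRsa, fun x => by simpa [ContinuousLinearMap.reApplyInnerSelf_apply] using hRpos x⟩
  have hRD2 : Commute R (D * D) := by
    show R * (D * D) = (D * D) * R
    calc R * (D * D) = (R * D) * D := by rw [mul_assoc]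
      _ = -((D * R) * D) := by rw [hRD', neg_mul]
      _ = -(D * (R * D)) := by rw [mul_assoc]
      _ = D * (D * R) := by rw [hRD', mul_neg, neg_neg]
      _ = (D * D) * R := by rw [mul_assoc]
  set s := cfc Real.sqrt R with hs
  have hs_sa : IsSelfAdjoint s := cfc_predicate Real.sqrt R
  have hss : s * s = R := by
    rw [hs, ← cfc_mul Real.sqrt Real.sqrt R
      Real.continuous_sqrt.continuousOn Real.continuous_sqrt.continuousOn]
    have hEq : (spectrum ℝ R).EqOn (fun x => Real.sqrt x * Real.sqrt x) (fun x : ℝ => x) := by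
      intro t ht
      exact Real.mul_self_sqrt (spectrum_nonneg_of_nonneg hR0 ht)
    rw [cfc_congr hEq, cfc_id' ℝ R]
  have hsD2 : Commute (D * D) s := commute_cfc hRsa hRD2.symm Real.sqrt
  have key_nonneg : ∀ x : H, 0 ≤ (⟪(R * (D * D)) x, x⟫).re := by
    intro x
    have hexp : R * (D * D) = s * ((D * D) * s) := by
      rw [← hss, mul_assoc, ← hsD2.eq]
    have hval : ⟪(R * (D * D)) x, x⟫ = ⟪D (s x), D (s x)⟫ := by
      rw [hexp]
      calc ⟪(s * ((D * D) * s)) x, x⟫ = ⟪s (((D * D) * s) x), x⟫ := by rw [mul_apply_eq_comp]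
        _ = ⟪((D * D) * s) x, s x⟫ := selfadj_inner_move hs_sa _ _
        _ = ⟪D (D (s x)), s x⟫ := by rw [mul_apply_eq_comp, mul_apply_eq_comp]
        _ = ⟪D (s x), D (s x)⟫ := selfadj_inner_move hDsa _ _
    rw [hval]
    have := inner_self_nonneg (𝕜 := ℂ) (x := D (s x))
    simpa using this
  have key_nonpos : ∀ x : H, (⟪(R * (D * D)) x, x⟫).re ≤ 0 := by
    intro x
    have hexp : R * (D * D) = -(D * (R * D)) := by
      calc R * (D * D) = (R * D) * D := by rw [mul_assoc]
        _ = -(D * R) * D := by rw [hRD']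
        _ = -(D * (R * D)) := by noncomm_ring
    have hmove : ⟪D (R (D x)), x⟫ = ⟪R (D x), D x⟫ := selfadj_inner_move hDsa _ _
    have hval : ⟪(R * (D * D)) x, x⟫ = -⟪R (D x), D x⟫ := by
      rw [hexp, neg_apply, inner_neg_left, mul_apply_eq_comp, mul_apply_eq_comp, hmove]
    rw [hval]
    simp only [Complex.neg_re, neg_nonpos]
    exact hRpos (D x)
  have hWsa : IsSelfAdjoint (R * (D * D)) := by
    rw [IsSelfAdjoint, star_mul, star_mul, hDsa.star_eq, hRsa.star_eq]
    exact hRD2.eq.symm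
  have hzero : ∀ x : H, ⟪(R * (D * D)) x, x⟫ = 0 := by
    intro x
    have hre : (⟪(R * (D * D)) x, x⟫).re = 0 :=
      le_antisymm (key_nonpos x) (key_nonneg x)
    have hconjeq : (starRingEnd ℂ) ⟪(R * (D * D)) x, x⟫ = ⟪(R * (D * D)) x, x⟫ := by
      rw [inner_conj_symm]
      exact (selfadj_inner_move hWsa x x).symm
    have him : (⟪(R * (D * D)) x, x⟫).im = 0 := by
      have := congrArg Complex.im hconjeq
      simp only [Complex.conj_im] at this
      linarith
    exact Complex.ext hre him
  have hW0 : R * (D * D) = 0 := eq_zero_of_inner_self_eq_zero hzero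
  have hD2R : (D * D) * R = 0 := by rw [← hRD2.eq, hW0]
  have hDR0 : D * R = 0 := by
    ext x
    have h1 : D (D (R x)) = 0 := by
      have := congrArg (fun (W : H →L[ℂ] H) => W x) hD2R
      simpa only [mul_apply_eq_comp, zero_apply] using this
    have h2 : ⟪D (R x), D (R x)⟫ = 0 := by
      have := (selfadj_inner_move hDsa (D (R x)) (R x)).symm
      rw [h1, inner_zero_left] at this
      exact this
    simpa using inner_self_eq_zero.mp h2
  have hRD0 : R * D = 0 := by
    have := congrArg star hDR0
    rwa [star_mul, hRsa.star_eq, hDsa.star_eq, star_zero] at this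
  have hDB : D * B = -(B * D) := eq_neg_of_add_eq_zero_left (by rw [add_comm]; exact hBD)
  have hDsB : D * star B = -(D * B) := by
    have h0 : D * star B + D * B = 0 := by
      have h1 : D * (B + star B) = 0 := by rw [← hR]; exact hDR0
      rw [mul_add] at h1
      rw [add_comm]; exact h1
    exact eq_neg_of_add_eq_zero_left h0
  have hDD : D * D = 0 := by
    have hexp : D * D = D * B * star B - D * star B * B := by
      rw [hD]; noncomm_ring
    calc D * D = D * B * star B - D * star B * B := hexp
      _ = D * B * star B + D * B * B := by rw [hDsB]; noncomm_ring
      _ = D * B * (star B + B) := by noncomm_ring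
      _ = -(B * D) * (star B + B) := by rw [hDB]
      _ = -(B * (D * (star B + B))) := by noncomm_ring
      _ = -(B * (D * R)) := by rw [hR, add_comm]
      _ = 0 := by rw [hDR0, mul_zero, neg_zero]
  have hDzero : D = 0 := by
    ext x
    have h1 : D (D x) = 0 := by
      have := congrArg (fun (W : H →L[ℂ] H) => W x) hDD
      simpa only [mul_apply_eq_comp, zero_apply] using this
    have h2 : ⟪D x, D x⟫ = 0 := by
      have := (selfadj_inner_move hDsa (D x) x).symm
      rw [h1, inner_zero_left] at this
      exact this
    simpa using inner_self_eq_zero.mp h2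
  refine ⟨?_⟩
  have : B * star B = star B * B := by
    have := sub_eq_zero.mp (hD ▸ hDzero)
    exact this
  exact this.symm

lemma isStarNormal_pow {S : H →L[ℂ] H} (hS : IsStarNormal S) (n : ℕ) :
    IsStarNormal (S ^ n) := by
  refine ⟨?_⟩
  rw [star_pow]
  exact hS.star_comm_self.pow_pow n n

end PNAux

open PNAux ContinuousLinearMap in
/-- If `T²` is normal and `Re(T^{2k+1}) ≥ 0` for some positive integer `k`,
then `Tⁿ` is normal for every `n ≥ 2`. -/
theorem powers_normal_of_sq_normal_of_odd_power_accretive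
    {H : Type*} [NormedAddCommGroup H] [InnerProductSpace ℂ H] [CompleteSpace H]
    (T : H →L[ℂ] H)
    (h2 : IsStarNormal (T ^ 2))
    (hk : ∃ k : ℕ, 0 < k ∧ ∀ x : H, 0 ≤ (inner ℂ ((T ^ (2 * k + 1)) x) x : ℂ).re) :
    ∀ n : ℕ, 2 ≤ n → IsStarNormal (T ^ n) := by
  obtain ⟨k, hkpos, hRe⟩ := hk
  -- the odd power B = T ^ (2k+1)
  set B := T ^ (2 * k + 1) with hB
  have hBB : B * B = (T ^ 2) ^ (2 * k + 1) := by
    rw [hB, ← pow_add, ← pow_mul]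
    ring_nf
  have hBsq : IsStarNormal (B * B) := by
    rw [hBB]; exact isStarNormal_pow h2 _
  have hBnormal : IsStarNormal B := isStarNormal_of_accretive hBsq hRe
  -- Fuglede consequences
  have hTA' : Commute T (star (T ^ 2)) := fuglede h2 ((Commute.refl T).pow_right 2)
  have hTB' : Commute T (star B) := fuglede hBnormal ((Commute.refl T).pow_right (2 * k + 1))
  have hTs2 : Commute T (star T ^ 2) := by rw [← star_pow]; exact hTA'
  have hTs2k : Commute T (star T ^ (2 * k)) := by
    rw [pow_mul]; exact hTs2.pow_right k
  have hTsm : Commute T (star T ^ (2 * k + 1)) := by rw [← star_pow]; exact hTB'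
  set D := T * star T - star T * T with hD
  have hDsa : IsSelfAdjoint D := by
    rw [IsSelfAdjoint, hD, star_sub, star_mul, star_mul, star_star]
  -- (star T)^(2k) * D = 0
  have hker : star T ^ (2 * k) * D = 0 := by
    have e1 : star T ^ (2 * k) * (T * star T) = T * star T ^ (2 * k + 1) := by
      calc star T ^ (2 * k) * (T * star T) = (star T ^ (2 * k) * T) * star T := by
            rw [mul_assoc]
        _ = (T * star T ^ (2 * k)) * star T := by rw [hTs2k.symm.eq]
        _ = T * star T ^ (2 * k + 1) := by rw [mul_assoc, ← pow_succ]
    have e2 : star T ^ (2 * k) * (star T * T) = T * star T ^ (2 * k + 1) := by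
      calc star T ^ (2 * k) * (star T * T) = (star T ^ (2 * k) * star T) * T := by
            rw [mul_assoc]
        _ = star T ^ (2 * k + 1) * T := by rw [← pow_succ]
        _ = T * star T ^ (2 * k + 1) := (hTsm.symm).eq
    rw [hD, mul_sub, e1, e2, sub_self]
  -- normality of star (T^2)
  have hsA : IsStarNormal (star (T ^ 2)) := by
    refine ⟨?_⟩
    rw [star_star]
    exact h2.star_comm_self.symm
  -- star (T^2) * D = 0
  have hsAD : star (T ^ 2) * D = 0 := by
    ext x
    have h1 : ((star (T ^ 2)) ^ ((k - 1) + 1)) (D x) = 0 := by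
      rw [Nat.sub_add_cancel hkpos, ← star_pow, ← pow_mul]
      have := congrArg (fun (W : H →L[ℂ] H) => W x) hker
      simpa only [mul_apply_eq_comp, zero_apply, star_pow] using this
    have := normal_pow_apply_eq_zero hsA (k - 1) (D x) h1
    simpa using this
  have hAD : T ^ 2 * D = 0 := by
    ext x
    have h1 : (star (T ^ 2)) (D x) = 0 := by
      have := congrArg (fun (W : H →L[ℂ] H) => W x) hsAD
      simpa only [mul_apply_eq_comp, zero_apply] using this
    have := (normal_apply_eq_zero_iff h2 (D x)).mpr h1
    simpa using this
  have hDsA : D * star (T ^ 2) = 0 := by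
    have := congrArg star hAD
    rwa [star_mul, hDsa.star_eq, star_zero] at this
  -- commutation relations
  have cT_sA : Commute T (star (T ^ 2)) := hTA'
  have csT_A : Commute (star T) (T ^ 2) := by
    have := hTA'.star_star
    rwa [star_star] at this
  have cA_sA : Commute (T ^ 2) (star (T ^ 2)) := h2.star_comm_self.symm
  -- main conclusion
  intro n hn
  rcases Nat.even_or_odd n with he | ho
  · obtain ⟨r, hr⟩ := he
    have : T ^ n = (T ^ 2) ^ r := by rw [← pow_mul, hr, two_mul]
    rw [this]
    exact isStarNormal_pow h2 r
  · obtain ⟨r, hr⟩ := ho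
    have hr1 : 1 ≤ r := by omega
    set P := (T ^ 2) ^ r with hP
    set Q := (star (T ^ 2)) ^ r with hQ
    have hTn : T ^ n = P * T := by rw [hP, ← pow_mul, ← pow_succ, hr]
    have hsTn : star (T ^ n) = star T * Q := by rw [hTn, star_mul, hQ, star_pow]
    have hPD : P * D = 0 := by
      rw [hP]
      calc (T ^ 2) ^ r * D = (T ^ 2) ^ (r - 1) * (T ^ 2 * D) := by
            rw [← mul_assoc, ← pow_succ, Nat.sub_add_cancel hr1]
        _ = 0 := by rw [hAD, mul_zero]
    have hDQ : D * Q = 0 := by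
      rw [hQ]
      calc D * (star (T ^ 2)) ^ r = (D * star (T ^ 2)) * (star (T ^ 2)) ^ (r - 1) := by
            rw [mul_assoc, ← pow_succ', Nat.sub_add_cancel hr1]
        _ = 0 := by rw [hDsA, zero_mul]
    have cQP : Q * P = P * Q := (cA_sA.pow_pow r r).symm.eq
    have cQT : Q * T = T * Q := ((cT_sA.pow_right r).symm).eq
    have cPsT : P * star T = star T * P := (csT_A.pow_right r).symm.eq
    have hTsT : T * star T = star T * T + D := by rw [hD]; noncomm_ring
    refine ⟨?_⟩
    show star (T ^ n) * T ^ n = T ^ n * star (T ^ n)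
    rw [hsTn, hTn]
    calc (star T * Q) * (P * T)
        = star T * ((Q * P) * T) := by simp only [mul_assoc]
      _ = star T * ((P * Q) * T) := by rw [cQP]
      _ = star T * (P * (Q * T)) := by simp only [mul_assoc]
      _ = star T * (P * (T * Q)) := by rw [cQT]
      _ = (star T * P) * (T * Q) := by simp only [mul_assoc]
      _ = (P * star T) * (T * Q) := by rw [cPsT]
      _ = P * ((star T * T) * Q) := by simp only [mul_assoc]
      _ = P * ((star T * T) * Q) + (P * D) * Q := by rw [hPD, zero_mul, add_zero]
      _ = P * ((star T * T + D) * Q) := by noncomm_ring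
      _ = P * ((T * star T) * Q) := by rw [← hTsT]
      _ = (P * T) * (star T * Q) := by simp only [mul_assoc]
end
end

section
/- Let T be a bounded linear operator on a complex Hilbert space H. If T is injective, T² is normal, and Re(T^{2k+1}) ≥ 0 for some positive integer k, then T is normal. -/
open NormedSpace

section FugledeAux

variable {A : Type*} [NormedRing A] [StarRing A] [CStarRing A] [CompleteSpace A]
  [NormedAlgebra ℂ A] [StarModule ℂ A]

lemma exp_skew_mem_unitary (V : A) (hV : star V = -V) : exp V ∈ unitary A := by
  let _ : NormedAlgebra ℚ A := .restrictScalars ℚ ℂ A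
  have h1 : star (exp V) = exp (-V) := by rw [star_exp, hV]
  have h2 : exp (-V) * exp V = 1 := by
    rw [← exp_add_of_commute ((Commute.refl V).neg_left), neg_add_cancel, exp_zero]
  have h3 : exp V * exp (-V) = 1 := by
    rw [← exp_add_of_commute ((Commute.refl V).neg_right), add_neg_cancel, exp_zero]
  exact Unitary.mem_iff.mpr ⟨by rw [h1, h2], by rw [h1, h3]⟩

/-- Special case of the Fuglede theorem, proved via Rosenblum's argument. -/
lemma fuglede_aux {N T : A} (hN : Commute (star N) N) (hT : Commute T N) :
    Commute T (star N) := by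
  let _ : NormedAlgebra ℚ A := .restrictScalars ℚ ℂ A
  set M := star N with hM
  have hMN : Commute M N := hN
  have hTexpN : ∀ w : ℂ, T * exp (w • N) = exp (w • N) * T := fun w =>
    (hT.smul_right w).exp_right.eq
  have exp_inv : ∀ x : A, exp (-x) * exp x = 1 := fun x => by
    rw [← exp_add_of_commute ((Commute.refl x).neg_left), neg_add_cancel, exp_zero]
  set V : ℂ → A := fun z => z • M - (starRingEnd ℂ z) • N with hV
  have hVskew : ∀ z : ℂ, star (V z) = -(V z) := by
    intro z
    simp only [hV, star_sub, star_smul, hM, star_star, RCLike.star_def, starRingEnd_self_apply]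
    abel
  set f : ℂ → A := fun z => exp (z • M) * T * exp (-(z • M)) with hf
  have hfV : ∀ z : ℂ, f z = exp (V z) * (T * exp (-(V z))) := by
    intro z
    set c := starRingEnd ℂ z with hc
    have hcomm : Commute (z • M) (c • N) := (hMN.smul_left z).smul_right c
    have e1 : exp (V z) = exp (z • M) * exp (-(c • N)) := by
      rw [hV]
      show exp (z • M - c • N) = _
      rw [sub_eq_add_neg, exp_add_of_commute hcomm.neg_right]
    have e2 : exp (-(V z)) = exp (c • N) * exp (-(z • M)) := by
      have hVz : -(V z) = c • N + -(z • M) := by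
        show -(z • M - c • N) = _
        abel
      rw [hVz, exp_add_of_commute hcomm.symm.neg_right]
    have e3 : T * exp (-(c • N)) = exp (-(c • N)) * T := by
      have := hTexpN (-c)
      rwa [neg_smul] at this
    have main : exp (V z) * (T * exp (-(V z)))
        = exp (z • M) * T * exp (-(z • M)) := by
      calc exp (V z) * (T * exp (-(V z)))
          = exp (z • M) * exp (-(c • N)) *
            (T * (exp (c • N) * exp (-(z • M)))) := by rw [e1, e2]
        _ = exp (z • M) * (exp (-(c • N)) * T * (exp (c • N) * exp (-(z • M)))) := by
            simp only [mul_assoc]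
        _ = exp (z • M) * (T * exp (-(c • N)) * (exp (c • N) * exp (-(z • M)))) := by
            rw [← e3]
        _ = exp (z • M) * (T * (exp (-(c • N)) * exp (c • N) * exp (-(z • M)))) := by
            simp only [mul_assoc]
        _ = exp (z • M) * (T * exp (-(z • M))) := by rw [exp_inv (c • N), one_mul]
        _ = exp (z • M) * T * exp (-(z • M)) := by rw [mul_assoc]
    exact main.symm
  have hbound : ∀ z : ℂ, ‖f z‖ ≤ ‖T‖ := by
    intro z
    rw [hfV z]
    have hU : exp (V z) ∈ unitary A := exp_skew_mem_unitary _ (hVskew z)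
    have hU' : exp (-(V z)) ∈ unitary A := by
      refine exp_skew_mem_unitary _ ?_
      rw [star_neg, hVskew z, neg_neg]
    rw [CStarRing.norm_mem_unitary_mul _ hU, CStarRing.norm_mul_mem_unitary _ hU']
  have hdiff : Differentiable ℂ f := by
    have d1 : Differentiable ℂ fun z : ℂ => exp (z • M) := fun z =>
      (hasDerivAt_exp_smul_const M z).differentiableAt
    have d2 : Differentiable ℂ fun z : ℂ => exp (-(z • M)) := by
      have hrw : (fun z : ℂ => exp (-(z • M))) = fun z : ℂ => exp (z • (-M)) := by
        funext z; rw [smul_neg]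
      rw [hrw]
      exact fun z => (hasDerivAt_exp_smul_const (-M) z).differentiableAt
    exact (d1.mul (differentiable_const T)).mul d2
  have hbdd : Bornology.IsBounded (Set.range f) := by
    rw [Metric.isBounded_iff_subset_closedBall 0]
    refine ⟨‖T‖, ?_⟩
    rintro _ ⟨z, rfl⟩
    simpa [mem_closedBall_zero_iff] using hbound z
  have hconst : ∀ z : ℂ, f z = T := by
    intro z
    have h0 := hdiff.apply_eq_apply_of_bounded hbdd z 0
    have hf0 : f 0 = T := by
      show exp ((0 : ℂ) • M) * T * exp (-((0 : ℂ) • M)) = T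
      rw [zero_smul, neg_zero, exp_zero, one_mul, mul_one]
    rw [hf0] at h0
    exact h0
  have key : ∀ z : ℂ, exp (z • M) * T = T * exp (z • M) := by
    intro z
    have h0 := hconst z
    have h1 := congrArg (· * exp (z • M)) h0
    calc exp (z • M) * T
        = exp (z • M) * T * (exp (-(z • M)) * exp (z • M)) := by
          rw [exp_inv (z • M), mul_one]
      _ = exp (z • M) * T * exp (-(z • M)) * exp (z • M) := by
          simp only [mul_assoc]
      _ = T * exp (z • M) := h1
  have hd : HasDerivAt (fun z : ℂ => exp (z • M)) M 0 := by
    have := hasDerivAt_exp_smul_const M (0 : ℂ)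
    simpa using this
  have h₁ : HasDerivAt (fun z : ℂ => exp (z • M) * T) (M * T) 0 := hd.mul_const T
  have h₂ : HasDerivAt (fun z : ℂ => T * exp (z • M)) (T * M) 0 := hd.const_mul T
  have h₁' : HasDerivAt (fun z : ℂ => exp (z • M) * T) (T * M) 0 := by
    have hrw : (fun z : ℂ => exp (z • M) * T) = fun z : ℂ => T * exp (z • M) :=
      funext key
    rw [hrw]; exact h₂
  exact (h₁.unique h₁').symm

end FugledeAux

/-- If `T` is injective, `T²` is normal and `Re(T^{2k+1}) ≥ 0` for some positive
integer `k`, then `T` is normal. -/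
theorem normal_of_injective_of_sq_normal_of_odd_power_accretive
    {H : Type*} [NormedAddCommGroup H] [InnerProductSpace ℂ H] [CompleteSpace H]
    (T : H →L[ℂ] H)
    (hinj : Function.Injective T)
    (h2 : IsStarNormal (T ^ 2))
    (hk : ∃ k : ℕ, 0 < k ∧ ∀ x : H, 0 ≤ (inner ℂ ((T ^ (2 * k + 1)) x) x : ℂ).re) :
    IsStarNormal T := by
  obtain ⟨k, -, hkpos⟩ := hk
  -- Fuglede: T commutes with (star T) ^ 2
  have hF : Commute T ((star T) ^ 2) := by
    have := fuglede_aux (h2.star_comm_self) ((Commute.refl T).pow_right 2)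
    rwa [star_pow] at this
  have hF' : Commute (star T) (T ^ 2) := by
    have := hF.star_star
    rwa [star_pow, star_star] at this
  set N : H →L[ℂ] H := T ^ 2 with hNdef
  set M : H →L[ℂ] H := (star T) ^ 2 with hMdef
  set Aop : H →L[ℂ] H := star T * T with hAdef
  set Bop : H →L[ℂ] H := T * star T with hBdef
  set Q : H →L[ℂ] H := Aop - Bop with hQdef
  have hsqT : N = T * T := sq T
  have hsqsT : M = star T * star T := sq (star T)
  -- basic (anti)commutation relations
  have hTQ : T * Q = -(Q * T) := by
    have e1 : T * Aop = Bop * T := by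
      rw [hAdef, hBdef, ← mul_assoc]
    have e2 : T * Bop = Aop * T := by
      have : T * (T * star T) = star T * T * T := by
        calc T * (T * star T) = T * T * star T := by rw [mul_assoc]
          _ = star T * (T * T) := by rw [← hsqT, hF'.eq, hsqT]
          _ = star T * T * T := by rw [mul_assoc]
      rw [hAdef, hBdef, this]
    rw [hQdef, mul_sub, sub_mul, e1, e2]
    abel
  have hQT : Q * T = -(T * Q) := by rw [hTQ, neg_neg]
  have hQsa : star Q = Q := by
    rw [hQdef, star_sub, hAdef, hBdef, star_mul, star_star, star_mul, star_star]
  have hQsT : Q * star T = -(star T * Q) := by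
    have h := congrArg star hTQ
    rw [star_mul, hQsa, star_neg, star_mul, hQsa] at h
    exact h
  have hsTQ : star T * Q = -(Q * star T) := by rw [hQsT, neg_neg]
  have hQN : Commute Q N := by
    have : Q * (T * T) = T * T * Q := by
      rw [← mul_assoc, hQT, neg_mul, mul_assoc, hQT, mul_neg, neg_neg, ← mul_assoc]
    rw [hsqT]; exact this
  have hQM : Commute Q M := by
    have : Q * (star T * star T) = star T * star T * Q := by
      rw [← mul_assoc, hQsT, neg_mul, mul_assoc, hQsT, mul_neg, neg_neg, ← mul_assoc]
    rw [hsqsT]; exact this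
  have hQB : Commute Q Bop := by
    have : Q * (T * star T) = T * star T * Q := by
      rw [← mul_assoc, hQT, neg_mul, mul_assoc, hQsT, mul_neg, neg_neg, ← mul_assoc]
    rw [hBdef]; exact this
  have hBN : Commute Bop N := by
    have : T * star T * (T * T) = T * T * (T * star T) := by
      calc T * star T * (T * T) = T * (star T * (T * T)) := by rw [mul_assoc]
        _ = T * ((T * T) * star T) := by rw [← hsqT, hF'.eq, hsqT]
        _ = T * T * (T * star T) := by rw [← mul_assoc, ← mul_assoc, mul_assoc (T * T)]
    rw [hBdef, hsqT]; exact this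
  -- the odd power S and its "real part" R
  set S : H →L[ℂ] H := T ^ (2 * k + 1) with hSdef
  have hSNT : S = N ^ k * T := by
    rw [hSdef, hNdef, ← pow_mul, pow_succ]
  have hsS : star S = M ^ k * star T := by
    rw [hSdef, star_pow, hMdef, ← pow_mul, pow_succ]
  have hSQ : S * Q = -(Q * S) := by
    calc S * Q = N ^ k * (T * Q) := by rw [hSNT, mul_assoc]
      _ = -(N ^ k * Q * T) := by rw [hTQ, mul_neg, mul_assoc]
      _ = -(Q * N ^ k * T) := by rw [(hQN.pow_right k).eq]
      _ = -(Q * S) := by rw [hSNT, mul_assoc]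
  set R : H →L[ℂ] H := S + star S with hRdef
  have hRsa : IsSelfAdjoint R := by
    rw [hRdef, IsSelfAdjoint, star_add, star_star, add_comm]
  have hQsS : Q * star S = -(star S * Q) := by
    have h := congrArg star hSQ
    rw [star_mul, hQsa, star_neg, star_mul, hQsa] at h
    exact h
  have hsSQ : star S * Q = -(Q * star S) := by rw [hQsS, neg_neg]
  have hRQ : R * Q = -(Q * R) := by
    rw [hRdef, add_mul, mul_add, hSQ, hsSQ]
    abel
  -- positivity of R
  have hRpos : R.IsPositive := by
    refine ContinuousLinearMap.isPositive_def'.mpr ⟨hRsa, fun x => ?_⟩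
    rw [ContinuousLinearMap.reApplyInnerSelf_apply]
    have hRx : R x = S x + (star S) x := by
      rw [hRdef]; simp
    rw [hRx, inner_add_left, map_add]
    have h1 : 0 ≤ RCLike.re (inner ℂ (S x) x : ℂ) := by
      simpa [hSdef, RCLike.re_to_complex] using hkpos x
    have h2' : 0 ≤ RCLike.re (inner ℂ ((star S) x) x : ℂ) := by
      rw [ContinuousLinearMap.star_eq_adjoint, ContinuousLinearMap.adjoint_inner_left,
        inner_re_symm]
      simpa [hSdef, RCLike.re_to_complex] using hkpos x
    exact add_nonneg h1 h2'
  -- X = Q R Q is positive, and -X = R Q²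
  set X : H →L[ℂ] H := Q * R * Q with hXdef
  have hadjQ : ContinuousLinearMap.adjoint Q = Q := by
    rw [← ContinuousLinearMap.star_eq_adjoint, hQsa]
  have hXpos : X.IsPositive := by
    have h := hRpos.conj_adjoint Q
    rw [hadjQ] at h
    rw [hXdef, mul_assoc]
    exact h
  have hX0 : (0 : H →L[ℂ] H) ≤ X := (ContinuousLinearMap.nonneg_iff_isPositive X).mpr hXpos
  have hRQ2 : R * (Q * Q) = -X := by
    rw [← mul_assoc, hRQ, hXdef, neg_mul]
  have hXneg : (0 : H →L[ℂ] H) ≤ -X := by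
    have hsaX : IsSelfAdjoint X := hXpos.isSelfAdjoint
    rw [StarOrderedRing.nonneg_iff_spectrum_nonneg (R := ℝ) (-X) hsaX.neg]
    intro x hx
    rcases eq_or_ne x 0 with rfl | hxne
    · exact le_refl 0
    · have hx' : x ∈ spectrum ℝ ((R * Q) * Q) \ {0} := by
        refine ⟨?_, hxne⟩
        rw [← hRQ2] at hx
        rwa [← mul_assoc] at hx
      rw [spectrum.nonzero_mul_comm] at hx'
      have hx'' : x ∈ spectrum ℝ X := by
        have hrw : Q * (R * Q) = X := by rw [hXdef, mul_assoc]
        rw [hrw] at hx'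
        exact hx'.1
      exact spectrum_nonneg_of_nonneg hX0 hx''
  have hXzero : X = 0 := le_antisymm (neg_nonneg.mp hXneg) hX0
  have hRQ2zero : R * (Q * Q) = 0 := by rw [hRQ2, hXzero, neg_zero]
  -- hence S Q² = - (star S Q²)
  have hSQ2 : S * (Q * Q) = -(star S * (Q * Q)) := by
    refine eq_neg_of_add_eq_zero_left ?_
    rw [← add_mul, ← hRdef]; exact hRQ2zero
  -- auxiliary commutation
  have hTN : Commute T N := by rw [hNdef]; exact (Commute.refl T).pow_right 2
  have hTM' : Commute (star T) M := by rw [hMdef]; exact (Commute.refl (star T)).pow_right 2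
  have hstarN : star N = M := by rw [hNdef, hMdef, star_pow]
  have hstarM : star M = N := by rw [hNdef, hMdef, star_pow, star_star]
  have hBsa : star Bop = Bop := by rw [hBdef, star_mul, star_star]
  have hq2sa : star (Q * Q) = Q * Q := by rw [star_mul, hQsa]
  -- key products
  have hsTS : star T * S = N ^ k * Aop := by
    rw [hSNT, ← mul_assoc, (hF'.pow_right k).eq, mul_assoc, ← hAdef]
  have hsTsS : star T * star S = M ^ (k + 1) := by
    rw [hsS, ← mul_assoc, (hTM'.pow_right k).eq, mul_assoc, ← hsqsT, ← pow_succ]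
  have hTS' : T * S = N ^ (k + 1) := by
    rw [hSNT, ← mul_assoc, (hTN.pow_right k).eq, mul_assoc, ← hsqT, ← pow_succ]
  have hTsS : T * star S = M ^ k * Bop := by
    rw [hsS, ← mul_assoc, (hF.pow_right k).eq, mul_assoc, ← hBdef]
  -- identity (I)
  have hI : N ^ k * (Aop * (Q * Q)) = -(M ^ (k + 1) * (Q * Q)) := by
    calc N ^ k * (Aop * (Q * Q)) = (N ^ k * Aop) * (Q * Q) :=
        (mul_assoc (N ^ k) Aop (Q * Q)).symm
      _ = (star T * S) * (Q * Q) := by rw [hsTS]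
      _ = star T * (S * (Q * Q)) := mul_assoc _ _ _
      _ = star T * -(star S * (Q * Q)) := by rw [hSQ2]
      _ = -(star T * (star S * (Q * Q))) := mul_neg _ _
      _ = -((star T * star S) * (Q * Q)) := by
          rw [mul_assoc (star T) (star S) (Q * Q)]
      _ = -(M ^ (k + 1) * (Q * Q)) := by rw [hsTsS]
  -- identity (II)
  have hII : N ^ (k + 1) * (Q * Q) = -(M ^ k * (Bop * (Q * Q))) := by
    calc N ^ (k + 1) * (Q * Q) = (T * S) * (Q * Q) := by rw [hTS']
      _ = T * (S * (Q * Q)) := mul_assoc _ _ _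
      _ = T * -(star S * (Q * Q)) := by rw [hSQ2]
      _ = -(T * (star S * (Q * Q))) := mul_neg _ _
      _ = -((T * star S) * (Q * Q)) := by rw [mul_assoc T (star S) (Q * Q)]
      _ = -((M ^ k * Bop) * (Q * Q)) := by rw [hTsS]
      _ = -(M ^ k * (Bop * (Q * Q))) := by rw [mul_assoc (M ^ k) Bop (Q * Q)]
  -- identity (III) : star of (II)
  have hIII : M ^ (k + 1) * (Q * Q) = -(N ^ k * (Bop * (Q * Q))) := by
    have h := congrArg star hII
    rw [star_mul, hq2sa, star_pow, hstarN, star_neg, star_mul, star_pow, hstarM,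
      star_mul, hq2sa, hBsa] at h
    -- h : (Q * Q) * M ^ (k + 1) = -(((Q * Q) * Bop) * N ^ k)
    have c1 : Commute (Q * Q) (M ^ (k + 1)) :=
      ((hQM.pow_right (k + 1)).mul_left (hQM.pow_right (k + 1)))
    have c2 : Commute (Q * Q) Bop := hQB.mul_left hQB
    have c3 : Commute (Bop * (Q * Q)) (N ^ k) :=
      (hBN.pow_right k).mul_left ((hQN.pow_right k).mul_left (hQN.pow_right k))
    calc M ^ (k + 1) * (Q * Q) = (Q * Q) * M ^ (k + 1) := c1.eq.symm
      _ = -(((Q * Q) * Bop) * N ^ k) := h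
      _ = -((Bop * (Q * Q)) * N ^ k) := by rw [c2.eq]
      _ = -(N ^ k * (Bop * (Q * Q))) := by rw [c3.eq]
  -- combine: N ^ k * Q³ = 0
  have hfin : N ^ k * (Aop * (Q * Q)) = N ^ k * (Bop * (Q * Q)) := by
    rw [hI, hIII, neg_neg]
  have hNQ3 : N ^ k * (Q * (Q * Q)) = 0 := by
    have h := sub_eq_zero.mpr hfin
    rw [← mul_sub, ← sub_mul, ← hQdef] at h
    exact h
  -- injectivity of powers of T
  have hinjpow : ∀ n : ℕ, Function.Injective ⇑(T ^ n) := by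
    intro n
    induction n with
    | zero =>
      intro x y hxy
      simpa using hxy
    | succ n ih =>
      intro x y hxy
      rw [pow_succ'] at hxy
      rw [ContinuousLinearMap.mul_apply, ContinuousLinearMap.mul_apply] at hxy
      exact ih (hinj hxy)
  have hQ3x : ∀ x : H, (Q * (Q * Q)) x = 0 := by
    intro x
    have hNk : N ^ k = T ^ (2 * k) := by rw [hNdef, ← pow_mul]
    have h0 : (T ^ (2 * k)) ((Q * (Q * Q)) x) = (T ^ (2 * k)) 0 := by
      rw [map_zero]
      calc (T ^ (2 * k)) ((Q * (Q * Q)) x) = (T ^ (2 * k) * (Q * (Q * Q))) x := rfl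
        _ = (N ^ k * (Q * (Q * Q))) x := by rw [hNk]
        _ = (0 : H →L[ℂ] H) x := by rw [hNQ3]
        _ = 0 := rfl
    exact hinjpow (2 * k) h0
  have hQ2 : ∀ x : H, (Q * Q) x = 0 := by
    intro x
    have h : (inner ℂ ((Q * Q) x) ((Q * Q) x) : ℂ) = 0 := by
      calc (inner ℂ ((Q * Q) x) ((Q * Q) x) : ℂ)
          = inner ℂ ((ContinuousLinearMap.adjoint Q) (Q x)) ((Q * Q) x) := by rw [hadjQ]; rfl
        _ = inner ℂ (Q x) (Q ((Q * Q) x)) := ContinuousLinearMap.adjoint_inner_left Q _ _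
        _ = inner ℂ (Q x) ((Q * (Q * Q)) x) := rfl
        _ = 0 := by rw [hQ3x x, inner_zero_right]
    exact inner_self_eq_zero.mp h
  have hQ0 : Q = 0 := by
    ext x
    have h : (inner ℂ (Q x) (Q x) : ℂ) = 0 := by
      calc (inner ℂ (Q x) (Q x) : ℂ)
          = inner ℂ ((ContinuousLinearMap.adjoint Q) x) (Q x) := by rw [hadjQ]
        _ = inner ℂ x (Q (Q x)) := ContinuousLinearMap.adjoint_inner_left Q _ _
        _ = inner ℂ x ((Q * Q) x) := rfl
        _ = 0 := by rw [hQ2 x, inner_zero_right]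
    simpa using inner_self_eq_zero.mp h
  constructor
  have h : Aop - Bop = 0 := by rw [← hQdef]; exact hQ0
  have h' : Aop = Bop := sub_eq_zero.mp h
  rw [hAdef, hBdef] at h'
  exact h'
end

section
/- Let T be a bounded linear operator on a complex Hilbert space H. If T² is normal and there exist a positive integer k and a real number θ such that Re(e^{iθ}⟨T^{2k+1}x, x⟩) ≥ 0 for all x ∈ H (i.e., the numerical range of T^{2k+1} lies on one side of a line through the origin), then Tⁿ is normal for every integer n ≥ 2. -/
open NormedSpace

theorem my_fuglede {A : Type*} [CStarAlgebra A] {N M : A}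
    (hN : IsStarNormal N) (hc : Commute M N) : Commute M (star N) := by
  have hNN : Commute N (star N) := hN.star_comm_self.symm
  let +nondep : NormedAlgebra ℚ A := .restrictScalars ℚ ℂ A
  set F : ℂ → A := fun z => exp (z • star N) * M * exp (-(z • star N)) with hF
  have hdiff : Differentiable ℂ F := by
    have d1 : Differentiable ℂ fun z : ℂ => exp (z • star N) := fun t =>
      (hasDerivAt_exp_smul_const (𝕂 := ℂ) (star N) t).differentiableAt
    have d2 : Differentiable ℂ fun z : ℂ => exp (-(z • star N)) := by
      have h := fun t => (hasDerivAt_exp_smul_const (𝕂 := ℂ) (-(star N)) t).differentiableAt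
      have : (fun z : ℂ => exp (-(z • star N))) = fun z : ℂ => exp (z • (-(star N))) := by
        ext z; rw [smul_neg]
      rw [this]; exact fun t => h t
    exact (d1.mul (differentiable_const M)).mul d2
  have hbound : ∀ z : ℂ, ‖F z‖ ≤ ‖M‖ := by
    intro z
    have hMexp : ∀ w : ℂ, M * exp (w • N) = exp (w • N) * M := fun w =>
      ((hc.smul_right w).exp_right)
    set zc := (starRingEnd ℂ) z with hzc
    have hskew : z • star N - zc • N ∈ skewAdjoint A := by
      rw [skewAdjoint.mem_iff]
      simp [star_sub, star_smul, hzc, Complex.conj_conj, neg_sub]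
    have hcomm : Commute (z • star N) (zc • N) := (hNN.symm.smul_left z).smul_right zc
    have key : F z = exp (z • star N - zc • N) * M * exp (zc • N - z • star N) := by
      have e1 : exp (z • star N - zc • N) = exp (z • star N) * exp (-(zc • N)) := by
        rw [sub_eq_add_neg, exp_add_of_commute (hcomm.neg_right)]
      have e2 : exp (zc • N - z • star N) = exp (zc • N) * exp (-(z • star N)) := by
        rw [sub_eq_add_neg, exp_add_of_commute ((hcomm.symm).neg_right)]
      have e4 : M * exp (-(zc • N)) = exp (-(zc • N)) * M := by
        have := hMexp (-zc); rwa [neg_smul] at this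
      have e3 : exp (-(zc • N)) * M * exp (zc • N) = M := by
        rw [← e4, mul_assoc, ← exp_add_of_commute ((Commute.refl (zc • N)).neg_left),
          neg_add_cancel, exp_zero, mul_one]
      calc F z = exp (z • star N) * (exp (-(zc • N)) * M * exp (zc • N)) *
            exp (-(z • star N)) := by rw [e3]
        _ = (exp (z • star N) * exp (-(zc • N))) * M *
            (exp (zc • N) * exp (-(z • star N))) := by simp only [mul_assoc]
        _ = _ := by rw [← e1, ← e2]
    have hu : exp (z • star N - zc • N) ∈ unitary A :=
      exp_mem_unitary_of_mem_skewAdjoint hskew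
    have hu2 : exp (zc • N - z • star N) ∈ unitary A := by
      rw [← neg_sub (z • star N) (zc • N)]
      exact exp_mem_unitary_of_mem_skewAdjoint (neg_mem hskew)
    rw [key, CStarRing.norm_mul_coe_unitary _ ⟨_, hu2⟩, CStarRing.norm_mem_unitary_mul M hu]
  have hconst : ∀ z : ℂ, F z = F 0 := by
    intro z
    refine hdiff.apply_eq_apply_of_bounded ?_ z 0
    rw [isBounded_iff_forall_norm_le]
    exact ⟨‖M‖, by rintro _ ⟨z, rfl⟩; exact hbound z⟩
  have hF0 : F 0 = M := by simp [hF]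
  have hcomm2 : ∀ z : ℂ, exp (z • star N) * M = M * exp (z • star N) := by
    intro z
    have h := (hconst z).trans hF0
    simp only [hF] at h
    have h2 := congrArg (· * exp (z • star N)) h
    simpa only [mul_assoc, ← exp_add_of_commute ((Commute.refl (z • star N)).neg_left),
      neg_add_cancel, exp_zero, mul_one] using h2
  have h1 : HasDerivAt (fun z : ℂ => exp (z • star N) * M)
      (exp ((0:ℂ) • star N) * star N * M) 0 :=
    (hasDerivAt_exp_smul_const (𝕂 := ℂ) (star N) 0).mul_const M
  have h2 : HasDerivAt (fun z : ℂ => M * exp (z • star N))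
      (M * (exp ((0:ℂ) • star N) * star N)) 0 :=
    (hasDerivAt_exp_smul_const (𝕂 := ℂ) (star N) 0).const_mul M
  have hfun : (fun z : ℂ => exp (z • star N) * M) = fun z : ℂ => M * exp (z • star N) :=
    funext hcomm2
  rw [hfun] at h1
  have := h1.unique h2
  simp only [zero_smul, exp_zero, one_mul] at this
  exact this.symm


open Polynomial in
theorem my_commute_cfc {A : Type*} [CStarAlgebra A] {a b : A} (ha : IsSelfAdjoint a)
    (hab : Commute b a) (f : ℝ → ℝ) : Commute b (cfc f a) := by
  by_cases hf : ContinuousOn f (spectrum ℝ a)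
  · rw [cfc_apply f a ha hf]
    set φ := cfcHom (R := ℝ) ha with hφ
    suffices h : ∀ g : C(spectrum ℝ a, ℝ), Commute b (φ g) from h _
    -- the subalgebra of functions commuting with b after cfcHom
    let K : Subalgebra ℝ C(spectrum ℝ a, ℝ) :=
    { carrier := {g | Commute b (φ g)}
      mul_mem' := fun {g h} hg hh => by
        show Commute b (φ (g * h)); rw [map_mul]; exact hg.mul_right hh
      add_mem' := fun {g h} hg hh => by
        show Commute b (φ (g + h)); rw [map_add]; exact hg.add_right hh
      algebraMap_mem' := fun r => by
        show Commute b (φ (algebraMap ℝ _ r)); rw [AlgHomClass.commutes]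
        exact (Algebra.commutes r b).symm }
    have hXmem : (toContinuousMapOnAlgHom (spectrum ℝ a) X : C(spectrum ℝ a, ℝ)) ∈ K := by
      have hX : (toContinuousMapOnAlgHom (spectrum ℝ a) X : C(spectrum ℝ a, ℝ)) =
          ContinuousMap.restrict (spectrum ℝ a) (ContinuousMap.id ℝ) := by
        ext x; simp [Polynomial.toContinuousMapOn, Polynomial.toContinuousMap]
      show Commute b (φ _)
      rw [hX, hφ, cfcHom_id ha]
      exact hab
    have hle : polynomialFunctions (spectrum ℝ a) ≤ K := by
      rw [polynomialFunctions.eq_adjoin_X]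
      exact Algebra.adjoin_le (by rintro g ⟨rfl⟩; exact hXmem)
    have hclosed : IsClosed (K : Set C(spectrum ℝ a, ℝ)) := by
      have : (K : Set C(spectrum ℝ a, ℝ)) = φ ⁻¹' {x : A | b * x = x * b} := rfl
      rw [this]
      exact IsClosed.preimage (cfcHom_isClosedEmbedding (R := ℝ) ha).continuous
        (isClosed_eq (continuous_const.mul continuous_id) (continuous_id.mul continuous_const))
    intro g
    have : g ∈ (polynomialFunctions (spectrum ℝ a)).topologicalClosure := by
      rw [polynomialFunctions.topologicalClosure]; trivial
    exact Subalgebra.topologicalClosure_minimal hle hclosed this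
  · rw [cfc_apply_of_not_continuousOn a hf]
    exact Commute.zero_right b

theorem my_commute_of_commute_sq {A : Type*} [CStarAlgebra A] [PartialOrder A]
    [StarOrderedRing A] {a b : A} (ha : 0 ≤ a) (h : Commute b (a * a)) : Commute b a := by
  have ha' : IsSelfAdjoint a := .of_nonneg ha
  have hsq : IsSelfAdjoint (a * a) := by
    rw [IsSelfAdjoint, star_mul, ha'.star_eq]
  have h0 : 0 ≤ a * a := by
    have := star_mul_self_nonneg a
    rwa [ha'.star_eq] at this
  have hspec : ∀ x ∈ spectrum ℝ (a * a), 0 ≤ x :=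
    (StarOrderedRing.nonneg_iff_spectrum_nonneg (R := ℝ) _ hsq).mp h0
  have hcfc : cfc Real.sqrt (a * a) = a := by
    have h1 : CFC.sqrt (a * a) = a := CFC.sqrt_mul_self a ha
    have h2 : CFC.sqrt (a * a) = cfc Real.sqrt (a * a) := by
      refine CFC.sqrt_unique ?_ ?_
      · rw [← cfc_mul Real.sqrt Real.sqrt (a * a)]
        have : cfc (fun x => Real.sqrt x * Real.sqrt x) (a * a) = cfc (fun x : ℝ => x) (a * a) :=
          cfc_congr fun x hx => Real.mul_self_sqrt (hspec x hx)
        rw [this, cfc_id' ℝ (a * a)]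
      · exact cfc_nonneg fun x _ => Real.sqrt_nonneg x
    rw [← h2]; exact h1
  have := my_commute_cfc hsq h Real.sqrt
  rwa [hcfc] at this



open ContinuousLinearMap in
theorem my_embry {H : Type*} [NormedAddCommGroup H] [InnerProductSpace ℂ H] [CompleteSpace H]
    (S : H →L[ℂ] H) (h2 : IsStarNormal (S ^ 2))
    (hpos : ∀ x, 0 ≤ (inner ℂ (S x) x : ℂ).re) : IsStarNormal S := by
  have c1 : Commute S (star S * star S) := by
    have := my_fuglede h2 ((Commute.refl S).pow_right 2)
    rwa [star_pow, sq] at this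
  have c2 : Commute (star S) (S * S) := by
    have := c1.star_star
    rwa [star_mul, star_star] at this
  -- positivity of S + star S
  have hann : 0 ≤ S + star S := by
    rw [ContinuousLinearMap.nonneg_iff_isPositive]
    constructor
    · rw [← ContinuousLinearMap.isSelfAdjoint_iff_isSymmetric]
      rw [IsSelfAdjoint, star_add, star_star, add_comm]
    · intro x
      have hst : (inner ℂ ((star S) x) x : ℂ) = (starRingEnd ℂ) (inner ℂ (S x) x : ℂ) := by
        rw [star_eq_adjoint, adjoint_inner_left, inner_conj_symm]
      have : reApplyInnerSelf (S + star S) x = (inner ℂ (S x) x : ℂ).re + (inner ℂ (S x) x : ℂ).re := by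
        rw [reApplyInnerSelf_apply]
        rw [add_apply, inner_add_left, hst]
        simp
        exact inner_re_symm (𝕜 := ℂ) x (S x)
      rw [this]
      have := hpos x
      positivity
  -- d commutes with (S + star S)^2
  have hmid : Commute (S - star S) (S * star S + star S * S) := by
    have hc1' : S * (star S * star S) = star S * (star S * S) := by
      rw [c1.eq, mul_assoc]
    have hc2' : star S * (S * S) = S * (S * star S) := by
      rw [c2.eq, mul_assoc]
    show (S - star S) * (S * star S + star S * S) = (S * star S + star S * S) * (S - star S)
    simp only [mul_add, add_mul, sub_mul, mul_sub, mul_assoc]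
    rw [hc1', hc2']
    abel
  have hda2 : Commute (S - star S) ((S + star S) * (S + star S)) := by
    have expand : (S + star S) * (S + star S) =
        S * S + (S * star S + star S * S) + star S * star S := by noncomm_ring
    rw [expand]
    exact (((Commute.refl S).mul_right (Commute.refl S)).sub_left
      c2).add_right hmid |>.add_right
      ((c1.sub_left ((Commute.refl (star S)).mul_right (Commute.refl (star S)))))
  have hda : Commute (S - star S) (S + star S) := my_commute_of_commute_sq hann hda2
  -- conclude
  have hid : (S * star S - star S * S) + (S * star S - star S * S) =
      (S - star S) * (S + star S) - (S + star S) * (S - star S) := by noncomm_ring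
  have h0 : (S * star S - star S * S) + (S * star S - star S * S) = 0 := by
    rw [hid, hda.eq, sub_self]
  have h1 : (2 : ℂ) • (S * star S - star S * S) = 0 := by
    rw [two_smul]; exact h0
  have h3 : S * star S - star S * S = 0 := by
    have := smul_eq_zero.mp h1
    simpa using this
  rw [sub_eq_zero] at h3
  exact ⟨h3.symm⟩



theorem my_isStarNormal_pow {M : Type*} [Monoid M] [StarMul M] {a : M}
    (h : IsStarNormal a) (n : ℕ) : IsStarNormal (a ^ n) :=
  ⟨by rw [star_pow]; exact h.star_comm_self.pow_pow n n⟩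

theorem my_isStarNormal_smul {H : Type*} [NormedAddCommGroup H] [InnerProductSpace ℂ H]
    [CompleteSpace H] {a : H →L[ℂ] H} (h : IsStarNormal a) (c : ℂ) :
    IsStarNormal (c • a) := by
  constructor
  show star (c • a) * (c • a) = (c • a) * star (c • a)
  rw [star_smul, smul_mul_smul_comm, smul_mul_smul_comm, h.star_comm_self.eq,
    mul_comm (star c) c]

theorem my_key_id {A : Type*} [Ring A] [StarRing A] (T : A)
    (hc2 : Commute (star T) (T * T)) (hc3 : Commute (star T * star T) (T * T)) (m : ℕ) :
    star (T ^ (2 * m + 1)) * T ^ (2 * m + 1) - T ^ (2 * m + 1) * star (T ^ (2 * m + 1)) =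
      (star T * star T * (T * T)) ^ m * (star T * T - T * star T) := by
  have hc1 : Commute T (star T * star T) := by
    have := hc2.star_star
    rwa [star_star, star_mul] at this
  have e0 : T ^ (2 * m + 1) = (T * T) ^ m * T := by
    rw [pow_succ, pow_mul, sq]
  have e1 : star (T ^ (2 * m + 1)) = (star T * star T) ^ m * star T := by
    rw [star_pow, pow_succ, pow_mul, sq]
  calc star (T ^ (2*m+1)) * T ^ (2*m+1) - T ^ (2*m+1) * star (T ^ (2*m+1))
      = ((star T*star T)^m * star T) * ((T*T)^m * T)
        - ((T*T)^m * T) * ((star T*star T)^m * star T) := by rw [e1, e0]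
    _ = (star T*star T)^m * (star T * (T*T)^m * T)
        - (T*T)^m * (T * (star T*star T)^m * star T) := by
        simp only [mul_assoc]
    _ = (star T*star T)^m * ((T*T)^m * star T * T)
        - (T*T)^m * ((star T*star T)^m * T * star T) := by
        rw [(hc2.pow_right m).eq, (hc1.pow_right m).eq]
    _ = ((star T*star T)^m * (T*T)^m) * (star T*T)
        - ((T*T)^m * (star T*star T)^m) * (T*star T) := by
        simp only [mul_assoc]
    _ = ((star T*star T)^m * (T*T)^m) * (star T*T)
        - ((star T*star T)^m * (T*T)^m) * (T*star T) := by
        rw [← (hc3.pow_pow m m).eq]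
    _ = ((star T*star T) * (T*T))^m * (star T*T)
        - ((star T*star T) * (T*T))^m * (T*star T) := by
        rw [hc3.mul_pow]
    _ = (star T*star T*(T*T))^m * (star T*T - T*star T) := by rw [mul_sub]

theorem my_pow_ker {H : Type*} [NormedAddCommGroup H] [InnerProductSpace ℂ H] [CompleteSpace H]
    (P : H →L[ℂ] H) (hP : IsSelfAdjoint P) :
    ∀ k : ℕ, 1 ≤ k → ∀ x : H, (P ^ k) x = 0 → P x = 0 := by
  have halve : ∀ (m : ℕ) (x : H), (P ^ (2 * m)) x = 0 → (P ^ m) x = 0 := by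
    intro m x hx
    have h1 : (inner ℂ ((P ^ m) x) ((P ^ m) x) : ℂ) = 0 := by
      have hadj : ContinuousLinearMap.adjoint (P ^ m) = P ^ m := by
        rw [← ContinuousLinearMap.star_eq_adjoint, (hP.pow m).star_eq]
      calc (inner ℂ ((P ^ m) x) ((P ^ m) x) : ℂ)
          = inner ℂ x ((ContinuousLinearMap.adjoint (P ^ m)) ((P ^ m) x)) := by
            rw [ContinuousLinearMap.adjoint_inner_right]
        _ = inner ℂ x ((P ^ (2 * m)) x) := by
            rw [hadj, two_mul, pow_add, ContinuousLinearMap.mul_apply]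
        _ = 0 := by rw [hx, inner_zero_right]
    exact inner_self_eq_zero.mp h1
  intro k
  induction k using Nat.strong_induction_on with
  | _ k ih =>
    intro hk x hx
    rcases Nat.lt_or_ge k 2 with h2 | h2
    · interval_cases k
      · simpa using hx
    · have hbig : (P ^ (2 * (k - 1))) x = 0 := by
        have he : 2 * (k - 1) = (2 * (k-1) - k) + k := by omega
        rw [he, pow_add, ContinuousLinearMap.mul_apply, hx, map_zero]
      exact ih (k - 1) (by omega) (by omega) x (halve (k - 1) x hbig)

/-- If `T²` is normal and the numerical range of `T^{2k+1}` lies on one side of a line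
through the origin for some positive integer `k` (i.e. `Re(e^{iθ}⟨T^{2k+1}x, x⟩) ≥ 0` for
all `x` for some real `θ`), then `Tⁿ` is normal for every `n ≥ 2`. -/
theorem powers_normal_of_sq_normal_of_odd_power_halfplane
    {H : Type*} [NormedAddCommGroup H] [InnerProductSpace ℂ H] [CompleteSpace H]
    (T : H →L[ℂ] H)
    (h2 : IsStarNormal (T ^ 2))
    (hk : ∃ k : ℕ, 0 < k ∧ ∃ θ : ℝ,
      ∀ x : H, 0 ≤ (Complex.exp (θ * Complex.I) * (inner ℂ ((T ^ (2 * k + 1)) x) x : ℂ)).re) :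
    ∀ n : ℕ, 2 ≤ n → IsStarNormal (T ^ n) := by
  obtain ⟨k, hk0, θ, hθ⟩ := hk
  have c2 : Commute (star T) (T * T) := by
    have h := my_fuglede h2 ((Commute.refl T).pow_right 2)
    have h' := h.star_star
    rwa [star_star, sq] at h'
  have c3 : Commute (star T * star T) (T * T) := by
    have := h2.star_comm_self
    simp only [star_pow, sq, star_mul] at this
    exact this
  set d : H →L[ℂ] H := star T * T - T * star T with hd
  set P : H →L[ℂ] H := star T * star T * (T * T) with hP
  have hPsa : IsSelfAdjoint P := by
    rw [hP]
    show star _ = _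
    simp [star_mul, mul_assoc]
  -- normality of T ^ (2k+1) via the half-plane hypothesis
  have hodd_k : IsStarNormal (T ^ (2 * k + 1)) := by
    set γ : ℂ := Complex.exp (θ * Complex.I) with hγ
    set X : H →L[ℂ] H := T ^ (2 * k + 1) with hX
    set S₀ : H →L[ℂ] H := (starRingEnd ℂ) γ • X with hS₀
    have hS₀2 : IsStarNormal (S₀ ^ 2) := by
      have hXsq : X ^ 2 = (T ^ 2) ^ (2 * k + 1) := by
        rw [hX, ← pow_mul, ← pow_mul, mul_comm]
      have : S₀ ^ 2 = ((starRingEnd ℂ) γ) ^ 2 • (T ^ 2) ^ (2 * k + 1) := by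
        rw [hS₀, smul_pow, hXsq]
      rw [this]
      exact my_isStarNormal_smul (my_isStarNormal_pow h2 (2 * k + 1)) _
    have hpos : ∀ x, 0 ≤ (inner ℂ (S₀ x) x : ℂ).re := by
      intro x
      have : (inner ℂ (S₀ x) x : ℂ) = γ * inner ℂ (X x) x := by
        rw [hS₀, ContinuousLinearMap.smul_apply, inner_smul_left, Complex.conj_conj]
      rw [this]
      exact hθ x
    have hS₀n := my_embry S₀ hS₀2 hpos
    have heq := hS₀n.star_comm_self.eq
    rw [hS₀, star_smul, smul_mul_smul_comm, smul_mul_smul_comm] at heq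
    simp only [Complex.star_def, Complex.conj_conj] at heq
    have hγne : γ * (starRingEnd ℂ) γ ≠ 0 :=
      mul_ne_zero (Complex.exp_ne_zero _) ((map_ne_zero _).mpr (Complex.exp_ne_zero _))
    rw [mul_comm ((starRingEnd ℂ) γ) γ] at heq
    exact ⟨smul_right_injective (H →L[ℂ] H) hγne heq⟩
  -- P ^ k * d = 0
  have hPkd : P ^ k * d = 0 := by
    have hid := my_key_id T c2 c3 k
    rw [← hP, ← hd] at hid
    rw [← hid, hodd_k.star_comm_self.eq, sub_self]
  have hPd : P * d = 0 := by
    ext x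
    have hx : (P ^ k) (d x) = 0 := by
      have := ContinuousLinearMap.ext_iff.mp hPkd x
      rwa [ContinuousLinearMap.mul_apply, ContinuousLinearMap.zero_apply] at this
    have := my_pow_ker P hPsa k hk0 (d x) hx
    simp [ContinuousLinearMap.mul_apply, this]
  intro n hn
  rcases Nat.even_or_odd n with he | ho
  · obtain ⟨m, rfl⟩ := he
    have h := my_isStarNormal_pow h2 m
    rwa [← pow_mul, show 2 * m = m + m by omega] at h
  · obtain ⟨m, rfl⟩ := ho
    have hm : 1 ≤ m := by omega
    have hPmd : P ^ m * d = 0 := by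
      have : P ^ m * d = P ^ (m - 1) * (P * d) := by
        rw [← mul_assoc, ← pow_succ, show m - 1 + 1 = m by omega]
      rw [this, hPd, mul_zero]
    have hid := my_key_id T c2 c3 m
    rw [← hP, ← hd, hPmd] at hid
    rw [sub_eq_zero] at hid
    exact ⟨hid⟩
end

section
/- Let T be a bounded linear operator on a complex Hilbert space H. Suppose (i) T² is normal; (ii) there exist a positive integer k and a real number θ such that Re(e^{iθ}⟨T^{2k+1}x, x⟩) ≥ 0 for all x ∈ H; and (iii) ker T = ker T² or ran T = ran T². Then T is normal. -/
open Polynomial in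
lemma NormalAux.commute_cfc_of_commute {A : Type*} [NormedRing A] [StarRing A] [CStarRing A]
    [CompleteSpace A] [NormedAlgebra ℝ A]
    [ContinuousFunctionalCalculus ℝ A (IsSelfAdjoint : A → Prop)]
    {a c : A} (h : Commute c a) (f : ℝ → ℝ) : Commute c (cfc f a) := by
  refine cfc_cases (fun x => Commute c x) a f (Commute.zero_right c) fun hf ha => ?_
  have key : ∀ g : C(spectrum ℝ a, ℝ), Commute c (cfcHom ha g) := by
    intro g
    have hdense : Dense ((polynomialFunctions (spectrum ℝ a) : Set C(spectrum ℝ a, ℝ))) := by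
      rw [dense_iff_closure_eq, ← Subalgebra.topologicalClosure_coe,
        polynomialFunctions.topologicalClosure]
      rfl
    have hclosed : IsClosed {g : C(spectrum ℝ a, ℝ) | Commute c (cfcHom ha g)} := by
      simp only [Commute, SemiconjBy]
      exact isClosed_eq ((continuous_mul_left c).comp (cfcHom_continuous ha))
        ((continuous_mul_right c).comp (cfcHom_continuous ha))
    have hsub : (polynomialFunctions (spectrum ℝ a) : Set C(spectrum ℝ a, ℝ)) ⊆
        {g : C(spectrum ℝ a, ℝ) | Commute c (cfcHom ha g)} := by
      intro g hg
      rw [polynomialFunctions.eq_adjoin_X] at hg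
      induction hg using Algebra.adjoin_induction with
      | mem x hx =>
        simp only [Set.mem_singleton_iff] at hx
        subst hx
        have hmap : (toContinuousMapOnAlgHom (spectrum ℝ a)) X
            = (ContinuousMap.id ℝ).restrict (spectrum ℝ a) := by
          ext x; simp
        have hXid : cfcHom ha ((toContinuousMapOnAlgHom (spectrum ℝ a)) X) = a := by
          rw [hmap, cfcHom_id ha]
        show Commute c _
        rw [hXid]
        exact h
      | algebraMap r =>
        show Commute c _
        rw [AlgHomClass.commutes]
        exact Algebra.commute_algebraMap_right r c
      | add x y _ _ hx hy =>
        show Commute c _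
        rw [map_add]
        exact (hx : Commute c _).add_right hy
      | mul x y _ _ hx hy =>
        show Commute c _
        rw [map_mul]
        exact (hx : Commute c _).mul_right hy
    have := hclosed.closure_subset_iff.mpr hsub
    rw [hdense.closure_eq] at this
    exact this (Set.mem_univ g)
  exact key _

/-- A square root of a nonnegative element in a C⋆-algebra which commutes with everything
commuting with the original element. -/
lemma NormalAux.exists_sqrt {A : Type*} [CStarAlgebra A] [PartialOrder A] [StarOrderedRing A]
    (a : A) (ha : 0 ≤ a) :
    ∃ s : A, IsSelfAdjoint s ∧ s * s = a ∧ ∀ c : A, Commute c a → Commute c s := by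
  refine ⟨cfc Real.sqrt a, cfc_predicate Real.sqrt a, ?_, fun c hc =>
    NormalAux.commute_cfc_of_commute hc Real.sqrt⟩
  rw [← cfc_mul Real.sqrt Real.sqrt a Real.continuous_sqrt.continuousOn
    Real.continuous_sqrt.continuousOn]
  have hspec : ∀ x ∈ spectrum ℝ a, 0 ≤ x := spectrum_nonneg_of_nonneg ha
  have : (spectrum ℝ a).EqOn (fun x => Real.sqrt x * Real.sqrt x) id := fun x hx => by
    simp [Real.mul_self_sqrt (hspec x hx)]
  rw [cfc_congr this, cfc_id ℝ a]

open NormedSpace in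
/-- Fuglede's theorem (self-commuting version): if `M` commutes with a normal element `N`
then it commutes with `star N`. -/
lemma NormalAux.fuglede {A : Type*} [NormedRing A] [StarRing A] [CStarRing A] [CompleteSpace A]
    [NormedAlgebra ℂ A] [StarModule ℂ A] {M N : A} (hN : IsStarNormal N)
    (h : Commute M N) : Commute M (star N) := by
  rcases subsingleton_or_nontrivial A with hA | hA
  · exact Subsingleton.elim _ _
  letI : NormedAlgebra ℚ A := NormedAlgebra.restrictScalars ℚ ℂ A
  set F : ℂ → A := fun z => exp (z • star N) * M * exp (-(z • star N)) with hF
  have hNN : Commute (star N) N := hN.star_comm_self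
  have hbound : ∀ z : ℂ, ‖F z‖ = ‖M‖ := by
    intro z
    have hab : Commute (z • star N) ((starRingEnd ℂ z) • N) := (hNN.smul_left _).smul_right _
    set w : A := z • star N - (starRingEnd ℂ z) • N with hw
    have hskew : w ∈ skewAdjoint A := by
      simp only [skewAdjoint.mem_iff, hw, star_sub, star_smul, star_star, RCLike.star_def,
        starRingEnd_self_apply, neg_sub]
    have hu : exp w ∈ unitary A := exp_mem_unitary_of_mem_skewAdjoint hskew
    have hMe : Commute M (exp ((starRingEnd ℂ z) • N)) := (h.smul_right _).exp_right
    have hsplit : exp (z • star N) = exp w * exp ((starRingEnd ℂ z) • N) := by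
      rw [← exp_add_of_commute (hab.sub_left (Commute.refl _))]
      congr 1
      abel
    have hcw : Commute (-((starRingEnd ℂ z) • N)) (-w) := by
      have : Commute ((starRingEnd ℂ z) • N) w := by
        rw [hw]
        exact hab.symm.sub_right (Commute.refl _)
      exact this.neg_left.neg_right
    have hsplit2 : exp (-(z • star N)) = exp (-((starRingEnd ℂ z) • N)) * exp (-w) := by
      rw [← exp_add_of_commute hcw]
      congr 1
      rw [hw]; abel
    have hcomm3 : exp ((starRingEnd ℂ z) • N) * M * exp (-((starRingEnd ℂ z) • N)) = M := by
      rw [← hMe.eq]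
      rw [mul_assoc, ← exp_add_of_commute (Commute.refl _).neg_right, add_neg_cancel, exp_zero,
        mul_one]
    have hFz : F z = exp w * M * exp (-w) := by
      rw [hF]
      simp only
      rw [hsplit, hsplit2]
      calc exp w * exp ((starRingEnd ℂ z) • N) * M *
            (exp (-((starRingEnd ℂ z) • N)) * exp (-w))
          = exp w * (exp ((starRingEnd ℂ z) • N) * M * exp (-((starRingEnd ℂ z) • N))) *
            exp (-w) := by simp only [mul_assoc]
        _ = exp w * M * exp (-w) := by rw [hcomm3]
    rw [hFz]
    have hstar : exp (-w) = star (exp w) := by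
      rw [star_exp, skewAdjoint.mem_iff.mp hskew]
    rw [hstar, mul_assoc]
    rw [CStarRing.norm_coe_unitary_mul ⟨exp w, hu⟩ (M * star (exp w))]
    exact CStarRing.norm_mul_coe_unitary M ⟨_, Unitary.star_mem hu⟩
  have hdiff : Differentiable ℂ F := by
    have h1 : Differentiable ℂ fun z : ℂ => exp (z • star N) :=
      fun z => (hasDerivAt_exp_smul_const (𝕂 := ℂ) (star N) z).differentiableAt
    have h2 : Differentiable ℂ fun z : ℂ => exp (-(z • star N)) := by
      have he : ∀ z : ℂ, -(z • star N) = z • (-(star N)) := fun z => by rw [smul_neg]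
      simp only [he]
      exact fun z => (hasDerivAt_exp_smul_const (𝕂 := ℂ) (-(star N)) z).differentiableAt
    exact (h1.mul (differentiable_const M)).mul h2
  have hconst : ∀ z : ℂ, F z = F 0 := by
    intro z
    refine hdiff.apply_eq_apply_of_bounded ?_ z 0
    rw [Metric.isBounded_iff_subset_closedBall 0]
    refine ⟨‖M‖, ?_⟩
    rintro - ⟨z, rfl⟩
    simp [Metric.mem_closedBall, hbound z]
  have hF0 : F 0 = M := by simp [hF]
  have hcomm : ∀ z : ℂ, exp (z • star N) * M = M * exp (z • star N) := by
    intro z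
    have h1 : F z = M := (hconst z).trans hF0
    have h2 : exp (-(z • star N)) * exp (z • star N) = 1 := by
      rw [← exp_add_of_commute (Commute.refl _).neg_left, neg_add_cancel, exp_zero]
    calc exp (z • star N) * M
        = exp (z • star N) * M * (exp (-(z • star N)) * exp (z • star N)) := by
          rw [h2, mul_one]
      _ = F z * exp (z • star N) := by rw [hF]; simp only [mul_assoc]
      _ = M * exp (z • star N) := by rw [h1]
  have hd1 : HasDerivAt (fun z : ℂ => exp (z • star N) * M) (star N * M) 0 := by
    have := (hasDerivAt_exp_smul_const (𝕂 := ℂ) (star N) 0).mul_const M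
    simpa using this
  have hd2 : HasDerivAt (fun z : ℂ => M * exp (z • star N)) (M * star N) 0 := by
    have := (hasDerivAt_exp_smul_const (𝕂 := ℂ) (star N) 0).const_mul M
    simpa using this
  have hkey : star N * M = M * star N := by
    have he : (fun z : ℂ => exp (z • star N) * M) = fun z : ℂ => M * exp (z • star N) :=
      funext hcomm
    exact (he ▸ hd1).unique hd2
  exact hkey.symm

/-- If `x` anti-commutes with `y` then `y` commutes with `x * x`. -/
lemma NormalAux.commute_sq_of_anticommute {A : Type*} [Ring A] {x y : A}
    (h : x * y = -(y * x)) : Commute y (x * x) := by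
  have h' : y * x = -(x * y) := by rw [h, neg_neg]
  calc y * (x * x) = (y * x) * x := by rw [mul_assoc]
    _ = -(x * y) * x := by rw [h']
    _ = -(x * (y * x)) := by rw [neg_mul, mul_assoc]
    _ = -(x * (-(x * y))) := by rw [h']
    _ = (x * x) * y := by rw [mul_neg, neg_neg, mul_assoc]

set_option maxHeartbeats 1000000 in
/-- If `T²` is normal, the numerical range of `T^{2k+1}` lies on one side of a line
through the origin for some positive integer `k`, and `ker T = ker T²` or
`ran T = ran T²`, then `T` is normal. -/
theorem normal_of_sq_normal_of_odd_power_halfplane_of_asc_or_dsc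
    {H : Type*} [NormedAddCommGroup H] [InnerProductSpace ℂ H] [CompleteSpace H]
    (T : H →L[ℂ] H)
    (h2 : IsStarNormal (T ^ 2))
    (hk : ∃ k : ℕ, 0 < k ∧ ∃ θ : ℝ,
      ∀ x : H, 0 ≤ (Complex.exp (θ * Complex.I) * (inner ℂ ((T ^ (2 * k + 1)) x) x : ℂ)).re)
    (had : LinearMap.ker (T : H →ₗ[ℂ] H) = LinearMap.ker ((T ^ 2 : H →L[ℂ] H) : H →ₗ[ℂ] H) ∨
      LinearMap.range (T : H →ₗ[ℂ] H) = LinearMap.range ((T ^ 2 : H →L[ℂ] H) : H →ₗ[ℂ] H)) :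
    IsStarNormal T := by
  obtain ⟨k, hkpos, θ, hθ⟩ := hk
  -- helper lemmas about inner products
  have hsym : ∀ V : H →L[ℂ] H, star V = V → ∀ x y : H,
      (inner ℂ (V x) y : ℂ) = inner ℂ x (V y) := fun V hV x y =>
    (ContinuousLinearMap.isSelfAdjoint_iff_isSymmetric.mp hV) x y
  have hstar_inner : ∀ (V : H →L[ℂ] H) (x y : H),
      (inner ℂ ((star V) x) y : ℂ) = inner ℂ x (V y) := fun V x y => by
    rw [ContinuousLinearMap.star_eq_adjoint, ContinuousLinearMap.adjoint_inner_left]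
  -- Fuglede: T commutes with (star T)²
  have hfug : Commute T (star (T ^ 2)) := NormalAux.fuglede h2 ((Commute.refl T).pow_right 2)
  have hab2 : Commute T (star T * star T) := by
    have hst : star (T ^ 2) = star T * star T := by rw [star_pow, pow_two]
    rwa [hst] at hfug
  have hba2 : Commute (star T) (T * T) := by
    have h' := hab2.star_star
    simpa [star_mul, star_star] using h'
  set D : H →L[ℂ] H := star T * T - T * star T with hD
  have hDsa : star D = D := by simp [hD, star_sub, star_mul, star_star]
  -- anticommutation relations
  have hTD : T * D = -(D * T) := by
    have h1 : T * D + D * T = star T * (T * T) - (T * T) * star T := by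
      rw [hD]; noncomm_ring
    rw [hba2.eq, sub_self] at h1
    exact eq_neg_of_add_eq_zero_left h1
  have hbD : star T * D = -(D * star T) := by
    have h1 : star T * D + D * star T = (star T * star T) * T - T * (star T * star T) := by
      rw [hD]; noncomm_ring
    rw [← hab2.eq, sub_self] at h1
    exact eq_neg_of_add_eq_zero_left h1
  have hDT : D * T = -(T * D) := by rw [hTD, neg_neg]
  have hDb : D * star T = -(star T * D) := by rw [hbD, neg_neg]
  have hDu : Commute D (T * T) := NormalAux.commute_sq_of_anticommute hTD
  have hDv : Commute D (star T * star T) := NormalAux.commute_sq_of_anticommute hbD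
  set S : H →L[ℂ] H := T ^ (2 * k + 1) with hS
  have hSfac : S = T * (T * T) ^ k := by
    rw [hS, pow_succ', pow_mul, pow_two]
  have hS'fac : star S = star T * (star T * star T) ^ k := by
    rw [hS, star_pow, pow_succ', pow_mul, pow_two]
  have hSD : S * D = -(D * S) := by
    rw [hSfac]
    calc T * (T * T) ^ k * D = T * ((T * T) ^ k * D) := by rw [mul_assoc]
      _ = T * (D * (T * T) ^ k) := by rw [(hDu.pow_right k).symm.eq]
      _ = (T * D) * (T * T) ^ k := by rw [mul_assoc]
      _ = (-(D * T)) * (T * T) ^ k := by rw [hTD]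
      _ = -(D * (T * (T * T) ^ k)) := by rw [neg_mul, mul_assoc]
  have hS'D : star S * D = -(D * star S) := by
    rw [hS'fac]
    calc star T * (star T * star T) ^ k * D = star T * ((star T * star T) ^ k * D) := by
          rw [mul_assoc]
      _ = star T * (D * (star T * star T) ^ k) := by rw [(hDv.pow_right k).symm.eq]
      _ = (star T * D) * (star T * star T) ^ k := by rw [mul_assoc]
      _ = (-(D * star T)) * (star T * star T) ^ k := by rw [hbD]
      _ = -(D * (star T * (star T * star T) ^ k)) := by rw [neg_mul, mul_assoc]
  set c : ℂ := Complex.exp (θ * Complex.I) with hc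
  have hcc : (starRingEnd ℂ) c * c = 1 := by
    have h1 : (starRingEnd ℂ) ((θ : ℂ) * Complex.I) = -((θ : ℂ) * Complex.I) := by
      rw [map_mul, Complex.conj_ofReal, Complex.conj_I, mul_neg]
    rw [hc, ← Complex.exp_conj, h1, ← Complex.exp_add, neg_add_cancel, Complex.exp_zero]
  set B : H →L[ℂ] H := (starRingEnd ℂ) c • S + c • star S with hB
  have hBsa : star B = B := by
    simp only [hB, star_add, star_smul, star_star, RCLike.star_def, starRingEnd_self_apply]
    exact add_comm _ _
  have hBpos : (0 : H →L[ℂ] H) ≤ B := by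
    rw [ContinuousLinearMap.nonneg_iff_isPositive, ContinuousLinearMap.isPositive_iff_complex]
    intro x
    have hBx : (inner ℂ (B x) x : ℂ) = ((2 * (c * (inner ℂ (S x) x : ℂ)).re : ℝ) : ℂ) := by
      rw [hB]
      simp only [ContinuousLinearMap.add_apply, ContinuousLinearMap.smul_apply]
      rw [inner_add_left, inner_smul_left, inner_smul_left, starRingEnd_self_apply]
      have h2 : (inner ℂ ((star S) x) x : ℂ) = (starRingEnd ℂ) (inner ℂ (S x) x : ℂ) := by
        rw [hstar_inner]
        exact (inner_conj_symm x (S x)).symm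
      rw [h2, ← map_mul]
      exact_mod_cast Complex.add_conj _
    constructor
    · rw [hBx]; simp
    · rw [hBx]
      have := hθ x
      simp only [RCLike.re_to_complex, Complex.ofReal_re]
      linarith
  have hBD_anti : B * D = -(D * B) := by
    calc B * D = (starRingEnd ℂ) c • (S * D) + c • (star S * D) := by
          rw [hB, add_mul, smul_mul_assoc, smul_mul_assoc]
      _ = (starRingEnd ℂ) c • (-(D * S)) + c • (-(D * star S)) := by rw [hSD, hS'D]
      _ = -(D * B) := by
          rw [hB, smul_neg, smul_neg, mul_add, mul_smul_comm, mul_smul_comm, neg_add]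
  have hDB : D * B = -(B * D) := by rw [hBD_anti, neg_neg]
  have hBD2comm : Commute B (D * D) := NormalAux.commute_sq_of_anticommute hDB
  obtain ⟨Q, hQsa, hQQ, hQcomm⟩ := NormalAux.exists_sqrt B hBpos
  have hQD2 : Commute (D * D) Q := hQcomm _ hBD2comm.symm
  have hDQ : ∀ x : H, D (Q x) = 0 := by
    intro x
    have hpos : 0 ≤ (inner ℂ (B (D x)) (D x) : ℂ).re := by
      have hP := (ContinuousLinearMap.nonneg_iff_isPositive B).mp hBpos
      exact hP.2 (D x)
    have e2 : D * B * D = -(Q * ((D * D) * Q)) := by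
      have e1 : D * B * D = -(B * (D * D)) := by rw [hDB]; noncomm_ring
      rw [e1, ← hQQ]
      have e3 : Q * Q * (D * D) = Q * ((D * D) * Q) := by
        rw [mul_assoc, ← hQD2.eq]
      rw [e3]
    have hneg : (inner ℂ (B (D x)) (D x) : ℂ) = -(inner ℂ (D (Q x)) (D (Q x)) : ℂ) := by
      calc (inner ℂ (B (D x)) (D x) : ℂ) = inner ℂ ((D * B * D) x) x := by
            show _ = (inner ℂ (D (B (D x))) x : ℂ)
            rw [hsym D hDsa (B (D x)) x]
        _ = inner ℂ ((-(Q * ((D * D) * Q))) x) x := by rw [e2]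
        _ = -(inner ℂ (Q (((D * D) * Q) x)) x) := by
            rw [ContinuousLinearMap.neg_apply, inner_neg_left]
            rfl
        _ = -(inner ℂ (D (D (Q x))) (Q x)) := by
            rw [hsym Q hQsa (((D * D) * Q) x) x]
            rw [show (((D * D) * Q) x) = D (D (Q x)) from rfl]
        _ = -(inner ℂ (D (Q x)) (D (Q x)) : ℂ) := by
            rw [hsym D hDsa (D (Q x)) (Q x)]
    have hle : (inner ℂ (D (Q x)) (D (Q x)) : ℂ).re ≤ 0 := by
      rw [hneg] at hpos
      simp only [Complex.neg_re] at hpos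
      linarith
    have hsq : (inner ℂ (D (Q x)) (D (Q x)) : ℂ) = ((‖D (Q x)‖ ^ 2 : ℝ) : ℂ) := by
      exact_mod_cast inner_self_eq_norm_sq_to_K (𝕜 := ℂ) (D (Q x))
    rw [hsq] at hle
    simp only [Complex.ofReal_re] at hle
    have hn0 : ‖D (Q x)‖ = 0 := by nlinarith [norm_nonneg (D (Q x))]
    exact norm_eq_zero.mp hn0
  have hDQop : D * Q = 0 := by
    ext x
    simp [ContinuousLinearMap.mul_apply, hDQ x]
  have hQDop : Q * D = 0 := by
    have h' := congrArg star hDQop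
    simpa [star_mul, hDsa, hQsa.star_eq] using h'
  have hBD0 : B * D = 0 := by rw [← hQQ, mul_assoc, hQDop, mul_zero]
  -- extract scalar relations from B * D = 0
  have hexp : (starRingEnd ℂ) c • (S * D) + c • (star S * D) = 0 := by
    have h' := hBD0
    rw [hB, add_mul, smul_mul_assoc, smul_mul_assoc] at h'
    exact h'
  have h1 : c • (star S * D) = -((starRingEnd ℂ) c • (S * D)) :=
    eq_neg_of_add_eq_zero_right hexp
  have hS'D_eq : star S * D = -(((starRingEnd ℂ) c * (starRingEnd ℂ) c) • (S * D)) := by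
    calc star S * D = ((starRingEnd ℂ) c * c) • (star S * D) := by rw [hcc, one_smul]
      _ = (starRingEnd ℂ) c • (c • (star S * D)) := by rw [mul_smul]
      _ = (starRingEnd ℂ) c • (-((starRingEnd ℂ) c • (S * D))) := by rw [h1]
      _ = -(((starRingEnd ℂ) c * (starRingEnd ℂ) c) • (S * D)) := by rw [smul_neg, smul_smul]
  have hDS_eq : D * S = -((c * c) • (D * star S)) := by
    have h' := congrArg star hS'D_eq
    simp only [star_neg, star_smul, star_mul, star_star, hDsa, RCLike.star_def,
      starRingEnd_self_apply, map_mul] at h'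
    exact h'
  -- the two middle products agree
  have hX : D * (star S * S) * D = D * (S * star S) * D := by
    have e1 : D * (star S * S) * D = (D * star S) * (S * D) := by noncomm_ring
    have e2 : D * (S * star S) * D = (D * S) * (star S * D) := by noncomm_ring
    have hone : (c * c) * ((starRingEnd ℂ) c * (starRingEnd ℂ) c) = 1 := by
      have h3 : c * (starRingEnd ℂ) c = 1 := by rw [mul_comm]; exact hcc
      calc (c * c) * ((starRingEnd ℂ) c * (starRingEnd ℂ) c)
          = (c * (starRingEnd ℂ) c) * (c * (starRingEnd ℂ) c) := by ring
        _ = 1 := by rw [h3, one_mul]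
    rw [e1, e2, hDS_eq, hS'D_eq]
    rw [neg_mul, mul_neg, neg_neg, smul_mul_assoc, mul_smul_comm, smul_smul, hone, one_smul]
  -- factor star S * S - S * star S = D * P
  set G : H →L[ℂ] H := (T * T) * (star T * star T) with hG
  have hu_v : Commute (T * T) (star T * star T) := hab2.mul_left hab2
  have hfac1 : star S * S = (star T * T) * G ^ k := by
    rw [hS'fac, hSfac, hG]
    calc (star T * (star T * star T) ^ k) * (T * (T * T) ^ k)
        = star T * (((star T * star T) ^ k * T) * (T * T) ^ k) := by noncomm_ring
      _ = star T * ((T * (star T * star T) ^ k) * (T * T) ^ k) := by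
          rw [(hab2.pow_right k).eq]
      _ = (star T * T) * ((star T * star T) ^ k * (T * T) ^ k) := by noncomm_ring
      _ = (star T * T) * ((T * T) ^ k * (star T * star T) ^ k) := by
          rw [(hu_v.pow_pow k k).eq]
      _ = (star T * T) * ((T * T) * (star T * star T)) ^ k := by rw [hu_v.mul_pow k]
  have hfac2 : S * star S = (T * star T) * G ^ k := by
    rw [hS'fac, hSfac, hG]
    calc (T * (T * T) ^ k) * (star T * (star T * star T) ^ k)
        = T * (((T * T) ^ k * star T) * (star T * star T) ^ k) := by noncomm_ring
      _ = T * ((star T * (T * T) ^ k) * (star T * star T) ^ k) := by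
          rw [(hba2.pow_right k).eq]
      _ = (T * star T) * ((T * T) ^ k * (star T * star T) ^ k) := by noncomm_ring
      _ = (T * star T) * ((T * T) * (star T * star T)) ^ k := by rw [hu_v.mul_pow k]
  set P : H →L[ℂ] H := G ^ k with hP
  have hsubP : star S * S - S * star S = D * P := by
    rw [hfac1, hfac2, hD, hP]
    noncomm_ring
  have hDPD : D * (D * P) * D = 0 := by
    have e : D * (star S * S) * D - D * (S * star S) * D = D * (D * P) * D := by
      rw [← hsubP]; noncomm_ring
    rw [← e, hX, sub_self]
  have hDG : Commute D G := hDu.mul_right hDv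
  have hDP : Commute D P := hDG.pow_right k
  have hPD3 : P * (D * (D * D)) = 0 := by
    have hc3 : Commute P (D * (D * D)) :=
      hDP.symm.mul_right (hDP.symm.mul_right hDP.symm)
    have e : D * (D * P) * D = P * (D * (D * D)) := by
      calc D * (D * P) * D = (D * D) * (P * D) := by noncomm_ring
        _ = (D * D) * (D * P) := by rw [hDP.symm.eq]
        _ = (D * (D * D)) * P := by noncomm_ring
        _ = P * (D * (D * D)) := (hc3.eq).symm
    rw [← e, hDPD]
  -- P is nonnegative
  have hGpos : (0 : H →L[ℂ] H) ≤ G := by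
    have hsu : star (T * T) = star T * star T := by rw [star_mul]
    rw [hG, ← hsu]
    exact mul_star_self_nonneg (T * T)
  have hPpos : (0 : H →L[ℂ] H) ≤ P := CStarAlgebra.pow_nonneg hGpos k
  obtain ⟨W, hWsa, hWW, hWcomm⟩ := NormalAux.exists_sqrt P hPpos
  have hWD : Commute D W := hWcomm D hDP
  -- vector-level consequences
  have hP3v : ∀ z : H, P (D (D (D z))) = 0 := by
    intro z
    have h' := congrArg (fun V : H →L[ℂ] H => V z) hPD3
    simpa [ContinuousLinearMap.mul_apply] using h'
  have hDPswap : ∀ z : H, D (P z) = P (D z) := by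
    intro z
    have h' := congrArg (fun V : H →L[ℂ] H => V z) hDP.eq
    simpa [ContinuousLinearMap.mul_apply] using h'
  have hWsq : ∀ z : H, W (W z) = P z := by
    intro z
    have h' := congrArg (fun V : H →L[ℂ] H => V z) hWW
    simpa [ContinuousLinearMap.mul_apply] using h'
  have hWD2 : ∀ x : H, W (D (D x)) = 0 := by
    intro x
    have hin : (inner ℂ (W (D (D x))) (W (D (D x))) : ℂ) = 0 := by
      calc (inner ℂ (W (D (D x))) (W (D (D x))) : ℂ)
          = inner ℂ (D (D x)) (W (W (D (D x)))) := hsym W hWsa _ _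
        _ = inner ℂ (D (D x)) (P (D (D x))) := by rw [hWsq]
        _ = inner ℂ (D x) (D (P (D (D x)))) := by rw [← hsym D hDsa (D x) (P (D (D x)))]
        _ = inner ℂ (D x) (P (D (D (D x)))) := by rw [hDPswap]
        _ = 0 := by rw [hP3v x, inner_zero_right]
    exact inner_self_eq_zero.mp hin
  have hPD2v : ∀ x : H, P (D (D x)) = 0 := by
    intro x
    rw [← hWsq, hWD2 x, map_zero]
  have hWD1 : ∀ x : H, W (D x) = 0 := by
    intro x
    have hin : (inner ℂ (W (D x)) (W (D x)) : ℂ) = 0 := by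
      calc (inner ℂ (W (D x)) (W (D x)) : ℂ)
          = inner ℂ (D x) (W (W (D x))) := hsym W hWsa _ _
        _ = inner ℂ (D x) (P (D x)) := by rw [hWsq]
        _ = inner ℂ x (D (P (D x))) := by rw [← hsym D hDsa x (P (D x))]
        _ = inner ℂ x (P (D (D x))) := by rw [hDPswap]
        _ = 0 := by rw [hPD2v x, inner_zero_right]
    exact inner_self_eq_zero.mp hin
  have hPDv : ∀ x : H, P (D x) = 0 := by
    intro x
    rw [← hWsq, hWD1 x, map_zero]
  -- descend from G ^ k to G
  have hGsa : star G = G := by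
    simp [hG, star_mul, star_star]
  have hdesc : ∀ (m : ℕ) (y : H), (G ^ (m + 1)) y = 0 → G y = 0 := by
    intro m
    induction m with
    | zero => intro y hy; simpa [pow_one] using hy
    | succ m ih =>
      intro y hy
      apply ih
      have hpow1 : ∀ z : H, (G ^ (m + 1)) z = G ((G ^ m) z) := by
        intro z
        have h' := congrArg (fun V : H →L[ℂ] H => V z) (pow_succ' G m)
        simpa [ContinuousLinearMap.mul_apply] using h'
      have hpow2 : ∀ z : H, (G ^ (m + 2)) z = G ((G ^ (m + 1)) z) := by
        intro z
        have h' := congrArg (fun V : H →L[ℂ] H => V z) (pow_succ' G (m + 1))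
        simpa [ContinuousLinearMap.mul_apply] using h'
      have hin : (inner ℂ ((G ^ (m + 1)) y) ((G ^ (m + 1)) y) : ℂ) = 0 := by
        calc (inner ℂ ((G ^ (m + 1)) y) ((G ^ (m + 1)) y) : ℂ)
            = inner ℂ (G ((G ^ m) y)) ((G ^ (m + 1)) y) := by rw [← hpow1]
          _ = inner ℂ ((G ^ m) y) (G ((G ^ (m + 1)) y)) := hsym G hGsa _ _
          _ = inner ℂ ((G ^ m) y) ((G ^ (m + 2)) y) := by rw [← hpow2]
          _ = 0 := by rw [hy, inner_zero_right]
      exact inner_self_eq_zero.mp hin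
  have hGD : ∀ x : H, G (D x) = 0 := by
    intro x
    have hk1 : k - 1 + 1 = k := Nat.succ_pred_eq_of_pos hkpos
    refine hdesc (k - 1) (D x) ?_
    rw [hk1]
    exact hPDv x
  -- kill star T * star T and T * T on the range of D
  have hvD : ∀ x : H, (star T * star T) ((D x)) = 0 := by
    intro x
    have hsu : star (T * T) = star T * star T := by rw [star_mul]
    have hin : (inner ℂ ((star T * star T) (D x)) ((star T * star T) (D x)) : ℂ) = 0 := by
      calc (inner ℂ ((star T * star T) (D x)) ((star T * star T) (D x)) : ℂ)
          = inner ℂ ((star (T * T)) (D x)) ((star T * star T) (D x)) := by rw [hsu]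
        _ = inner ℂ (D x) ((T * T) ((star T * star T) (D x))) := hstar_inner (T * T) _ _
        _ = inner ℂ (D x) (G (D x)) := by rw [hG]; rfl
        _ = 0 := by rw [hGD x, inner_zero_right]
    exact inner_self_eq_zero.mp hin
  have huD : ∀ x : H, (T * T) ((D x)) = 0 := by
    intro x
    have hsv : star (star T * star T) = T * T := by rw [star_mul]; simp [star_star]
    have hin : (inner ℂ ((T * T) (D x)) ((T * T) (D x)) : ℂ) = 0 := by
      calc (inner ℂ ((T * T) (D x)) ((T * T) (D x)) : ℂ)
          = inner ℂ ((star (star T * star T)) (D x)) ((T * T) (D x)) := by rw [hsv]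
        _ = inner ℂ (D x) ((star T * star T) ((T * T) (D x))) := hstar_inner (star T * star T) _ _
        _ = inner ℂ (D x) (((star T * star T) * (T * T)) (D x)) := rfl
        _ = inner ℂ (D x) (((T * T) * (star T * star T)) (D x)) := by rw [hu_v.eq]
        _ = inner ℂ (D x) ((T * T) ((star T * star T) (D x))) := rfl
        _ = 0 := by rw [hvD x, map_zero, inner_zero_right]
    exact inner_self_eq_zero.mp hin
  -- case split on the ascent/descent hypothesis
  have hTD0 : T * D = 0 := by
    rcases had with hker | hran
    · ext x
      have h1 : (T ^ 2) (D x) = 0 := by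
        have : (T ^ 2) (D x) = (T * T) (D x) := by rw [pow_two]
        rw [this]; exact huD x
      have h2 : D x ∈ LinearMap.ker ((T ^ 2 : H →L[ℂ] H) : H →ₗ[ℂ] H) := LinearMap.mem_ker.mpr h1
      rw [← hker] at h2
      have h3 : T (D x) = 0 := LinearMap.mem_ker.mp h2
      simpa [ContinuousLinearMap.mul_apply] using h3
    · have hDu0 : D * (T * T) = 0 := by
        have hvD0 : (star T * star T) * D = 0 := by
          ext x
          simpa [ContinuousLinearMap.mul_apply] using hvD x
        have h' := congrArg star hvD0
        simp only [star_mul, star_star, star_zero, hDsa] at h'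
        exact h'
      have hDT0 : D * T = 0 := by
        ext y
        have h1 : T y ∈ LinearMap.range ((T ^ 2 : H →L[ℂ] H) : H →ₗ[ℂ] H) := by
          rw [← hran]; exact LinearMap.mem_range_self _ y
        obtain ⟨z, hz⟩ := h1
        have h2 : D (T y) = D ((T * T) z) := by rw [← pow_two]; exact congrArg D hz.symm
        have h3 : D ((T * T) z) = (D * (T * T)) z := rfl
        rw [h3, hDu0] at h2
        simpa [ContinuousLinearMap.mul_apply] using h2
      rw [hTD, hDT0, neg_zero]
  have hDT0 : D * T = 0 := by rw [hDT, hTD0, neg_zero]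
  have hbD0 : D * star T = 0 := by
    have h' := congrArg star hDT0
    simp only [star_mul, hDsa, star_zero] at h'
    rw [hDb, h', neg_zero]
  have hDD : D * D = 0 := by
    nth_rewrite 2 [hD]
    rw [mul_sub, ← mul_assoc, ← mul_assoc, hbD0, hDT0, zero_mul, zero_mul, sub_zero]
  have hD0 : D = 0 := by
    ext x
    have hin : (inner ℂ (D x) (D x) : ℂ) = 0 := by
      calc (inner ℂ (D x) (D x) : ℂ) = inner ℂ x (D (D x)) := hsym D hDsa x (D x)
        _ = inner ℂ x ((D * D) x) := rfl
        _ = 0 := by rw [hDD]; simp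
    simpa using inner_self_eq_zero.mp hin
  refine ⟨?_⟩
  show star T * T = T * star T
  have := hD ▸ hD0
  exact sub_eq_zero.mp this
end

section
/- (Putnam) Let T be a bounded linear operator on a complex Hilbert space H. If there exists a real number θ such that Re(e^{iθ}⟨Tx, x⟩) ≥ 0 for all x ∈ H (i.e., the numerical range of T lies on one side of a line passing through the origin, possibly including some points on the line) and T² is normal, then T is normal. -/
open scoped InnerProductSpace
open NormedSpace

section Fuglede

variable {A : Type*} [NormedRing A] [StarRing A] [CStarRing A] [NormedAlgebra ℂ A]
  [CompleteSpace A] [StarModule ℂ A] [NormedAlgebra ℚ A]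

private lemma putnam_exp_neg_mul_exp (x : A) : exp (-x) * exp x = 1 := by
  rw [← exp_add_of_commute (Commute.refl x).neg_left, neg_add_cancel, exp_zero]

private lemma putnam_exp_mul_exp_neg (x : A) : exp x * exp (-x) = 1 := by
  rw [← exp_add_of_commute (Commute.refl x).neg_right, add_neg_cancel, exp_zero]

/-- Fuglede's theorem: if `b` commutes with a normal element `n`, it commutes with `star n`. -/
private lemma putnam_fuglede {n b : A} (hn : IsStarNormal n) (hbn : Commute b n) :
    Commute b (star n) := by
  set m := star n with hm
  have hmn : Commute m n := hn.star_comm_self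
  have hcomm : ∀ z : ℂ, Commute b (exp (z • n)) := fun z => (hbn.smul_right z).exp_right
  set f : ℂ → A := fun z => exp (z • m) * b * exp (-(z • m)) with hf_def
  have skew : ∀ z : ℂ, (z • m - (starRingEnd ℂ z) • n) ∈ skewAdjoint A := by
    intro z
    rw [skewAdjoint.mem_iff]
    simp [star_smul, hm, neg_sub]
  set u : ℂ → A := fun z => exp (z • m - (starRingEnd ℂ z) • n) with hu_def
  have hu_unit : ∀ z, u z ∈ unitary A := fun z =>
    exp_mem_unitary_of_mem_skewAdjoint (skew z)
  have hcn : ∀ z : ℂ, Commute (z • m - (starRingEnd ℂ z) • n) ((starRingEnd ℂ z) • n) := by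
    intro z
    exact ((hmn.smul_left z).smul_right _).sub_left ((Commute.refl n).smul_left _|>.smul_right _)
  have hsplit : ∀ z : ℂ, exp (z • m) = u z * exp ((starRingEnd ℂ z) • n) := by
    intro z
    rw [hu_def, ← exp_add_of_commute (hcn z), sub_add_cancel]
  have hsplit' : ∀ z : ℂ, exp (-(z • m)) = exp (-((starRingEnd ℂ z) • n)) * star (u z) := by
    intro z
    have hstar : star (u z) = exp (-(z • m - (starRingEnd ℂ z) • n)) := by
      rw [hu_def, star_exp]
      congr 1
      rw [skewAdjoint.mem_iff.mp (skew z)]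
    rw [hstar, ← exp_add_of_commute ((hcn z).symm.neg_left.neg_right)]
    congr 1
    abel
  have hbound : ∀ z : ℂ, ‖f z‖ = ‖b‖ := by
    intro z
    have hbe : exp ((starRingEnd ℂ z) • n) * b = b * exp ((starRingEnd ℂ z) • n) :=
      (hcomm ((starRingEnd ℂ) z)).eq.symm
    have this1 : f z = u z * (b * star (u z)) := by
      rw [hf_def]
      simp only []
      rw [hsplit z, hsplit' z]
      simp only [mul_assoc]
      congr 1
      rw [← mul_assoc (exp ((starRingEnd ℂ z) • n)) b, hbe, mul_assoc,
        ← mul_assoc (exp ((starRingEnd ℂ z) • n)), putnam_exp_mul_exp_neg, one_mul]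
    rw [this1, CStarRing.norm_mem_unitary_mul _ (hu_unit z),
      CStarRing.norm_mul_mem_unitary _ (Unitary.star_mem (hu_unit z))]
  have hdiff1 : Differentiable ℂ (fun z : ℂ => exp (z • m)) := fun t =>
    (hasDerivAt_exp_smul_const m t).differentiableAt
  have hdiff2 : Differentiable ℂ (fun z : ℂ => exp (-(z • m))) := by
    have h := hdiff1.comp differentiable_neg
    simpa only [Function.comp_def, neg_smul] using h
  have hfdiff : Differentiable ℂ f := (hdiff1.mul_const b).mul hdiff2
  have hbdd : Bornology.IsBounded (Set.range f) := by
    apply (Metric.isBounded_closedBall (x := (0 : A)) (r := ‖b‖)).subset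
    rintro - ⟨z, rfl⟩
    simp [Metric.mem_closedBall, hbound z]
  have hconst : ∀ z : ℂ, f z = b := by
    intro z
    have := hfdiff.apply_eq_apply_of_bounded hbdd z 0
    simpa [hf_def, exp_zero] using this
  have hkey : ∀ z : ℂ, exp (z • m) * b = b * exp (z • m) := by
    intro z
    have h := hconst z
    have := congrArg (fun w => w * exp (z • m)) h
    simpa [hf_def, mul_assoc, putnam_exp_neg_mul_exp] using this
  have h1 : HasDerivAt (fun z : ℂ => exp (z • m) * b) (m * b) 0 := by
    simpa using (hasDerivAt_exp_smul_const (𝕂 := ℂ) m 0).mul_const b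
  have h2 : HasDerivAt (fun z : ℂ => exp (z • m) * b) (b * m) 0 := by
    have : HasDerivAt (fun z : ℂ => b * exp (z • m)) (b * m) 0 := by
      simpa using (hasDerivAt_exp_smul_const (𝕂 := ℂ) m 0).const_mul b
    exact this.congr_of_eventuallyEq (Filter.Eventually.of_forall fun z => (hkey z))
  exact (h1.unique h2).symm

end Fuglede

open scoped ContinuousFunctionalCalculus in
private lemma putnam_commute_cfc_of_commute {A : Type*} [TopologicalSpace A] [Ring A] [StarRing A]
    [Algebra ℝ A] [IsTopologicalRing A] [T2Space A]
    [ContinuousFunctionalCalculus ℝ A (IsSelfAdjoint : A → Prop)]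
    {a b : A} (hb : Commute b a) (f : ℝ → ℝ) :
    Commute b (cfc f a) := by
  refine cfc_cases (fun x => Commute b x) a f (Commute.zero_right b) fun hf ha' => ?_
  have hφcont : Continuous (cfcHom ha' (R := ℝ)) := cfcHom_continuous ha'
  let S : Subalgebra ℝ C(spectrum ℝ a, ℝ) :=
    { carrier := {g | Commute b (cfcHom ha' g)}
      mul_mem' := fun {g h} hg hh => show Commute b _ by
        rw [map_mul]; exact Commute.mul_right hg hh
      add_mem' := fun {g h} hg hh => show Commute b _ by
        rw [map_add]; exact Commute.add_right hg hh
      one_mem' := show Commute b _ by rw [map_one]; exact Commute.one_right b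
      zero_mem' := show Commute b _ by rw [map_zero]; exact Commute.zero_right b
      algebraMap_mem' := fun r => show Commute b _ by
        rw [AlgHomClass.commutes]; exact (Algebra.commutes r b).symm }
  have hS_closed : IsClosed (S : Set C(spectrum ℝ a, ℝ)) := by
    have : (S : Set C(spectrum ℝ a, ℝ)) = {g | b * cfcHom ha' g = cfcHom ha' g * b} := rfl
    rw [this]
    exact isClosed_eq ((continuous_mul_left b).comp hφcont)
      ((continuous_mul_right b).comp hφcont)
  have hX : (Polynomial.toContinuousMapOnAlgHom (spectrum ℝ a) Polynomial.X) ∈ S := by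
    have hid : (Polynomial.toContinuousMapOnAlgHom (spectrum ℝ a) Polynomial.X)
        = ContinuousMap.restrict (spectrum ℝ a) (ContinuousMap.id ℝ) := by
      ext x
      simp [Polynomial.toContinuousMapOnAlgHom, Polynomial.toContinuousMapOn,
        Polynomial.toContinuousMap]
    show Commute b _
    rw [hid, cfcHom_id ha']
    exact hb
  have hle : polynomialFunctions (spectrum ℝ a) ≤ S := by
    rw [polynomialFunctions.eq_adjoin_X]
    exact Algebra.adjoin_le (by simpa using hX)
  have htop : (⊤ : Subalgebra ℝ C(spectrum ℝ a, ℝ)) ≤ S := by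
    rw [← polynomialFunctions.topologicalClosure (spectrum ℝ a)]
    exact Subalgebra.topologicalClosure_minimal hle hS_closed
  exact htop Algebra.mem_top

section Main

variable {H : Type*} [NormedAddCommGroup H] [InnerProductSpace ℂ H] [CompleteSpace H]

set_option synthInstance.maxHeartbeats 1000000 in
private lemma putnam_aux (T : H →L[ℂ] H) (hpos : ∀ x : H, 0 ≤ (inner ℂ (T x) x : ℂ).re)
    (h2 : IsStarNormal (T ^ 2)) : IsStarNormal T := by
  set a : H →L[ℂ] H := T + star T with ha_def
  set D : H →L[ℂ] H := T * star T - star T * T with hD_def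
  have ha_sa : IsSelfAdjoint a := by
    rw [ha_def]
    simp only [IsSelfAdjoint, star_add, star_star]
    exact add_comm _ _
  have ha_pos : (0 : H →L[ℂ] H) ≤ a := by
    rw [ContinuousLinearMap.nonneg_iff_isPositive]
    refine ⟨ha_sa.isSymmetric, fun x => ?_⟩
    have h1 : a x = T x + ContinuousLinearMap.adjoint T x := by
      rw [ha_def]
      simp [ContinuousLinearMap.star_eq_adjoint]
    have h2' : ⟪ContinuousLinearMap.adjoint T x, x⟫_ℂ = starRingEnd ℂ ⟪T x, x⟫_ℂ := by
      rw [ContinuousLinearMap.adjoint_inner_left, ← inner_conj_symm]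
    rw [ContinuousLinearMap.reApplyInnerSelf_apply, h1, inner_add_left, h2']
    simp only [map_add, Complex.add_re, Complex.conj_re]
    have := hpos x
    positivity
  -- Fuglede
  letI : NormedAlgebra ℚ (H →L[ℂ] H) := .restrictScalars ℚ ℂ _
  have hF : Commute T (star (T ^ 2)) := putnam_fuglede h2 ((Commute.refl T).pow_right 2)
  have h3 : T * (star T * star T) = star T * star T * T := by
    have := hF.eq
    rwa [star_pow, sq, mul_assoc] at this
  have h4 : T * T * star T = star T * (T * T) := by
    have := congrArg star h3
    simpa only [star_mul, star_star, mul_assoc] using this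
  have hD_sa : IsSelfAdjoint D := by
    rw [hD_def]
    simp only [IsSelfAdjoint, star_sub, star_mul, star_star]
  have hDT : D * T + T * D = 0 := by
    have expand : D * T + T * D = T * T * star T - star T * (T * T) := by
      rw [hD_def]; noncomm_ring
    rw [expand, h4, sub_self]
  have hDsT : D * star T + star T * D = 0 := by
    have expand : D * star T + star T * D
        = T * (star T * star T) - star T * star T * T := by
      rw [hD_def]; noncomm_ring
    rw [expand, h3, sub_self]
  have hDa : D * a + a * D = 0 := by
    have expand : D * a + a * D = (D * T + T * D) + (D * star T + star T * D) := by
      rw [ha_def]; noncomm_ring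
    rw [expand, hDT, hDsT, add_zero]
  have hDa' : D * a = -(a * D) := eq_neg_of_add_eq_zero_left hDa
  have hDa2 : Commute D (a ^ 2) := by
    show D * a ^ 2 = a ^ 2 * D
    rw [sq, ← mul_assoc, hDa', neg_mul, mul_assoc, hDa', mul_neg, neg_neg, mul_assoc]
  have ha2_nonneg : (0 : H →L[ℂ] H) ≤ a ^ 2 := by
    rw [sq]
    nth_rewrite 1 [← ha_sa.star_eq]
    exact star_mul_self_nonneg a
  have hcomm_a : Commute D a := by
    have hsqrt : CFC.sqrt (a ^ 2) = a := CFC.sqrt_sq a ha_pos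
    rw [← hsqrt, CFC.sqrt_eq_cfc, cfc_nnreal_eq_real NNReal.sqrt (a ^ 2) ha2_nonneg]
    exact putnam_commute_cfc_of_commute hDa2 _
  have hDa0 : a * D = 0 := by
    have h0 : a * D + a * D = 0 := by
      nth_rewrite 1 [← hcomm_a.eq]
      exact hDa
    have h2smul : (2 : ℂ) • (a * D) = 0 := by
      rw [two_smul]; exact h0
    have := smul_eq_zero.mp h2smul
    simpa using this
  -- vector argument
  set K : Submodule ℂ H := LinearMap.ker (a : H →ₗ[ℂ] H) with hK_def
  haveI : CompleteSpace K := (ContinuousLinearMap.isClosed_ker a).completeSpace_coe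
  have memK_D : ∀ x : H, D x ∈ K := by
    intro x
    have h : a (D x) = 0 := by
      have : (a * D) x = (0 : H →L[ℂ] H) x := by rw [hDa0]
      simpa [ContinuousLinearMap.mul_apply] using this
    simpa [hK_def, LinearMap.mem_ker] using h
  have hsym : ∀ v w : H, ⟪D v, w⟫_ℂ = ⟪v, D w⟫_ℂ := by
    intro v w
    conv_lhs => rw [← hD_sa.star_eq, ContinuousLinearMap.star_eq_adjoint,
      ContinuousLinearMap.adjoint_inner_left]
  have hDvanish : ∀ v : H, v ∈ Kᗮ → D v = 0 := by
    intro v hv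
    rw [← inner_self_eq_zero (𝕜 := ℂ) (x := D v), hsym]
    have := (Submodule.mem_orthogonal K v).mp hv (D (D v)) (memK_D (D v))
    rw [← inner_conj_symm, this, map_zero]
  have hker_inner : ∀ u : H, u ∈ K → ⟪D u, u⟫_ℂ = 0 := by
    intro u hu
    have hau : T u + star T u = 0 := by
      have : a u = 0 := hu
      rw [ha_def] at this
      simpa using this
    have hsu : star T u = -(T u) := by
      rw [eq_neg_iff_add_eq_zero, add_comm]
      exact hau
    have e1 : ⟪(T * star T) u, u⟫_ℂ = ⟪star T u, star T u⟫_ℂ := by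
      rw [ContinuousLinearMap.mul_apply, ContinuousLinearMap.star_eq_adjoint,
        ← ContinuousLinearMap.adjoint_inner_right]
    have e2 : ⟪(star T * T) u, u⟫_ℂ = ⟪T u, T u⟫_ℂ := by
      rw [ContinuousLinearMap.mul_apply, ContinuousLinearMap.star_eq_adjoint,
        ContinuousLinearMap.adjoint_inner_left]
    rw [hD_def, ContinuousLinearMap.sub_apply, inner_sub_left, e1, e2, hsu]
    simp
  have hD0 : D = 0 := by
    have hinner : ∀ x : H, ⟪D x, x⟫_ℂ = 0 := by
      intro x
      set u : H := (K.orthogonalProjection x : H) with hu_def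
      have huK : u ∈ K := (K.orthogonalProjection x).2
      set v : H := x - u with hv_def
      have hvK : v ∈ Kᗮ := Submodule.sub_starProjection_mem_orthogonal (K := K) x
      have hx : x = u + v := by rw [hv_def]; abel
      have hDv : D v = 0 := hDvanish v hvK
      rw [hx, map_add, hDv, add_zero, inner_add_right, hker_inner u huK, zero_add]
      exact (Submodule.mem_orthogonal K v).mp hvK (D u) (memK_D u)
    have hlin := (inner_map_self_eq_zero (D : H →ₗ[ℂ] H)).mp (by
      intro x
      simpa using hinner x)
    ext x
    have := LinearMap.ext_iff.mp hlin x
    simpa using this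
  constructor
  show star T * T = T * star T
  have := sub_eq_zero.mp hD0
  exact this.symm

end Main

/-- (Putnam) If the numerical range of `T` lies on one side of a line passing through the
origin (i.e. `Re(e^{iθ}⟨Tx, x⟩) ≥ 0` for all `x` for some real `θ`) and `T²` is normal,
then `T` is normal. -/
theorem putnam_normal_of_halfplane_of_sq_normal
    {H : Type*} [NormedAddCommGroup H] [InnerProductSpace ℂ H] [CompleteSpace H]
    (T : H →L[ℂ] H)
    (hθ : ∃ θ : ℝ, ∀ x : H, 0 ≤ (Complex.exp (θ * Complex.I) * (inner ℂ (T x) x : ℂ)).re)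
    (h2 : IsStarNormal (T ^ 2)) :
    IsStarNormal T := by
  obtain ⟨θ, hθ⟩ := hθ
  set c : ℂ := starRingEnd ℂ (Complex.exp (θ * Complex.I)) with hc_def
  have hc_ne : c ≠ 0 := by
    simp [hc_def, Complex.exp_ne_zero]
  set S : H →L[ℂ] H := c • T with hS_def
  have hS2 : IsStarNormal (S ^ 2) := by
    constructor
    show star (S ^ 2) * S ^ 2 = S ^ 2 * star (S ^ 2)
    have hS2eq : S ^ 2 = (c ^ 2) • T ^ 2 := by
      rw [hS_def, smul_pow]
    rw [hS2eq, star_smul, smul_mul_smul_comm, smul_mul_smul_comm, h2.star_comm_self.eq,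
      mul_comm (star (c ^ 2))]
  have hSpos : ∀ x : H, 0 ≤ (inner ℂ (S x) x : ℂ).re := by
    intro x
    have : (inner ℂ (S x) x : ℂ) = Complex.exp (θ * Complex.I) * inner ℂ (T x) x := by
      rw [hS_def]
      simp only [ContinuousLinearMap.smul_apply]
      rw [inner_smul_left, hc_def, Complex.conj_conj]
    rw [this]
    exact hθ x
  have hSnormal : IsStarNormal S := putnam_aux S hSpos hS2
  constructor
  show star T * T = T * star T
  have hslift := hSnormal.star_comm_self.eq
  rw [hS_def, star_smul, smul_mul_smul_comm, smul_mul_smul_comm, mul_comm (star c) c] at hslift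
  have hcc : c * star c ≠ 0 := mul_ne_zero hc_ne (star_ne_zero.mpr hc_ne)
  exact smul_right_injective (H →L[ℂ] H) hcc hslift
end

section
/- Let T be a bounded linear operator on a complex Hilbert space H. Suppose (i) T² is positive; (ii) Re(T^{2k+1}) ≥ 0 for some positive integer k; and (iii) ker T = ker T² or ran T = ran T². Then T is positive. -/
open StarAlgebra in
lemma my_commute_of_mem_elemental {A : Type*} [CStarAlgebra A] {a b y : A}
    (hb : Commute b a) (hb' : Commute b (star a)) (hy : y ∈ elemental ℂ a) :
    Commute b y := by
  induction hy using StarAlgebra.elemental.induction_on with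
  | self => exact hb
  | star_self => exact hb'
  | algebraMap r => exact (Algebra.commutes r b).symm
  | add u hu v hv h1 h2 => exact h1.add_right h2
  | mul u hu v hv h1 h2 => exact h1.mul_right h2
  | closure s hs hP v hv =>
      have : IsClosed {u : A | Commute b u} := by
        have : {u : A | Commute b u} = {u | b * u - u * b = 0} := by
          ext u; simp [Commute, SemiconjBy, sub_eq_zero]
        rw [this]
        exact isClosed_eq (by fun_prop) continuous_const
      exact this.closure_subset_iff.mpr (fun u hu => hP u hu) hv

lemma my_cfc_mem_elemental {A : Type*} [CStarAlgebra A] (a : A) [IsStarNormal a] (f : ℂ → ℂ) :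
    cfc f a ∈ StarAlgebra.elemental ℂ a := by
  refine cfc_cases (· ∈ StarAlgebra.elemental ℂ a) a f (zero_mem _) fun hf ha' => ?_
  rw [cfcHom_eq_of_isStarNormal]
  exact Subtype.coe_prop _

set_option synthInstance.maxHeartbeats 80000 in
lemma my_commute_sqrt {H : Type*} [NormedAddCommGroup H] [InnerProductSpace ℂ H]
    [CompleteSpace H] (a b : H →L[ℂ] H) (ha : (0:H →L[ℂ] H) ≤ a) (hb : Commute b a) :
    Commute b (CFC.sqrt a) := by
  have hsa : IsSelfAdjoint a := IsSelfAdjoint.of_nonneg ha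
  have hn : IsStarNormal a := hsa.isStarNormal
  have key : CFC.sqrt a = cfc (fun z : ℂ => ((NNReal.sqrt (z.re).toNNReal : ℝ) : ℂ)) a := by
    rw [CFC.sqrt_eq_cfc, cfc_nnreal_eq_real _ _ ha, cfc_real_eq_complex _ hsa]
  rw [key]
  exact my_commute_of_mem_elemental hb (hsa.star_eq.symm ▸ hb) (my_cfc_mem_elemental a _)


variable {H' : Type*} [NormedAddCommGroup H'] [InnerProductSpace ℂ H'] [CompleteSpace H'] in
lemma my_mem_closure_range (S : H' →L[ℂ] H') (v : H')
    (h : ∀ u : H', ContinuousLinearMap.adjoint S u = 0 → (inner ℂ u v : ℂ) = 0) :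
    v ∈ closure (Set.range S) := by
  have hv : v ∈ ((LinearMap.range (S : H' →ₗ[ℂ] H'))ᗮ)ᗮ := by
    rw [Submodule.mem_orthogonal]
    intro z hz
    refine h z ?_
    rw [← inner_self_eq_zero (𝕜 := ℂ)]
    rw [ContinuousLinearMap.adjoint_inner_right]
    exact hz _ (LinearMap.mem_range_self _ _)
  rw [Submodule.orthogonal_orthogonal_eq_closure] at hv
  rw [← SetLike.mem_coe, Submodule.topologicalClosure_coe, LinearMap.coe_range] at hv
  simpa using hv

set_option maxHeartbeats 1000000 in
set_option synthInstance.maxHeartbeats 400000 in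
open ContinuousLinearMap in
/-- If `T²` is positive, `Re(T^{2k+1}) ≥ 0` for some positive integer `k`, and
`ker T = ker T²` or `ran T = ran T²`, then `T` is positive. -/
theorem positive_of_sq_positive_of_odd_power_accretive_of_asc_or_dsc
    {H : Type*} [NormedAddCommGroup H] [InnerProductSpace ℂ H] [CompleteSpace H]
    (T : H →L[ℂ] H)
    (h2 : (T ^ 2).IsPositive)
    (hk : ∃ k : ℕ, 0 < k ∧ ∀ x : H, 0 ≤ (inner ℂ ((T ^ (2 * k + 1)) x) x : ℂ).re)
    (had : LinearMap.ker (T : H →ₗ[ℂ] H) = LinearMap.ker ((T ^ 2 : H →L[ℂ] H) : H →ₗ[ℂ] H) ∨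
      LinearMap.range (T : H →ₗ[ℂ] H) = LinearMap.range ((T ^ 2 : H →L[ℂ] H) : H →ₗ[ℂ] H)) :
    T.IsPositive := by
  obtain ⟨k, hk0, hodd⟩ := hk
  have h2' : (0 : H →L[ℂ] H) ≤ T ^ 2 := (nonneg_iff_isPositive _).mpr h2
  set A : H →L[ℂ] H := CFC.sqrt (T ^ 2) with hAdef
  have hA0 : (0 : H →L[ℂ] H) ≤ A := CFC.sqrt_nonneg _
  have hAP : A.IsPositive := (nonneg_iff_isPositive _).mp hA0
  have hAsa : IsSelfAdjoint A := hAP.isSelfAdjoint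
  have hA2 : A ^ 2 = T ^ 2 := CFC.sq_sqrt _ h2'
  have hcomm : Commute T A := my_commute_sqrt (T ^ 2) T h2' ((Commute.refl T).pow_right 2)
  -- basic inner ℂ product facts
  have hAinner : ∀ x y : H, (inner ℂ (A x) y : ℂ) = inner ℂ x (A y) := by
    intro x y
    conv_lhs => rw [← hAsa.adjoint_eq]
    rw [adjoint_inner_left]
  have hAA : ∀ x : H, A (A x) = (T ^ 2) x := by
    intro x
    have := congrArg (fun (S : H →L[ℂ] H) => S x) hA2
    simpa [pow_two] using this
  -- kernel of A equals kernel of T ^ 2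
  have hkerA : ∀ x : H, (T ^ 2) x = 0 → A x = 0 := by
    intro x hx
    rw [← inner_self_eq_zero (𝕜 := ℂ), hAinner, hAA, hx, inner_zero_right]
  -- T vanishes on ker A
  have hTker : ∀ x : H, A x = 0 → T x = 0 := by
    intro x hx
    have hx2 : (T ^ 2) x = 0 := by rw [← hAA, hx, map_zero]
    rcases had with h | h
    · have : x ∈ LinearMap.ker (T : H →ₗ[ℂ] H) := by
        rw [h]; exact hx2
      exact this
    · -- T x ∈ range (T^2) and T x ∈ ker A
      have hmem : T x ∈ LinearMap.range ((T ^ 2 : H →L[ℂ] H) : H →ₗ[ℂ] H) := by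
        rw [← h]; exact LinearMap.mem_range_self _ _
      obtain ⟨y, hy⟩ := hmem
      have hTx_ker : A (T x) = 0 := by
        apply hkerA
        have : (T ^ 2) (T x) = T ((T ^ 2) x) := by
          simp only [pow_two, ContinuousLinearMap.mul_apply]
        rw [this, hx2, map_zero]
      rw [← inner_self_eq_zero (𝕜 := ℂ)]
      calc (inner ℂ (T x) (T x) : ℂ) = inner ℂ (A (A y)) (T x) := by rw [hAA]; exact congrArg (fun z => inner ℂ z (T x)) hy.symm
        _ = inner ℂ (A y) (A (T x)) := hAinner _ _
        _ = 0 := by rw [hTx_ker, inner_zero_right]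
  -- powers of A are self-adjoint
  have hpow : ∀ (m : ℕ) (x y : H), (inner ℂ ((A ^ m) x) y : ℂ) = inner ℂ x ((A ^ m) y) := by
    intro m
    induction m with
    | zero => intro x y; simp
    | succ n ih =>
      intro x y
      have e1 : (A ^ (n + 1)) x = (A ^ n) (A x) := by rw [pow_succ, ContinuousLinearMap.mul_apply]
      have e2 : A ((A ^ n) y) = (A ^ (n + 1)) y := by rw [pow_succ', ContinuousLinearMap.mul_apply]
      rw [e1, ih, hAinner, e2]
  -- kernels of powers of A
  have hhalf : ∀ (m : ℕ) (x : H), (A ^ (2 * m)) x = 0 → (A ^ m) x = 0 := by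
    intro m x hx
    have : (A ^ m) ((A ^ m) x) = (A ^ (2 * m)) x := by
      rw [two_mul, pow_add, ContinuousLinearMap.mul_apply]
    rw [← inner_self_eq_zero (𝕜 := ℂ), hpow, this, hx, inner_zero_right]
  have hpow2 : ∀ (j : ℕ) (x : H), (A ^ (2 ^ j)) x = 0 → A x = 0 := by
    intro j
    induction j with
    | zero => intro x hx; simpa using hx
    | succ n ih =>
      intro x hx
      refine ih x (hhalf _ x ?_)
      rw [← pow_succ']
      exact hx
  have hmono : ∀ (m n : ℕ) (x : H), m ≤ n → (A ^ m) x = 0 → (A ^ n) x = 0 := by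
    intro m n x hmn hx
    have : A ^ n = A ^ (n - m) * A ^ m := by
      rw [← pow_add, Nat.sub_add_cancel hmn]
    rw [this, ContinuousLinearMap.mul_apply, hx, map_zero]
  have hkerpow : ∀ x : H, (A ^ k) x = 0 → A x = 0 := by
    intro x hx
    exact hpow2 k x (hmono k (2 ^ k) x (Nat.lt_two_pow_self (n := k)).le hx)
  -- accretivity on the range of A ^ k
  have hre_range : ∀ x : H, 0 ≤ (inner ℂ (T ((A ^ k) x)) ((A ^ k) x) : ℂ).re := by
    intro x
    have hTpow : T ^ (2 * k + 1) = A ^ k * (T * A ^ k) := by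
      have e1 : T ^ (2 * k) = A ^ (2 * k) := by
        rw [pow_mul, pow_mul, hA2]
      have e2 : Commute T (A ^ k) := hcomm.pow_right k
      calc T ^ (2 * k + 1) = T ^ (2 * k) * T := by rw [pow_succ]
        _ = A ^ (2 * k) * T := by rw [e1]
        _ = A ^ k * (A ^ k * T) := by rw [two_mul, pow_add, mul_assoc]
        _ = A ^ k * (T * A ^ k) := by rw [e2.eq]
    have happ : (T ^ (2 * k + 1)) x = (A ^ k) (T ((A ^ k) x)) := by
      rw [hTpow]; simp [ContinuousLinearMap.mul_apply]
    have := hodd x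
    rwa [happ, hpow] at this
  -- the set where T is accretive is closed
  have hC_closed : IsClosed {v : H | 0 ≤ (inner ℂ (T v) v : ℂ).re} := by
    have hc : Continuous fun v : H => (inner ℂ (T v) v : ℂ).re :=
      Complex.continuous_re.comp (Continuous.inner T.continuous continuous_id)
    exact isClosed_le continuous_const hc
  -- accretivity on the closure of the range of A
  have hre_clos : ∀ v ∈ closure (Set.range ⇑A), 0 ≤ (inner ℂ (T v) v : ℂ).re := by
    have hAk : ∀ x : H, A x ∈ closure (Set.range ⇑(A ^ k)) := by
      intro x
      apply my_mem_closure_range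
      intro u hu
      rw [(hAsa.pow k).adjoint_eq] at hu
      have hu' : A u = 0 := hkerpow u hu
      rw [← hAinner, hu', inner_zero_left]
    have hCk : Set.range ⇑(A ^ k) ⊆ {v : H | 0 ≤ (inner ℂ (T v) v : ℂ).re} := by
      rintro y ⟨x, rfl⟩; exact hre_range x
    have hCkc : closure (Set.range ⇑(A ^ k)) ⊆ {v : H | 0 ≤ (inner ℂ (T v) v : ℂ).re} :=
      closure_minimal hCk hC_closed
    have hCA : Set.range ⇑A ⊆ {v : H | 0 ≤ (inner ℂ (T v) v : ℂ).re} := by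
      rintro y ⟨x, rfl⟩; exact hCkc (hAk x)
    intro v hv
    exact closure_minimal hCA hC_closed hv
  -- ker A is orthogonal to closure of range A
  have h_orthK : ∀ u : H, A u = 0 → ∀ v ∈ closure (Set.range ⇑A), (inner ℂ u v : ℂ) = 0 := by
    intro u hu
    have hclosed : IsClosed {v : H | (inner ℂ u v : ℂ) = 0} :=
      isClosed_eq (Continuous.inner continuous_const continuous_id) continuous_const
    have hsub : Set.range ⇑A ⊆ {v : H | (inner ℂ u v : ℂ) = 0} := by
      rintro y ⟨x, rfl⟩
      show (inner ℂ u (A x) : ℂ) = 0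
      rw [← hAinner, hu, inner_zero_left]
    exact fun v hv => closure_minimal hsub hclosed hv
  -- closure of range A is T-invariant
  have hMapsTo : ∀ v ∈ closure (Set.range ⇑A), T v ∈ closure (Set.range ⇑A) := by
    have hm : Set.MapsTo ⇑T (Set.range ⇑A) (Set.range ⇑A) := by
      rintro y ⟨x, rfl⟩
      refine ⟨T x, ?_⟩
      have := congrArg (fun S : H →L[ℂ] H => S x) hcomm.eq
      simpa [ContinuousLinearMap.mul_apply] using this.symm
    exact fun v hv => hm.closure T.continuous hv
  -- orthogonal decomposition along ker A
  have hdecomp : ∀ x : H, ∃ u v : H, A u = 0 ∧ v ∈ closure (Set.range ⇑A) ∧ x = u + v := by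
    intro x
    haveI : CompleteSpace (LinearMap.ker (A : H →ₗ[ℂ] H)) := (isClosed_ker A).completeSpace_coe
    obtain ⟨u, hu, v, hv, hx⟩ := (LinearMap.ker (A : H →ₗ[ℂ] H)).exists_add_mem_mem_orthogonal x
    refine ⟨u, v, hu, ?_, hx⟩
    apply my_mem_closure_range
    intro w hw
    rw [hAsa.adjoint_eq] at hw
    exact (Submodule.mem_orthogonal _ v).mp hv w hw
  -- adjoint of T vanishes on ker A
  have hadjTker : ∀ u : H, A u = 0 → ContinuousLinearMap.adjoint T u = 0 := by
    intro u hu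
    have key : ∀ x : H, (inner ℂ u (T x) : ℂ) = 0 := by
      intro x
      obtain ⟨x0, x1, hx0, hx1, rfl⟩ := hdecomp x
      rw [map_add, inner_add_right, hTker x0 hx0, inner_zero_right, zero_add]
      exact h_orthK u hu _ (hMapsTo _ hx1)
    rw [← inner_self_eq_zero (𝕜 := ℂ), adjoint_inner_right, inner_eq_zero_symm]
    exact key _
  -- kernel of (adjoint T + A) is contained in ker A
  have hkerTA : ∀ x : H, ContinuousLinearMap.adjoint T x + A x = 0 → A x = 0 := by
    intro x hx
    obtain ⟨u, v, hu, hv, rfl⟩ := hdecomp x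
    rw [map_add, map_add, hadjTker u hu, hu] at hx
    have hTv : ContinuousLinearMap.adjoint T v = -A v := by
      have h0 : ContinuousLinearMap.adjoint T v + A v = 0 := by
        simpa using hx
      linear_combination (norm := abel) h0
    -- inner ℂ products
    have hAvv : (inner ℂ (A v) v : ℂ).re = 0 := by
      have h1 : 0 ≤ (inner ℂ (T v) v : ℂ).re := hre_clos v hv
      have h2 : (inner ℂ (T v) v : ℂ) = -(starRingEnd ℂ) (inner ℂ (A v) v) := by
        calc (inner ℂ (T v) v : ℂ) = (starRingEnd ℂ) (inner ℂ v (T v)) := (inner_conj_symm _ _).symm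
          _ = (starRingEnd ℂ) (inner ℂ (ContinuousLinearMap.adjoint T v) v) := by
              rw [adjoint_inner_left]
          _ = (starRingEnd ℂ) (inner ℂ (-A v) v) := by rw [hTv]
          _ = -(starRingEnd ℂ) (inner ℂ (A v) v) := by rw [inner_neg_left, map_neg]
      have h3 : 0 ≤ (inner ℂ (A v) v : ℂ).re := by
        have := hAP.inner_nonneg_left v
        simpa using (Complex.le_def.mp this).1
      have h4 : (inner ℂ (T v) v : ℂ).re = -(inner ℂ (A v) v : ℂ).re := by
        rw [h2]
        simp only [Complex.neg_re, Complex.conj_re]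
      linarith
    have hAv : A v = 0 := by
      set B : H →L[ℂ] H := CFC.sqrt A with hBdef
      have hB0 : (0 : H →L[ℂ] H) ≤ B := CFC.sqrt_nonneg _
      have hBsa : IsSelfAdjoint B :=
        ((nonneg_iff_isPositive _).mp hB0).isSelfAdjoint
      have hB2 : ∀ y : H, B (B y) = A y := by
        intro y
        have : B ^ 2 = A := CFC.sq_sqrt _ hA0
        have := congrArg (fun S : H →L[ℂ] H => S y) this
        simpa [pow_two, ContinuousLinearMap.mul_apply] using this
      have hBinner : (inner ℂ (B v) (B v) : ℂ) = inner ℂ v (A v) := by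
        calc (inner ℂ (B v) (B v) : ℂ)
            = inner ℂ (ContinuousLinearMap.adjoint B v) (B v) := by rw [hBsa.adjoint_eq]
          _ = inner ℂ v (B (B v)) := adjoint_inner_left B (B v) v
          _ = inner ℂ v (A v) := by rw [hB2]
      have hAvv' : (inner ℂ v (A v) : ℂ).re = 0 := by
        have he : (inner ℂ v (A v) : ℂ) = (starRingEnd ℂ) (inner ℂ (A v) v) :=
          (inner_conj_symm _ _).symm
        rw [he, Complex.conj_re, hAvv]
      have h6 : ‖B v‖ ^ 2 = 0 := by
        rw [← inner_self_eq_norm_sq (𝕜 := ℂ)]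
        simp only [RCLike.re_to_complex]
        rw [hBinner, hAvv']
      have hBv : B v = 0 := by
        rw [pow_eq_zero_iff (by norm_num : (2 : ℕ) ≠ 0)] at h6
        exact norm_eq_zero.mp h6
      rw [← hB2, hBv, map_zero]
    rw [map_add, hu, hAv, add_zero]
  -- (T - A)(T + A) = 0
  have hfact : (T - A) * (T + A) = 0 := by
    have hn : (T - A) * (T + A) = T ^ 2 - A ^ 2 + (T * A - A * T) := by noncomm_ring
    rw [hn, hA2, hcomm.eq]
    simp
  -- T = A on the closure of the range of A
  have hTv_eq : ∀ v ∈ closure (Set.range ⇑A), T v = A v := by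
    intro v hv
    have hvmem : v ∈ closure (Set.range ⇑(T + A)) := by
      apply my_mem_closure_range
      intro u hu
      have hadd : ContinuousLinearMap.adjoint T u + A u = 0 := by
        have he : ContinuousLinearMap.adjoint (T + A) =
            ContinuousLinearMap.adjoint T + ContinuousLinearMap.adjoint A := map_add _ _ _
        rw [he] at hu
        rw [hAsa.adjoint_eq] at hu
        exact hu
      exact h_orthK u (hkerTA u hadd) v hv
    have hker_sub : Set.range ⇑(T + A) ⊆ {w : H | (T - A) w = 0} := by
      rintro y ⟨x, rfl⟩
      have := congrArg (fun S : H →L[ℂ] H => S x) hfact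
      simpa [ContinuousLinearMap.mul_apply] using this
    have hclosed : IsClosed {w : H | (T - A) w = 0} :=
      isClosed_eq (T - A).continuous continuous_const
    have h0 : (T - A) v = 0 := closure_minimal hker_sub hclosed hvmem
    rw [ContinuousLinearMap.sub_apply] at h0
    exact sub_eq_zero.mp h0
  -- conclude T = A
  have hTA : T = A := by
    ext x
    obtain ⟨u, v, hu, hv, rfl⟩ := hdecomp x
    rw [map_add, map_add, hTker u hu, hu, hTv_eq v hv]
  rw [hTA]
  exact hAP
end

section
/- Let T be a bounded linear operator on a complex Hilbert space H with ker T = ker T². If there exist coprime integers p, q ≥ 2 such that T^p and T^q are positive, then T is positive. -/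
/-- If `ker T = ker T²` and there exist coprime integers `p, q ≥ 2` such that
`T^p ≥ 0` and `T^q ≥ 0`, then `T ≥ 0`. -/
theorem positive_of_asc_one_of_coprime_powers_positive
    {H : Type*} [NormedAddCommGroup H] [InnerProductSpace ℂ H] [CompleteSpace H]
    (T : H →L[ℂ] H)
    (hasc : LinearMap.ker (T : H →ₗ[ℂ] H) = LinearMap.ker ((T ^ 2 : H →L[ℂ] H) : H →ₗ[ℂ] H))
    (hpq : ∃ p q : ℕ, 2 ≤ p ∧ 2 ≤ q ∧ Nat.Coprime p q ∧
      (T ^ p).IsPositive ∧ (T ^ q).IsPositive) :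
    T.IsPositive := by
  obtain ⟨p, q, hp, hq, hco, hTp, hTq⟩ := hpq
  -- kernels of all positive powers of T coincide with ker T
  have hker : ∀ n : ℕ, LinearMap.ker ((T ^ (n + 1) : H →L[ℂ] H) : H →ₗ[ℂ] H) = LinearMap.ker (T : H →ₗ[ℂ] H) := by
    intro n
    induction n with
    | zero => simp [pow_one]
    | succ n ih =>
      apply le_antisymm
      · intro x hx
        have hx' : (T ^ 2) ((T ^ n) x) = 0 := by
          have : (T ^ (2 + n)) x = 0 := by
            rw [show 2 + n = n + 1 + 1 from by omega]; exact hx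
          simpa [pow_add, ContinuousLinearMap.mul_apply] using this
        have : (T ^ n) x ∈ LinearMap.ker (T : H →ₗ[ℂ] H) := hasc ▸ (LinearMap.mem_ker.mpr hx' : (T ^ n) x ∈ LinearMap.ker ((T ^ 2 : H →L[ℂ] H) : H →ₗ[ℂ] H))
        have hx1 : (T ^ (n + 1)) x = 0 := by
          have := LinearMap.mem_ker.mp this
          calc (T ^ (n + 1)) x = T ((T ^ n) x) := by
                rw [pow_succ']; rfl
            _ = 0 := this
        exact ih ▸ LinearMap.mem_ker.mpr hx1
      · intro x hx
        have hx0 : T x = 0 := hx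
        have : (T ^ (n + 2)) x = (T ^ (n + 1)) (T x) := by
          rw [pow_succ]; rfl
        show (T ^ (n + 2)) x = 0
        rw [this, hx0, map_zero]
  -- Bezout: find a b with p * a = q * b + 1 and b ≥ 1
  obtain ⟨m, -, hm⟩ := Nat.exists_mul_mod_eq_one_of_coprime hco (lt_of_lt_of_le one_lt_two hq)
  set b : ℕ := p * m / q with hb
  have hdiv : q * b + 1 = p * m := by
    have := Nat.div_add_mod (p * m) q
    rw [hm] at this
    rw [hb]; omega
  have hb1 : 1 ≤ b := by
    rcases Nat.eq_zero_or_pos b with h0 | h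
    · exfalso
      rw [h0] at hdiv
      simp at hdiv
      have hdvd : p ∣ 1 := ⟨m, hdiv⟩
      have := Nat.le_of_dvd one_pos hdvd
      omega
    · exact h
  -- positivity of powers
  rw [← ContinuousLinearMap.nonneg_iff_isPositive] at hTp hTq
  have hS : (0 : H →L[ℂ] H) ≤ T ^ (q * b) := by
    have := CStarAlgebra.pow_nonneg hTq b
    rwa [← pow_mul] at this
  have hP : (0 : H →L[ℂ] H) ≤ T ^ (p * m) := by
    have := CStarAlgebra.pow_nonneg hTp m
    rwa [← pow_mul] at this
  set S : H →L[ℂ] H := T ^ (q * b) with hSdef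
  have hSsa : IsSelfAdjoint S := .of_nonneg hS
  have hPsa : IsSelfAdjoint (T ^ (p * m)) := .of_nonneg hP
  -- star T * ... identity:  S * star T = S * T
  have hpm : T ^ (p * m) = T * S := by rw [← hdiv, pow_succ']
  have hST : S * star T = S * T := by
    have h1 : star (T * S) = T * S := by rw [← hpm]; exact hPsa
    have h2 : star (T * S) = S * star T := by
      rw [star_mul, hSsa.star_eq]
    have h3 : T * S = S * T := by
      rw [hSdef, ← pow_succ', ← pow_succ]
    rw [h2, h3] at h1
    rw [h1]
  set D : H →L[ℂ] H := star T - T with hDdef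
  have hDstar : star D = -D := by
    simp [hDdef, star_sub]
  have hSD : S * D = 0 := by
    rw [hDdef, mul_sub, hST, sub_self]
  -- T * D = 0 since range D ⊆ ker S = ker T
  have hTD : T * D = 0 := by
    ext x
    have hx : S (D x) = 0 := by
      have := congrArg (fun A : H →L[ℂ] H => A x) hSD
      simpa [ContinuousLinearMap.mul_apply] using this
    have hmem : D x ∈ LinearMap.ker ((T ^ (q * b) : H →L[ℂ] H) : H →ₗ[ℂ] H) := LinearMap.mem_ker.mpr hx
    have hqb : q * b = (q * b - 1) + 1 := by
      have : 1 ≤ q * b := Nat.one_le_iff_ne_zero.mpr (by positivity)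
      omega
    rw [hqb, hker] at hmem
    simpa [ContinuousLinearMap.mul_apply] using LinearMap.mem_ker.mp hmem
  -- D * star T = 0
  have hDTs : D * star T = 0 := by
    have := congrArg star hTD
    rw [star_mul, hDstar, star_zero, neg_mul] at this
    exact neg_eq_zero.mp this
  -- D ^ 3 = 0
  have hD2 : D * D = star T * D := by
    nth_rewrite 1 [hDdef]
    rw [sub_mul, hTD, sub_zero]
  have hD3 : D * (D * D) = 0 := by
    rw [hD2, ← mul_assoc, hDTs, zero_mul]
  -- D² = 0
  have hX : ∀ x, (D * D) x = 0 := by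
    intro x
    have key : ((D * D) * (D * D)) x = 0 := by
      have : (D * D) * (D * D) = ((D * (D * D)) * D) := by
        simp only [mul_assoc]
      rw [this, hD3, zero_mul]; rfl
    have hinner : (inner ℂ ((D * D) x) ((D * D) x) : ℂ) = 0 := by
      have hadj : ContinuousLinearMap.adjoint (D * D) = D * D := by
        rw [← ContinuousLinearMap.star_eq_adjoint, star_mul, hDstar, neg_mul_neg]
      calc (inner ℂ ((D * D) x) ((D * D) x) : ℂ)
          = inner ℂ ((ContinuousLinearMap.adjoint (D * D)) ((D * D) x)) x := by
            rw [ContinuousLinearMap.adjoint_inner_left]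
        _ = inner ℂ (((D * D) * (D * D)) x) x := by rw [hadj]; rfl
        _ = 0 := by rw [key, inner_zero_left]
    exact inner_self_eq_zero.mp hinner
  -- D = 0, i.e. T self-adjoint
  have hTsa : IsSelfAdjoint T := by
    have hD0 : D = 0 := by
      ext x
      have hinner : (inner ℂ (D x) (D x) : ℂ) = 0 := by
        calc (inner ℂ (D x) (D x) : ℂ)
            = inner ℂ ((ContinuousLinearMap.adjoint D) (D x)) x := by
              rw [ContinuousLinearMap.adjoint_inner_left]
          _ = inner ℂ ((-D) (D x)) x := by
              rw [← ContinuousLinearMap.star_eq_adjoint, hDstar]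
          _ = inner ℂ (-((D * D) x)) x := rfl
          _ = 0 := by rw [hX, neg_zero, inner_zero_left]
      exact inner_self_eq_zero.mp hinner
    rw [hDdef, sub_eq_zero] at hD0
    exact hD0
  -- final: T self-adjoint with T^r ≥ 0 for some odd r ⇒ T ≥ 0
  have key : ∀ r : ℕ, Odd r → (0 : H →L[ℂ] H) ≤ T ^ r → T.IsPositive := by
    intro r hodd hTr
    rw [← ContinuousLinearMap.nonneg_iff_isPositive]
    rw [StarOrderedRing.nonneg_iff_spectrum_nonneg (R := ℝ) T hTsa]
    have h1 : (0 : H →L[ℂ] H) ≤ cfc (fun x : ℝ => x ^ r) T := by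
      rwa [cfc_pow_id (R := ℝ) T r hTsa]
    rw [cfc_nonneg_iff (fun x : ℝ => x ^ r) T (by fun_prop) hTsa] at h1
    intro x hx
    exact (Odd.pow_nonneg_iff hodd).mp (h1 x hx)
  -- one of p, q is odd
  rcases Nat.even_or_odd p with hep | hop
  · have hoq : Odd q := by
      rcases Nat.even_or_odd q with heq | hoq
      · exfalso
        have h2p : 2 ∣ p := hep.two_dvd
        have h2q : 2 ∣ q := heq.two_dvd
        have h21 : 2 ∣ 1 := hco.gcd_eq_one ▸ Nat.dvd_gcd h2p h2q
        exact absurd (Nat.le_of_dvd one_pos h21) (by omega)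
      · exact hoq
    exact key q hoq hTq
  · exact key p hop hTp
end

section
/- Let T be a bounded linear operator on a complex Hilbert space H. If Re(T^k) ≥ 0 for every positive integer k, then T is positive. -/
open ContinuousLinearMap

namespace PowAcc

variable {H : Type*} [NormedAddCommGroup H] [InnerProductSpace ℂ H] [CompleteSpace H]

local notation "⟪" x ", " y "⟫" => @inner ℂ _ _ x y

lemma abs_re_inner_le (C D : H →L[ℂ] H) (hC : IsSelfAdjoint C) (hD : IsSelfAdjoint D)
    (hCpos : ∀ x, 0 ≤ (⟪C x, x⟫).re)
    (hDC : ∀ x, ‖D x‖ ≤ ‖C x‖) (x : H) :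
    |(⟪D x, x⟫).re| ≤ (⟪C x, x⟫).re := by
  have hCsym : (C : H →ₗ[ℂ] H).IsSymmetric := isSelfAdjoint_iff_isSymmetric.mp hC
  have hDsym : (D : H →ₗ[ℂ] H).IsSymmetric := isSelfAdjoint_iff_isSymmetric.mp hD
  have key : ∀ ε : ℝ, 0 < ε → |(⟪D x, x⟫).re| ≤ (⟪C x, x⟫).re + ε * ‖x‖ ^ 2 := by
    intro ε hε
    have hC0 : (0 : H →L[ℂ] H) ≤ C := by
      rw [nonneg_iff_isPositive]
      exact ⟨hCsym, fun y => by simpa [reApplyInnerSelf, RCLike.re_to_complex] using hCpos y⟩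
    have hσ : ∀ t ∈ spectrum ℝ C, (0 : ℝ) ≤ t := fun t ht =>
      spectrum_nonneg_of_nonneg hC0 ht
    set f : ℝ → ℝ := fun t => Real.sqrt (t + ε) with hf
    set g : ℝ → ℝ := fun t => (Real.sqrt (t + ε))⁻¹ with hg
    have hfc : ContinuousOn f (spectrum ℝ C) :=
      (Real.continuous_sqrt.comp (continuous_id.add continuous_const)).continuousOn
    have hfne : ∀ t ∈ spectrum ℝ C, f t ≠ 0 := by
      intro t ht
      exact ne_of_gt (Real.sqrt_pos.mpr (by linarith [hσ t ht]))
    have hgc : ContinuousOn g (spectrum ℝ C) := hfc.inv₀ hfne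
    set S : H →L[ℂ] H := cfc f C with hS
    set S' : H →L[ℂ] H := cfc g C with hS'
    have hSsa : IsSelfAdjoint S := cfc_predicate f C
    have hS'sa : IsSelfAdjoint S' := cfc_predicate g C
    have hSS' : S * S' = 1 := by
      rw [hS, hS', ← cfc_mul f g C hfc hgc]
      have : cfc (fun t => f t * g t) C = cfc (fun _ : ℝ => (1 : ℝ)) C :=
        cfc_congr fun t ht => mul_inv_cancel₀ (hfne t ht)
      rw [this]
      exact cfc_const_one ℝ C
    have hcomm : Commute S S' := cfc_commute_cfc f g C
    have hS'S : S' * S = 1 := by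
      rw [← hcomm.eq]; exact hSS'
    have hE : S * S = C + algebraMap ℝ (H →L[ℂ] H) ε := by
      rw [hS, ← cfc_mul f f C hfc hfc]
      have h1 : cfc (fun t => f t * f t) C = cfc (fun t : ℝ => t + ε) C := by
        refine cfc_congr fun t ht => ?_
        exact Real.mul_self_sqrt (by linarith [hσ t ht])
      rw [h1]
      have h2 : cfc (fun t : ℝ => t + ε) C
          = cfc (fun t : ℝ => t) C + algebraMap ℝ (H →L[ℂ] H) ε :=
        cfc_add_const ε (fun t : ℝ => t) C (continuous_id.continuousOn) hC
      rw [h2, cfc_id' ℝ C]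
    have hSsym0 : (S : H →ₗ[ℂ] H).IsSymmetric := isSelfAdjoint_iff_isSymmetric.mp hSsa
    have hSsym : ∀ u v : H, ⟪S u, v⟫ = ⟪u, S v⟫ := fun u v => hSsym0 u v
    -- pointwise bound ‖D v‖ ≤ ‖(S*S) v‖
    have hEv : ∀ v : H, ‖D v‖ ≤ ‖(S * S) v‖ := by
      intro v
      have h1 : ‖D v‖ ≤ ‖C v‖ := hDC v
      have h2 : ‖C v‖ ≤ ‖(S * S) v‖ := by
        have happ : (S * S) v = C v + ε • v := by
          rw [hE]
          simp [Algebra.algebraMap_eq_smul_one]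
        rw [happ]
        have hsq : ‖C v‖ ^ 2 ≤ ‖C v + ε • v‖ ^ 2 := by
          have hre : (0 : ℝ) ≤ RCLike.re ⟪C v, (ε : ℝ) • v⟫ := by
            rw [show ((ε : ℝ) • v) = ((ε : ℂ) • v) by simp [Complex.real_smul]]
            rw [inner_smul_right]
            simpa [RCLike.re_to_complex] using
              mul_nonneg (le_of_lt hε) (hCpos v)
          have := norm_add_sq (𝕜 := ℂ) (C v) (ε • v)
          nlinarith [sq_nonneg ‖ε • v‖, norm_nonneg (ε • v)]
        nlinarith [norm_nonneg (C v), norm_nonneg (C v + ε • v)]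
      exact h1.trans h2
    set W : H →L[ℂ] H := D * (S' * S') with hW
    have hWn : ‖W‖ ≤ 1 := by
      refine opNorm_le_bound _ zero_le_one fun w => ?_
      have h1 : (S * S) * (S' * S') = 1 := by
        rw [mul_assoc, ← mul_assoc S S' S', hSS', one_mul, hSS']
      calc ‖W w‖ = ‖D ((S' * S') w)‖ := by rw [hW]; rfl
        _ ≤ ‖(S * S) ((S' * S') w)‖ := hEv _
        _ = ‖((S * S) * (S' * S')) w‖ := rfl
        _ = ‖w‖ := by rw [h1]; simp
        _ ≤ 1 * ‖w‖ := by rw [one_mul]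
    set Y : H →L[ℂ] H := S' * (D * S') with hY
    have hYsa : IsSelfAdjoint Y := by
      rw [hY, IsSelfAdjoint]
      simp only [star_mul, hS'sa.star_eq, hD.star_eq, mul_assoc]
    have hYpow : ∀ n : ℕ, Y ^ (n + 1) = S' * (W ^ n * (D * S')) := by
      intro n
      induction n with
      | zero => simp [hY]
      | succ n ih =>
        have : Y ^ (n + 2) = Y ^ (n + 1) * Y := by rw [pow_succ]
        rw [this, ih, hY, hW, pow_succ]
        simp only [mul_assoc]
    have hWpow : ∀ n : ℕ, ‖W ^ n‖ ≤ 1 := by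
      intro n
      induction n with
      | zero =>
        rw [pow_zero]
        exact (ContinuousLinearMap.norm_id_le).trans_eq' rfl
      | succ n ih =>
        rw [pow_succ]
        calc ‖W ^ n * W‖ ≤ ‖W ^ n‖ * ‖W‖ := norm_mul_le _ _
          _ ≤ 1 * 1 := mul_le_mul ih hWn (norm_nonneg _) zero_le_one
          _ = 1 := by ring
    have hYbound : ∀ n : ℕ, ‖Y ^ (n + 1)‖ ≤ ‖S'‖ * (‖D‖ * ‖S'‖) := by
      intro n
      rw [hYpow n]
      calc ‖S' * (W ^ n * (D * S'))‖ ≤ ‖S'‖ * ‖W ^ n * (D * S')‖ := norm_mul_le _ _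
        _ ≤ ‖S'‖ * (‖W ^ n‖ * ‖D * S'‖) :=
            mul_le_mul_of_nonneg_left (norm_mul_le _ _) (norm_nonneg _)
        _ ≤ ‖S'‖ * (1 * (‖D‖ * ‖S'‖)) := by
            refine mul_le_mul_of_nonneg_left ?_ (norm_nonneg _)
            exact mul_le_mul (hWpow n) (norm_mul_le _ _) (norm_nonneg _) zero_le_one
        _ = ‖S'‖ * (‖D‖ * ‖S'‖) := by ring
    have hY1 : ‖Y‖ ≤ 1 := by
      by_contra hcon
      push_neg at hcon
      obtain ⟨m, hm⟩ := pow_unbounded_of_one_lt (‖S'‖ * (‖D‖ * ‖S'‖)) hcon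
      have h2m : ‖Y‖ ^ m ≤ ‖Y‖ ^ (2 ^ m) :=
        pow_le_pow_right₀ (le_of_lt hcon) (le_of_lt (Nat.lt_two_pow_self (n := m)))
      have hYnorm : ‖Y ^ (2 ^ m)‖ = ‖Y‖ ^ (2 ^ m) := by
        have h0 := congrArg (fun p : NNReal => (p : ℝ)) (hYsa.nnnorm_pow_two_pow m)
        simpa [NNReal.coe_pow] using h0
      have h3 : (0 : ℕ) < 2 ^ m := Nat.two_pow_pos m
      obtain ⟨j, hj⟩ : ∃ j, 2 ^ m = j + 1 := ⟨2 ^ m - 1, by omega⟩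
      have := hYbound j
      rw [← hj, hYnorm] at this
      exact absurd (hm.trans_le (h2m.trans this)) (lt_irrefl _)
    -- final computation
    have hDre : ⟪D x, x⟫ = ⟪Y (S x), S x⟫ := by
      have hYS : S * (Y * S) = D := by
        rw [hY]
        calc S * ((S' * (D * S')) * S) = (S * S') * (D * (S' * S)) := by
              simp only [mul_assoc]
          _ = D := by rw [hSS', hS'S, one_mul, mul_one]
      conv_lhs => rw [← hYS]
      have h5 : (S * (Y * S)) x = S (Y (S x)) := rfl
      rw [h5, hSsym (Y (S x)) x]
    have hnormy : ‖S x‖ ^ 2 = (⟪C x, x⟫).re + ε * ‖x‖ ^ 2 := by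
      have h1 : (⟪S x, S x⟫).re = (⟪(S * S) x, x⟫).re := by
        have h6 : ⟪(S * S) x, x⟫ = ⟪S x, S x⟫ := by
          have h7 : (S * S) x = S (S x) := rfl
          rw [h7, hSsym (S x) x]
        rw [h6]
      have h2 : (⟪(S * S) x, x⟫).re = (⟪C x, x⟫).re + ε * ‖x‖ ^ 2 := by
        rw [hE]
        have happ : (C + algebraMap ℝ (H →L[ℂ] H) ε) x = C x + ε • x := by
          simp [Algebra.algebraMap_eq_smul_one]
        rw [happ, inner_add_left]
        have hsm : ((ε : ℝ) • x : H) = ((ε : ℂ) • x : H) := by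
          rw [show ((ε : ℂ)) = algebraMap ℝ ℂ ε from rfl, algebraMap_smul]
        have : ⟪(ε : ℝ) • x, x⟫ = (ε : ℂ) * ⟪x, x⟫ := by
          rw [hsm, inner_smul_left]
          simp [Complex.conj_ofReal]
        rw [Complex.add_re, this]
        have hxx : (⟪x, x⟫).re = ‖x‖ ^ 2 := by
          simpa [RCLike.re_to_complex] using inner_self_eq_norm_sq (𝕜 := ℂ) x
        have him : (⟪x, x⟫).im = 0 := by
          rw [← RCLike.im_to_complex]
          exact inner_self_im (𝕜 := ℂ) x
        rw [Complex.mul_re, him, hxx]; simp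
      have h3 : (⟪S x, S x⟫).re = ‖S x‖ ^ 2 := by
        simpa [RCLike.re_to_complex] using inner_self_eq_norm_sq (𝕜 := ℂ) (S x)
      rw [← h3, h1, h2]
    calc |(⟪D x, x⟫).re| = |(⟪Y (S x), S x⟫).re| := by rw [hDre]
      _ ≤ ‖⟪Y (S x), S x⟫‖ := Complex.abs_re_le_norm _
      _ ≤ ‖Y (S x)‖ * ‖S x‖ := norm_inner_le_norm _ _
      _ ≤ (‖Y‖ * ‖S x‖) * ‖S x‖ := by gcongr; exact le_opNorm Y (S x)
      _ ≤ (1 * ‖S x‖) * ‖S x‖ := by gcongr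
      _ = ‖S x‖ ^ 2 := by ring
      _ = (⟪C x, x⟫).re + ε * ‖x‖ ^ 2 := hnormy
  rcases eq_or_ne x 0 with rfl | hx
  · simp
  · have hx0 : (0 : ℝ) < ‖x‖ := norm_pos_iff.mpr hx
    have hx2 : (0 : ℝ) < ‖x‖ ^ 2 := by positivity
    refine le_of_forall_pos_le_add fun ε hε => ?_
    have := key (ε / ‖x‖ ^ 2) (by positivity)
    calc |(⟪D x, x⟫).re| ≤ (⟪C x, x⟫).re + ε / ‖x‖ ^ 2 * ‖x‖ ^ 2 := this
      _ = (⟪C x, x⟫).re + ε := by field_simp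

lemma mul_re_aux (a b : ℝ) (z : ℂ) :
    (((a : ℂ) + (b : ℂ) * Complex.I) * z).re = a * z.re - b * z.im := by
  simp [Complex.mul_re, Complex.add_re, Complex.add_im]

lemma mul_im_aux (a b : ℝ) (z : ℂ) :
    (((a : ℂ) + (b : ℂ) * Complex.I) * z).im = a * z.im + b * z.re := by
  simp [Complex.mul_im, Complex.add_re, Complex.add_im]
  try ring

lemma sin_abs_le_cos {γ : ℝ} (hγ : |γ| ≤ Real.pi / 4) : |Real.sin γ| ≤ Real.cos γ := by
  have hpi := Real.pi_pos
  obtain ⟨hγ1, hγ2⟩ := abs_le.mp hγ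
  have h1 : |Real.sin γ| = Real.sin |γ| := by
    rcases le_or_gt 0 γ with hg | hg
    · rw [abs_of_nonneg hg,
        abs_of_nonneg (Real.sin_nonneg_of_nonneg_of_le_pi hg (by linarith))]
    · have hsn : 0 ≤ Real.sin (-γ) :=
        Real.sin_nonneg_of_nonneg_of_le_pi (by linarith) (by linarith)
      have hsγ : Real.sin γ ≤ 0 := by
        rw [Real.sin_neg] at hsn; linarith
      rw [abs_of_neg hg, abs_of_nonpos hsγ, ← Real.sin_neg]
  rw [h1, ← Real.cos_abs γ]
  calc Real.sin |γ| ≤ Real.sin (Real.pi / 4) :=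
        Real.sin_le_sin_of_le_of_le_pi_div_two (by linarith [abs_nonneg γ]) (by linarith) hγ
    _ = Real.cos (Real.pi / 4) := by rw [Real.sin_pi_div_four, Real.cos_pi_div_four]
    _ ≤ Real.cos |γ| := Real.cos_le_cos_of_nonneg_of_le_pi (abs_nonneg γ) (by linarith) hγ

lemma core (A : H →L[ℂ] H) (h1 : ∀ y : H, 0 ≤ (⟪A y, y⟫).re)
    (h2 : ∀ y : H, 0 ≤ (⟪(A * A) y, y⟫).re) (x : H) :
    |(⟪A x, x⟫).im| ≤ (⟪A x, x⟫).re := by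
  set C : H →L[ℂ] H := (((1:ℝ)/2 : ℝ) : ℂ) • (A + adjoint A) with hCdef
  set D : H →L[ℂ] H := (Complex.I * (((1:ℝ)/2 : ℝ) : ℂ)) • (A - adjoint A) with hDdef
  have hconj : ∀ y : H, ⟪(adjoint A) y, y⟫ = (starRingEnd ℂ) ⟪A y, y⟫ := by
    intro y
    rw [adjoint_inner_left]
    exact (inner_conj_symm y (A y)).symm
  have hCy : ∀ y : H, ⟪C y, y⟫
      = ((((1:ℝ)/2 : ℝ) : ℂ)) * (⟪A y, y⟫ + (starRingEnd ℂ) ⟪A y, y⟫) := by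
    intro y
    rw [hCdef]
    simp only [ContinuousLinearMap.smul_apply, ContinuousLinearMap.add_apply,
      inner_smul_left, inner_add_left, hconj y, Complex.conj_ofReal]
  have hDy : ∀ y : H, ⟪D y, y⟫
      = (-(Complex.I) * (((1:ℝ)/2 : ℝ) : ℂ)) * (⟪A y, y⟫ - (starRingEnd ℂ) ⟪A y, y⟫) := by
    intro y
    rw [hDdef]
    simp only [ContinuousLinearMap.smul_apply, ContinuousLinearMap.sub_apply,
      inner_smul_left, inner_sub_left, hconj y, map_mul, Complex.conj_ofReal, Complex.conj_I]
  have hCre : ∀ y : H, (⟪C y, y⟫).re = (⟪A y, y⟫).re := by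
    intro y
    rw [hCy y]
    set z := ⟪A y, y⟫
    simp [Complex.mul_re, Complex.add_re, Complex.add_im]
    ring
  have hDre : ∀ y : H, (⟪D y, y⟫).re = (⟪A y, y⟫).im := by
    intro y
    rw [hDy y]
    set z := ⟪A y, y⟫
    simp [Complex.mul_re, Complex.sub_re, Complex.sub_im, Complex.mul_im]
    ring
  have hC : IsSelfAdjoint C := by
    rw [hCdef, IsSelfAdjoint, star_smul, star_add, star_eq_adjoint, star_eq_adjoint,
      adjoint_adjoint, Complex.star_def, Complex.conj_ofReal, add_comm]
  have hD : IsSelfAdjoint D := by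
    rw [hDdef, IsSelfAdjoint, star_smul, star_sub, star_eq_adjoint, star_eq_adjoint,
      adjoint_adjoint, Complex.star_def, map_mul, Complex.conj_I, Complex.conj_ofReal]
    have h5 : ((adjoint A : H →L[ℂ] H) - A) = -(A - adjoint A) := (neg_sub _ _).symm
    rw [h5, smul_neg, ← neg_smul, neg_mul, neg_neg]
  have hDC : ∀ y : H, ‖D y‖ ≤ ‖C y‖ := by
    intro y
    have hCapp : C y = (((1:ℝ)/2 : ℝ) : ℂ) • (A y + (adjoint A) y) := by
      rw [hCdef]; rfl
    have hDapp : D y = (Complex.I * (((1:ℝ)/2 : ℝ) : ℂ)) • (A y - (adjoint A) y) := by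
      rw [hDdef]; rfl
    have hnc : ‖C y‖ = (1/2 : ℝ) * ‖A y + (adjoint A) y‖ := by
      rw [hCapp, norm_smul]
      norm_num
    have hnd : ‖D y‖ = (1/2 : ℝ) * ‖A y - (adjoint A) y‖ := by
      rw [hDapp, norm_smul]
      simp [norm_mul]
    rw [hnc, hnd]
    have hip : 0 ≤ RCLike.re ⟪A y, (adjoint A) y⟫ := by
      have h6 : ⟪A y, (adjoint A) y⟫ = ⟪(A * A) y, y⟫ := adjoint_inner_right A (A y) y
      rw [h6, RCLike.re_to_complex]
      exact h2 y
    have hadd := norm_add_sq (𝕜 := ℂ) (A y) ((adjoint A) y)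
    have hsub := norm_sub_sq (𝕜 := ℂ) (A y) ((adjoint A) y)
    have hle : ‖A y - (adjoint A) y‖ ≤ ‖A y + (adjoint A) y‖ := by
      nlinarith [norm_nonneg (A y - (adjoint A) y), norm_nonneg (A y + (adjoint A) y)]
    linarith
  have key := abs_re_inner_le C D hC hD (fun y => by rw [hCre y]; exact h1 y) hDC x
  rw [hCre x, hDre x] at key
  exact key

lemma sector (T : H →L[ℂ] H)
    (h : ∀ k : ℕ, 0 < k → ∀ x : H, 0 ≤ (⟪(T ^ k) x, x⟫).re) :
    ∀ n k : ℕ, 0 < k → ∀ (x : H) (β : ℝ),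
      |β| ≤ Real.pi / 2 * (1 - (1/2) ^ n) →
      0 ≤ Real.cos β * (⟪(T ^ k) x, x⟫).re - Real.sin β * (⟪(T ^ k) x, x⟫).im := by
  intro n
  induction n with
  | zero =>
    intro k hk x β hβ
    have hβ0 : β = 0 := by
      have h0 : |β| ≤ 0 := by simpa using hβ
      exact abs_eq_zero.mp (le_antisymm h0 (abs_nonneg β))
    subst hβ0
    simpa using h k hk x
  | succ n ih =>
    intro k hk x β hβ
    have hpi := Real.pi_pos
    have hpow_le1 : ((1:ℝ)/2) ^ n ≤ 1 := pow_le_one₀ (by norm_num) (by norm_num)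
    set φ := Real.pi / 2 * (1 - (1/2) ^ n) with hφdef
    have hφ0 : 0 ≤ φ := by
      rw [hφdef]; nlinarith
    have hsucc : Real.pi / 2 * (1 - (1/2) ^ (n+1)) = Real.pi / 4 + φ / 2 := by
      rw [hφdef]; ring
    obtain ⟨hb1, hb2⟩ := abs_le.mp hβ
    rw [hsucc] at hb1 hb2
    set γ := max (-(Real.pi/4)) (min β (Real.pi/4)) with hγdef
    set δ := β - γ with hδdef
    have hβγ : β = γ + δ := by rw [hδdef]; ring
    have hγ1 : -(Real.pi/4) ≤ γ := le_max_left _ _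
    have hγ2 : γ ≤ Real.pi/4 := max_le (by linarith) (min_le_right _ _)
    have hγa : |γ| ≤ Real.pi/4 := abs_le.mpr ⟨hγ1, hγ2⟩
    have hδa : |δ| ≤ φ / 2 := by
      rw [hδdef, hγdef]
      rcases le_total β (Real.pi/4) with h1 | h1
      · rcases le_total (-(Real.pi/4)) β with h2 | h2
        · rw [min_eq_left h1, max_eq_right h2]
          simp only [sub_self, abs_zero]
          linarith
        · rw [min_eq_left h1, max_eq_left (by linarith)]
          rw [abs_le]
          constructor <;> linarith
      · rw [min_eq_right h1, max_eq_right (by linarith)]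
        rw [abs_le]
        constructor <;> linarith
    have hδφ : |δ| ≤ φ := le_trans hδa (by linarith)
    have h2δ : |2 * δ| ≤ φ := by
      rw [abs_mul, abs_two]
      linarith [hδa]
    set c : ℂ := (Real.cos δ : ℂ) - (Real.sin δ : ℂ) * Complex.I with hcdef
    set A : H →L[ℂ] H := c • (T ^ k) with hAdef
    have hcconj : (starRingEnd ℂ) c = (Real.cos δ : ℂ) + (Real.sin δ : ℂ) * Complex.I := by
      rw [hcdef, map_sub, map_mul, Complex.conj_ofReal, Complex.conj_ofReal, Complex.conj_I]
      ring
    have hAy : ∀ y : H, ⟪A y, y⟫ = (starRingEnd ℂ) c * ⟪(T ^ k) y, y⟫ := by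
      intro y
      rw [hAdef]
      simp [inner_smul_left]
      ring
    have h1A : ∀ y : H, 0 ≤ (⟪A y, y⟫).re := by
      intro y
      rw [hAy y, hcconj, mul_re_aux]
      exact ih k hk y δ hδφ
    have hAA : A * A = (c * c) • (T ^ (2 * k)) := by
      rw [hAdef, smul_mul_smul_comm, ← pow_add, two_mul]
    have hc2 : (starRingEnd ℂ) (c * c)
        = (Real.cos (2*δ) : ℂ) + (Real.sin (2*δ) : ℂ) * Complex.I := by
      rw [map_mul, hcconj]
      have hcos2 : Real.cos (2*δ) = Real.cos δ ^ 2 - Real.sin δ ^ 2 := by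
        rw [Real.cos_two_mul]
        nlinarith [Real.sin_sq_add_cos_sq δ]
      have hsin2 : Real.sin (2*δ) = 2 * Real.sin δ * Real.cos δ := Real.sin_two_mul δ
      rw [hcos2, hsin2]
      apply Complex.ext <;>
        simp only [Complex.mul_re, Complex.mul_im, Complex.add_re, Complex.add_im,
          Complex.sub_re, Complex.sub_im, Complex.ofReal_re, Complex.ofReal_im,
          Complex.I_re, Complex.I_im] <;> ring
    have h2A : ∀ y : H, 0 ≤ (⟪(A * A) y, y⟫).re := by
      intro y
      rw [hAA]
      have h7 : ⟪((c * c) • (T ^ (2*k))) y, y⟫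
          = (starRingEnd ℂ) (c * c) * ⟪(T ^ (2*k)) y, y⟫ := by
        simp [inner_smul_left]
        ring
      rw [h7, hc2, mul_re_aux]
      exact ih (2*k) (by omega) y (2*δ) h2δ
    have hcore := core A h1A h2A x
    rw [hAy x, hcconj] at hcore
    set u := ⟪(T ^ k) x, x⟫ with hu
    rw [mul_re_aux, mul_im_aux] at hcore
    have hcosγ : 0 ≤ Real.cos γ := le_trans (abs_nonneg _) (sin_abs_le_cos hγa)
    have h9 : Real.sin γ * (Real.cos δ * u.im + Real.sin δ * u.re)
        ≤ Real.cos γ * (Real.cos δ * u.re - Real.sin δ * u.im) := by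
      calc Real.sin γ * (Real.cos δ * u.im + Real.sin δ * u.re)
          ≤ |Real.sin γ * (Real.cos δ * u.im + Real.sin δ * u.re)| := le_abs_self _
        _ = |Real.sin γ| * |Real.cos δ * u.im + Real.sin δ * u.re| := abs_mul _ _
        _ ≤ Real.cos γ * (Real.cos δ * u.re - Real.sin δ * u.im) :=
            mul_le_mul (sin_abs_le_cos hγa) hcore (abs_nonneg _) hcosγ
    rw [hβγ, Real.cos_add, Real.sin_add]
    nlinarith [h9]

end PowAcc

/-- If `Re(T^k) ≥ 0` for every positive integer `k`, then `T` is positive. -/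
theorem positive_of_all_powers_accretive
    {H : Type*} [NormedAddCommGroup H] [InnerProductSpace ℂ H] [CompleteSpace H]
    (T : H →L[ℂ] H)
    (h : ∀ k : ℕ, 0 < k → ∀ x : H, 0 ≤ (inner ℂ ((T ^ k) x) x : ℂ).re) :
    T.IsPositive := by
  have hpi := Real.pi_pos
  have him : ∀ x : H, (inner ℂ (T x) x : ℂ).im = 0 := by
    intro x
    have hure : 0 ≤ (inner ℂ (T x) x : ℂ).re := by
      have := h 1 one_pos x
      simpa [pow_one] using this
    set u : ℂ := inner ℂ (T x) x with hu
    have hkey : ∀ n : ℕ, |u.im| ≤ (Real.pi * u.re + 1) * (1/2) ^ n := by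
      intro n
      set ψ := Real.pi / 2 * ((1:ℝ)/2) ^ (n+1) with hψdef
      have hpow_pos : (0:ℝ) < ((1:ℝ)/2) ^ (n+1) := by positivity
      have hψpos : 0 < ψ := by rw [hψdef]; positivity
      have hψle : ψ ≤ Real.pi / 4 := by
        rw [hψdef]
        have h8 : ((1:ℝ)/2) ^ (n+1) ≤ (1:ℝ)/2 := by
          calc ((1:ℝ)/2) ^ (n+1) ≤ ((1:ℝ)/2) ^ 1 :=
                pow_le_pow_of_le_one (by norm_num) (by norm_num) (by omega)
            _ = (1:ℝ)/2 := pow_one _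
        nlinarith
      have hψ1 : ψ ≤ 1 := by
        have := Real.pi_le_four
        linarith
      have hφabs : |Real.pi / 2 - ψ| ≤ Real.pi / 2 * (1 - (1/2) ^ (n+1)) := by
        have heq : Real.pi / 2 - ψ = Real.pi / 2 * (1 - (1/2) ^ (n+1)) := by
          rw [hψdef]; ring
        rw [abs_of_nonneg (by linarith), heq]
      have h₁ := PowAcc.sector T h (n+1) 1 one_pos x (Real.pi / 2 - ψ) hφabs
      have h₂ := PowAcc.sector T h (n+1) 1 one_pos x (-(Real.pi / 2 - ψ)) (by rwa [abs_neg])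
      rw [pow_one] at h₁ h₂
      rw [Real.cos_pi_div_two_sub, Real.sin_pi_div_two_sub] at h₁
      rw [Real.cos_neg, Real.sin_neg, Real.cos_pi_div_two_sub, Real.sin_pi_div_two_sub] at h₂
      have hsinle : Real.sin ψ ≤ ψ := Real.sin_le hψpos.le
      have hcosge : (1:ℝ)/2 ≤ Real.cos ψ := by
        have := Real.one_sub_sq_div_two_le_cos (x := ψ)
        nlinarith
      have hsin_nonneg : 0 ≤ Real.sin ψ :=
        Real.sin_nonneg_of_nonneg_of_le_pi hψpos.le (by linarith)
      have hmul : Real.sin ψ * u.re ≤ ψ * u.re := mul_le_mul_of_nonneg_right hsinle hure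
      have habs : Real.cos ψ * |u.im| ≤ ψ * u.re := by
        rcases abs_cases u.im with ⟨he, _⟩ | ⟨he, _⟩ <;> rw [he] <;> nlinarith
      have hψim : |u.im| ≤ 2 * ψ * u.re := by
        have h10 : (1/2 : ℝ) * |u.im| ≤ Real.cos ψ * |u.im| :=
          mul_le_mul_of_nonneg_right hcosge (abs_nonneg u.im)
        nlinarith [abs_nonneg u.im]
      have h2ψ : 2 * ψ = Real.pi * ((1:ℝ)/2) ^ (n+1) := by rw [hψdef]; ring
      have hfin : 2 * ψ * u.re ≤ (Real.pi * u.re + 1) * (1/2) ^ n := by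
        rw [h2ψ]
        have hhalf : Real.pi * ((1:ℝ)/2) ^ (n+1) = Real.pi * ((1:ℝ)/2) ^ n * (1/2) := by ring
        have hpn : (0:ℝ) ≤ ((1:ℝ)/2) ^ n := by positivity
        nlinarith [mul_nonneg (mul_nonneg hpi.le hpn) hure]
      linarith
    by_contra him0
    have habs0 : 0 < |u.im| := abs_pos.mpr him0
    have hK : (0:ℝ) < Real.pi * u.re + 1 := by nlinarith
    obtain ⟨m, hm⟩ := exists_pow_lt_of_lt_one (x := |u.im| / (Real.pi * u.re + 1))
      (by positivity) (show (1:ℝ)/2 < 1 by norm_num)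
    have hk2 := hkey m
    have hm' : (Real.pi * u.re + 1) * ((1:ℝ)/2) ^ m < |u.im| := by
      have := (lt_div_iff₀ hK).mp hm
      linarith
    linarith
  constructor
  · rw [LinearMap.isSymmetric_iff_inner_map_self_real]
    intro v
    exact Complex.conj_eq_iff_im.mpr (him v)
  · intro x
    have := h 1 one_pos x
    simpa [ContinuousLinearMap.reApplyInnerSelf, RCLike.re_to_complex, pow_one] using this
end

section
/- Let T be a bounded linear operator on a complex Hilbert space H and let n be a positive integer. If Re(T^(2^k)) ≥ 0 for every k ∈ {0, 1, …, n}, then −Re T ≤ cot(π/2^(n+1)) · Im T ≤ Re T in the sense of self-adjoint operators, i.e., |cot(π/2^(n+1)) · Im⟨Tx, x⟩| ≤ Re⟨Tx, x⟩ for all x ∈ H. -/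
open scoped NNReal ENNReal
set_option linter.unusedSectionVars false
set_option maxHeartbeats 1000000

section Abstract
variable {A : Type*} [CStarAlgebra A] [Nontrivial A] [PartialOrder A] [StarOrderedRing A]

lemma norm_mul_sq_le' (y z : A) (hy : IsSelfAdjoint y) (hz : IsSelfAdjoint z) :
    ‖y * z‖ ^ 2 ≤ ‖y * y * (z * z)‖ := by
  have hp0 : (0 : A) ≤ star (y * z) * (y * z) := star_mul_self_nonneg _
  have hpsa : IsSelfAdjoint (star (y * z) * (y * z)) := .of_nonneg hp0
  have hp : star (y * z) * (y * z) = z * (y * (y * z)) := by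
    simp [star_mul, hy.star_eq, hz.star_eq, mul_assoc]
  have hrad : spectralRadius ℂ (star (y * z) * (y * z)) = ‖star (y * z) * (y * z)‖₊ :=
    hpsa.spectralRadius_eq_nnnorm
  have hbound : spectralRadius ℂ (star (y * z) * (y * z)) ≤ (‖y * y * (z * z)‖₊ : ℝ≥0∞) := by
    rw [spectralRadius]
    refine iSup₂_le fun k hk => ?_
    rcases eq_or_ne k 0 with rfl | hk0
    · simp
    · have hk' : k ∈ spectrum ℂ (y * (y * z) * z) := by
        have : k ∈ spectrum ℂ (z * (y * (y * z))) \ {0} := by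
          rw [← hp]; exact ⟨hk, hk0⟩
        rw [spectrum.nonzero_mul_comm] at this
        exact this.1
      have : k ∈ spectrum ℂ (y * y * (z * z)) := by
        rwa [show y * (y * z) * z = y * y * (z * z) by simp [mul_assoc]] at hk'
      exact_mod_cast ENNReal.coe_le_coe.mpr (show ‖k‖₊ ≤ ‖y * y * (z * z)‖₊ from spectrum.norm_le_norm_of_mem this)
  have : (‖star (y * z) * (y * z)‖₊ : ℝ≥0∞) ≤ (‖y * y * (z * z)‖₊ : ℝ≥0∞) := hrad ▸ hbound
  have hle : ‖star (y * z) * (y * z)‖ ≤ ‖y * y * (z * z)‖ := by exact_mod_cast this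
  calc ‖y * z‖ ^ 2 = ‖star (y * z) * (y * z)‖ := by
        rw [CStarRing.norm_star_mul_self, sq]
    _ ≤ _ := hle

lemma sqrt_le_sqrt_unit' {a : A} {b : Aˣ} (ha : 0 ≤ a) (hb : 0 ≤ (b : A)) (hab : a ≤ (b : A)) :
    CFC.sqrt a ≤ CFC.sqrt (b : A) := by
  set s := CFC.sqrt (b : A) with hs
  have hs0 : (0 : A) ≤ s := CFC.sqrt_nonneg _
  have hss : s * s = (b : A) := CFC.sqrt_mul_sqrt_self _ hb
  have hcomm : Commute s (b : A) := by
    rw [← hss]; exact (Commute.refl s).mul_right (Commute.refl s)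
  have hcomm' : Commute s ((↑b⁻¹ : A)) := hcomm.units_inv_right
  have h1 : s * (s * (↑b⁻¹ : A)) = 1 := by rw [← mul_assoc, hss]; exact b.mul_inv
  have h2 : (s * (↑b⁻¹ : A)) * s = 1 := by
    rw [hcomm'.eq, mul_assoc, hss]; exact b.inv_mul
  let u : Aˣ := ⟨s, s * (↑b⁻¹ : A), h1, h2⟩
  have hu : (↑u : A) = s := rfl
  have huu : u * u = b := Units.ext hss
  have huinv : (↑u⁻¹ : A) = CFC.sqrt ((↑b⁻¹ : A)) := by
    refine (CFC.sqrt_unique ?_ ?_).symm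
    · show (↑u⁻¹ : A) * (↑u⁻¹ : A) = (↑b⁻¹ : A)
      rw [← Units.val_mul, ← mul_inv_rev, huu]
    · exact CFC.inv_nonneg_of_nonneg u (hu ▸ hs0)
  have hsqa : 0 ≤ CFC.sqrt a := CFC.sqrt_nonneg _
  show CFC.sqrt a ≤ (↑u : A)
  rw [le_iff_norm_sqrt_mul_sqrt_inv hsqa (hu ▸ hs0)]
  have hkey : ‖CFC.sqrt (CFC.sqrt a) * CFC.sqrt (↑u⁻¹ : A)‖ ^ 2 ≤
      ‖CFC.sqrt a * CFC.sqrt ((↑b⁻¹ : A))‖ := by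
    have e1 : CFC.sqrt (CFC.sqrt a) * CFC.sqrt (CFC.sqrt a) = CFC.sqrt a :=
      CFC.sqrt_mul_sqrt_self _ hsqa
    have e2 : CFC.sqrt (↑u⁻¹ : A) * CFC.sqrt (↑u⁻¹ : A) = (↑u⁻¹ : A) :=
      CFC.sqrt_mul_sqrt_self _ (huinv ▸ CFC.sqrt_nonneg _)
    calc ‖CFC.sqrt (CFC.sqrt a) * CFC.sqrt (↑u⁻¹ : A)‖ ^ 2
        ≤ ‖CFC.sqrt (CFC.sqrt a) * CFC.sqrt (CFC.sqrt a) *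
            (CFC.sqrt (↑u⁻¹ : A) * CFC.sqrt (↑u⁻¹ : A))‖ :=
          norm_mul_sq_le' _ _ (.of_nonneg (CFC.sqrt_nonneg _)) (.of_nonneg (CFC.sqrt_nonneg _))
      _ = _ := by rw [e1, e2, huinv]
  have hab' : ‖CFC.sqrt a * CFC.sqrt ((↑b⁻¹ : A))‖ ≤ 1 :=
    (le_iff_norm_sqrt_mul_sqrt_inv ha hb).mp hab
  have h3 := hkey.trans hab'
  nlinarith [norm_nonneg (CFC.sqrt (CFC.sqrt a) * CFC.sqrt (↑u⁻¹ : A))]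


lemma algebraMap_real_nonneg' (r : ℝ) (hr : 0 ≤ r) : (0 : A) ≤ algebraMap ℝ A r := by
  have hsa : star (algebraMap ℝ A (Real.sqrt r)) = algebraMap ℝ A (Real.sqrt r) := by
    rw [← algebraMap_star_comm, star_trivial]
  calc (0 : A) ≤ star (algebraMap ℝ A (Real.sqrt r)) * algebraMap ℝ A (Real.sqrt r) :=
        star_mul_self_nonneg _
    _ = algebraMap ℝ A r := by rw [hsa, ← map_mul, Real.mul_self_sqrt hr]

lemma sqrt_eq_cfc_real_sqrt' {a : A} (ha : 0 ≤ a) : CFC.sqrt a = cfc Real.sqrt a := by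
  refine CFC.sqrt_unique ?_ (cfc_nonneg fun t _ => Real.sqrt_nonneg t)
  have hsp : ∀ t ∈ spectrum ℝ a, 0 ≤ t := fun t ht => spectrum_nonneg_of_nonneg ha ht
  calc cfc Real.sqrt a * cfc Real.sqrt a = cfc (fun t => Real.sqrt t * Real.sqrt t) a :=
        (cfc_mul _ _ a).symm
    _ = cfc (fun t : ℝ => t) a := cfc_congr fun t ht => Real.mul_self_sqrt (hsp t ht)
    _ = a := cfc_id ℝ a

lemma sqrt_le_sqrt' {a b : A} (ha : 0 ≤ a) (hab : a ≤ b) : CFC.sqrt a ≤ CFC.sqrt b := by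
  have hb : 0 ≤ b := ha.trans hab
  have hbsa : IsSelfAdjoint b := .of_nonneg hb
  have key : ∀ δ : ℝ, 0 < δ → CFC.sqrt a ≤ CFC.sqrt b + algebraMap ℝ A δ := by
    intro δ hδ
    set ε : ℝ := δ ^ 2 with hεdef
    have hε0 : 0 < ε := by positivity
    have hδε : Real.sqrt ε = δ := by rw [hεdef, Real.sqrt_sq hδ.le]
    have halg : (0 : A) ≤ algebraMap ℝ A ε := algebraMap_real_nonneg' ε hε0.le
    have hbe : 0 ≤ b + algebraMap ℝ A ε := add_nonneg hb halg
    have hunit : IsUnit (b + algebraMap ℝ A ε) := by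
      refine CStarAlgebra.isUnit_of_le (algebraMap ℝ A ε) (b := b + algebraMap ℝ A ε) ?_
        (((isUnit_iff_ne_zero.mpr hε0.ne').map (algebraMap ℝ A)).isStrictlyPositive halg)
      exact le_add_of_nonneg_left hb
    obtain ⟨u, hu⟩ := hunit
    have habe : a ≤ (u : A) := by rw [hu]; exact hab.trans (le_add_of_nonneg_right halg)
    have h1 : CFC.sqrt a ≤ CFC.sqrt ((u : A)) := sqrt_le_sqrt_unit' ha (hu ▸ hbe) habe
    have h2 : CFC.sqrt ((u : A)) ≤ CFC.sqrt b + algebraMap ℝ A δ := by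
      rw [hu, sqrt_eq_cfc_real_sqrt' hbe, sqrt_eq_cfc_real_sqrt' hb]
      have hbe' : b + algebraMap ℝ A ε = cfc (fun t : ℝ => t + ε) b := by
        rw [cfc_add _ _ _ (by fun_prop) (by fun_prop)]
        rw [cfc_id' ℝ b, cfc_const ε b]
      rw [hbe', ← cfc_comp' Real.sqrt (· + ε) b (by fun_prop) (by fun_prop)]
      have hconst : algebraMap ℝ A δ = cfc (fun _ : ℝ => δ) b := (cfc_const δ b).symm
      rw [hconst, ← cfc_add _ _ _ (by fun_prop) (by fun_prop)]
      refine cfc_mono fun t ht => ?_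
      have ht0 : 0 ≤ t := spectrum_nonneg_of_nonneg hb ht
      have : Real.sqrt (t + ε) ≤ Real.sqrt t + Real.sqrt ε := by
        have h4 : t + ε ≤ (Real.sqrt t + Real.sqrt ε) ^ 2 := by
          nlinarith [Real.sq_sqrt ht0, Real.sq_sqrt hε0.le, Real.sqrt_nonneg t,
            Real.sqrt_nonneg ε]
        calc Real.sqrt (t + ε) ≤ Real.sqrt ((Real.sqrt t + Real.sqrt ε) ^ 2) :=
              Real.sqrt_le_sqrt h4
          _ = Real.sqrt t + Real.sqrt ε := Real.sqrt_sq (by positivity)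
      simpa [hδε] using this
    exact h1.trans h2
  have htendsto : Filter.Tendsto (fun δ : ℝ => CFC.sqrt b + algebraMap ℝ A δ)
      (nhdsWithin 0 (Set.Ioi 0)) (nhds (CFC.sqrt b)) := by
    have : Filter.Tendsto (fun δ : ℝ => CFC.sqrt b + algebraMap ℝ A δ)
        (nhds 0) (nhds (CFC.sqrt b + algebraMap ℝ A 0)) := by
      refine Filter.Tendsto.const_add _ ?_
      simp only [Algebra.algebraMap_eq_smul_one]
      simpa using (continuous_algebraMap ℝ A).tendsto 0
    simpa using this.mono_left nhdsWithin_le_nhds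
  exact ge_of_tendsto htendsto <|
    eventually_nhdsWithin_of_forall fun δ hδ => key δ hδ

lemma le_sqrt_mul_self' {b : A} (hb : IsSelfAdjoint b) : b ≤ CFC.sqrt (b * b) := by
  have hc0 : (0 : A) ≤ cfc (fun t : ℝ => |t|) b := cfc_nonneg fun t _ => abs_nonneg t
  have hcc : cfc (fun t : ℝ => |t|) b * cfc (fun t : ℝ => |t|) b = b * b := by
    calc cfc (fun t : ℝ => |t|) b * cfc (fun t : ℝ => |t|) b
        = cfc (fun t : ℝ => |t| * |t|) b := (cfc_mul _ _ b).symm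
      _ = cfc (fun t : ℝ => t * t) b := cfc_congr fun t _ => abs_mul_abs_self t
      _ = b * b := by rw [cfc_mul _ _ b, cfc_id' ℝ b]
  have hsqrt : CFC.sqrt (b * b) = cfc (fun t : ℝ => |t|) b := CFC.sqrt_unique hcc hc0
  rw [hsqrt]
  conv_lhs => rw [← cfc_id' ℝ b]
  exact cfc_mono fun t _ => le_abs_self t

lemma le_of_sq_le_sq' {a b : A} (ha : 0 ≤ a) (hb : IsSelfAdjoint b)
    (h : b * b ≤ a * a) : b ≤ a := by
  have hbb : (0 : A) ≤ b * b := by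
    have := star_mul_self_nonneg b
    rwa [hb.star_eq] at this
  calc b ≤ CFC.sqrt (b * b) := le_sqrt_mul_self' hb
    _ ≤ CFC.sqrt (a * a) := sqrt_le_sqrt' hbb h
    _ = a := CFC.sqrt_mul_self a ha

end Abstract

section Hilbert
variable {H : Type*} [NormedAddCommGroup H] [InnerProductSpace ℂ H] [CompleteSpace H]
  [Nontrivial H]

instance : Nontrivial (H →L[ℂ] H) := by
  refine nontrivial_of_ne 1 0 fun hcontra => ?_
  obtain ⟨x, hx⟩ := exists_ne (0 : H)
  exact hx (by calc x = (1 : H →L[ℂ] H) x := rfl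
    _ = (0 : H →L[ℂ] H) x := by rw [hcontra]
    _ = 0 := rfl)

local notation "A" => H →L[ℂ] H

noncomputable def rotRe (φ : ℝ) (S : A) : A :=
  Complex.exp (φ * Complex.I) • S + star (Complex.exp (φ * Complex.I) • S)

lemma rotRe_zero (S : A) : rotRe 0 S = S + star S := by
  simp [rotRe]

lemma exp_I_eq (φ : ℝ) : Complex.exp (φ * Complex.I) =
    Complex.ofReal (Real.cos φ) + Complex.ofReal (Real.sin φ) * Complex.I := by
  rw [Complex.exp_mul_I]
  simp [Complex.ofReal_cos, Complex.ofReal_sin]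

lemma conj_mul_re (c z : ℂ) :
    ((starRingEnd ℂ) c * z + c * (starRingEnd ℂ) z).re = 2 * (c.re * z.re + c.im * z.im) := by
  simp [Complex.add_re, Complex.mul_re, Complex.conj_re, Complex.conj_im]
  ring

lemma pos_of_inner (M : A) (hM : ∀ x : H, 0 ≤ (inner ℂ (M x) x : ℂ).re) :
    0 ≤ M + star M := by
  rw [ContinuousLinearMap.nonneg_iff_isPositive]
  refine ⟨(IsSelfAdjoint.add_star_self M).isSymmetric, fun x => ?_⟩
  have hsym : (inner ℂ x (M x) : ℂ).re = (inner ℂ (M x) x : ℂ).re := by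
    simpa using inner_re_symm (𝕜 := ℂ) x (M x)
  have hcalc : (M + star M).reApplyInnerSelf x = 2 * (inner ℂ (M x) x : ℂ).re := by
    simp only [ContinuousLinearMap.reApplyInnerSelf, ContinuousLinearMap.add_apply,
      inner_add_left, map_add, ContinuousLinearMap.star_eq_adjoint,
      ContinuousLinearMap.adjoint_inner_left, RCLike.re_to_complex]
    rw [hsym]; ring
  rw [hcalc]
  linarith [hM x]

lemma inner_rotRe_nonneg {φ : ℝ} {T : A} (h : 0 ≤ rotRe φ T) (x : H) :
    0 ≤ Real.cos φ * (inner ℂ (T x) x : ℂ).re + Real.sin φ * (inner ℂ (T x) x : ℂ).im := by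
  have h2 := (ContinuousLinearMap.nonneg_iff_isPositive _ |>.mp h).2 x
  set c : ℂ := Complex.exp (φ * Complex.I) with hc
  set z : ℂ := inner ℂ (T x) x with hz
  have hconj : (inner ℂ x (T x) : ℂ) = (starRingEnd ℂ) z := by
    rw [hz, inner_conj_symm]
  have hcalc : (rotRe φ T).reApplyInnerSelf x
      = ((starRingEnd ℂ) c * z + c * (starRingEnd ℂ) z).re := by
    simp only [rotRe, ContinuousLinearMap.reApplyInnerSelf, ContinuousLinearMap.add_apply,
      star_smul, RCLike.star_def, ContinuousLinearMap.smul_apply, inner_add_left,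
      inner_smul_left, map_add, ContinuousLinearMap.star_eq_adjoint,
      ContinuousLinearMap.adjoint_inner_left, RCLike.re_to_complex, RingHom.coe_coe,
      RingHomCompTriple.comp_apply, RingHom.id_apply, starRingEnd_self_apply]
    rw [hconj, ← hz, ← hc, Complex.add_re]
  rw [hcalc, conj_mul_re] at h2
  have hre : c.re = Real.cos φ := by
    rw [hc, exp_I_eq]
    simp only [Complex.add_re, Complex.ofReal_re, Complex.mul_re, Complex.I_re,
      Complex.ofReal_im, Complex.I_im]
    ring
  have him : c.im = Real.sin φ := by
    rw [hc, exp_I_eq]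
    simp only [Complex.add_im, Complex.ofReal_im, Complex.mul_im, Complex.I_re,
      Complex.ofReal_re, Complex.I_im]
    ring
  rw [hre, him] at h2
  linarith

lemma real_smul_nonneg {r : ℝ} (hr : 0 ≤ r) {M : A} (hM : 0 ≤ M) :
    0 ≤ (r : ℂ) • M := by
  have hself : star ((Real.sqrt r : ℂ) • (1 : A)) = (Real.sqrt r : ℂ) • (1 : A) := by
    rw [star_smul, star_one, RCLike.star_def, Complex.conj_ofReal]
  have : (r : ℂ) • M = star ((Real.sqrt r : ℂ) • (1 : A)) * M * ((Real.sqrt r : ℂ) • (1 : A)) := by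
    rw [hself, smul_mul_assoc, one_mul, mul_smul_comm, mul_one, smul_smul,
      ← Complex.ofReal_mul, Real.mul_self_sqrt hr]
  rw [this]
  exact star_left_conjugate_nonneg hM _

lemma key_quarter (S : A) (h1 : 0 ≤ S + star S) (h2 : 0 ≤ S * S + star (S * S))
    {φ : ℝ} (hφ : |φ| ≤ Real.pi / 4) : 0 ≤ rotRe φ S := by
  set a : A := S + star S with ha
  set b : A := Complex.I • (star S - S) with hb
  have hbb : b * b = -((star S - S) * (star S - S)) := by
    rw [hb, smul_mul_assoc, mul_smul_comm, smul_smul, Complex.I_mul_I, neg_one_smul]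
  have hident : a * a - b * b = (S * S + star (S * S)) + (S * S + star (S * S)) := by
    rw [ha, hbb, star_mul]
    noncomm_ring
  have hsq : b * b ≤ a * a := by
    rw [← sub_nonneg, hident]
    exact add_nonneg h2 h2
  have hbsa : IsSelfAdjoint b := by
    rw [hb, IsSelfAdjoint, star_smul, star_sub, star_star, RCLike.star_def, Complex.conj_I,
      neg_smul, ← smul_neg, neg_sub]
  have hble : b ≤ a := le_of_sq_le_sq' h1 hbsa hsq
  have hnble : -b ≤ a := by
    refine le_of_sq_le_sq' h1 hbsa.neg ?_
    rwa [neg_mul_neg]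
  have hrot : rotRe φ S = (((Real.cos φ + Real.sin φ) / 2 : ℝ) : ℂ) • (a - b)
      + (((Real.cos φ - Real.sin φ) / 2 : ℝ) : ℂ) • (a + b) := by
    rw [rotRe, ha, hb, exp_I_eq φ, star_smul, RCLike.star_def]
    simp only [map_add, map_mul, Complex.conj_ofReal, Complex.conj_I]
    push_cast
    module
  have hc1 : 0 ≤ (Real.cos φ + Real.sin φ) / 2 := by
    have h := Real.cos_nonneg_of_mem_Icc (x := φ - Real.pi / 4) ?_
    · rw [Real.cos_sub, Real.cos_pi_div_four, Real.sin_pi_div_four] at h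
      nlinarith [Real.sqrt_nonneg 2, Real.sq_sqrt (by norm_num : (0:ℝ) ≤ 2),
        Real.sqrt_pos.mpr (by norm_num : (0:ℝ) < 2)]
    · rw [abs_le] at hφ
      constructor <;> [linarith [Real.pi_pos]; linarith [Real.pi_pos]]
  have hc2 : 0 ≤ (Real.cos φ - Real.sin φ) / 2 := by
    have h := Real.cos_nonneg_of_mem_Icc (x := φ + Real.pi / 4) ?_
    · rw [Real.cos_add, Real.cos_pi_div_four, Real.sin_pi_div_four] at h
      nlinarith [Real.sqrt_nonneg 2, Real.sq_sqrt (by norm_num : (0:ℝ) ≤ 2),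
        Real.sqrt_pos.mpr (by norm_num : (0:ℝ) < 2)]
    · rw [abs_le] at hφ
      constructor <;> [linarith [Real.pi_pos]; linarith [Real.pi_pos]]
  rw [hrot]
  have p1 : 0 ≤ a - b := sub_nonneg.mpr hble
  have p2 : 0 ≤ a + b := by simpa using add_le_add_left hnble b
  have q1 : 0 ≤ (((Real.cos φ + Real.sin φ) / 2 : ℝ) : ℂ) • (a - b) := real_smul_nonneg hc1 p1
  have q2 : 0 ≤ (((Real.cos φ - Real.sin φ) / 2 : ℝ) : ℂ) • (a + b) := real_smul_nonneg hc2 p2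
  exact add_nonneg q1 q2

lemma rotRe_shift (γ ψ : ℝ) (U : A) :
    rotRe γ (Complex.exp (ψ * Complex.I) • U) = rotRe (γ + ψ) U := by
  have hsm : Complex.exp (γ * Complex.I) • (Complex.exp (ψ * Complex.I) • U)
      = Complex.exp ((↑(γ + ψ) : ℂ) * Complex.I) • U := by
    rw [smul_smul, ← Complex.exp_add]
    push_cast
    ring_nf
  rw [rotRe, rotRe, hsm]

lemma sq_exp_smul (ψ : ℝ) (U : A) :
    (Complex.exp (ψ * Complex.I) • U) * (Complex.exp (ψ * Complex.I) • U)
      = Complex.exp ((↑(2 * ψ) : ℂ) * Complex.I) • (U * U) := by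
  rw [smul_mul_assoc, mul_smul_comm, smul_smul, ← Complex.exp_add]
  push_cast
  ring_nf

lemma sect_step (U : A) {c : ℝ} (hc : 0 ≤ c) (hc' : c ≤ Real.pi / 2)
    (hU : 0 ≤ U + star U) (hU2 : ∀ ψ : ℝ, |ψ| ≤ c → 0 ≤ rotRe ψ (U * U)) :
    ∀ φ : ℝ, |φ| ≤ c / 2 + Real.pi / 4 → 0 ≤ rotRe φ U := by
  have hπ := Real.pi_pos
  have stage1 : ∀ γ : ℝ, |γ| ≤ Real.pi / 4 → 0 ≤ rotRe γ U := by
    intro γ hγ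
    have h2 : 0 ≤ U * U + star (U * U) := by
      have := hU2 0 (by simpa using hc)
      rwa [rotRe_zero] at this
    exact key_quarter U hU h2 hγ
  intro φ hφ
  obtain ⟨hφ1, hφ2⟩ := abs_le.mp hφ
  set ψ := min (c / 2) (max (-(c / 2)) φ) with hψdef
  have hψ1 : -(c / 2) ≤ ψ := le_min (by linarith) (le_max_left _ _)
  have hψ2 : ψ ≤ c / 2 := min_le_left _ _
  have hψabs : |ψ| ≤ c / 2 := abs_le.mpr ⟨hψ1, hψ2⟩
  have hγabs : |φ - ψ| ≤ Real.pi / 4 := by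
    rcases le_total φ (-(c / 2)) with h1 | h1
    · have : ψ = -(c / 2) := by
        rw [hψdef, max_eq_left h1]; exact min_eq_right (by linarith)
      rw [this]; rw [abs_le]; constructor <;> linarith
    · rcases le_total φ (c / 2) with h2 | h2
      · have : ψ = φ := by rw [hψdef, max_eq_right h1]; exact min_eq_right h2
        rw [this]; simpa using (by positivity : (0:ℝ) ≤ Real.pi / 4)
      · have : ψ = c / 2 := by
          rw [hψdef, max_eq_right h1]; exact min_eq_left h2
        rw [this]; rw [abs_le]; constructor <;> linarith
  have hS1 : 0 ≤ rotRe ψ U := stage1 ψ (hψabs.trans (by linarith))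
  have hS2 : 0 ≤ (Complex.exp (ψ * Complex.I) • U) * (Complex.exp (ψ * Complex.I) • U)
      + star ((Complex.exp (ψ * Complex.I) • U) * (Complex.exp (ψ * Complex.I) • U)) := by
    rw [sq_exp_smul]
    have habs2 : |2 * ψ| ≤ c := by rw [abs_mul, abs_two]; linarith
    exact hU2 (2 * ψ) habs2
  have := key_quarter (Complex.exp (ψ * Complex.I) • U) hS1 hS2 hγabs
  rwa [rotRe_shift, sub_add_cancel] at this

lemma sect_induction (T : A) (n : ℕ)
    (h : ∀ k : ℕ, k ≤ n → ∀ x : H, 0 ≤ (inner ℂ ((T ^ (2 ^ k)) x) x : ℂ).re) :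
    ∀ m, m ≤ n → ∀ φ : ℝ, |φ| ≤ Real.pi / 2 - Real.pi / 2 ^ (m + 1) →
      0 ≤ rotRe φ (T ^ (2 ^ (n - m))) := by
  have hπ := Real.pi_pos
  intro m
  induction m with
  | zero =>
    intro _ φ hφ
    have hφ0 : φ = 0 := by
      have h1 := abs_nonneg φ
      have h2 : Real.pi / 2 - Real.pi / 2 ^ (0 + 1) = 0 := by norm_num
      rw [h2] at hφ
      have := abs_eq_zero.mp (le_antisymm hφ h1)
      exact this
    subst hφ0
    rw [rotRe_zero]
    exact pos_of_inner _ (h n le_rfl)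
  | succ m ih =>
    intro hm φ hφ
    have hm' : m ≤ n := Nat.le_of_succ_le hm
    have hUU : T ^ (2 ^ (n - m - 1)) * T ^ (2 ^ (n - m - 1)) = T ^ (2 ^ (n - m)) := by
      rw [← pow_add]
      congr 1
      have h1 : n - m = n - m - 1 + 1 := by omega
      conv_rhs => rw [h1]
      rw [pow_succ, mul_two]
    have h2le : (2 : ℝ) ≤ 2 ^ (m + 1) := by
      calc (2 : ℝ) = 2 ^ 1 := (pow_one 2).symm
        _ ≤ 2 ^ (m + 1) := by
          apply pow_le_pow_right₀ (by norm_num) (by omega)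
    have hc : 0 ≤ Real.pi / 2 - Real.pi / 2 ^ (m + 1) := by
      have : Real.pi / 2 ^ (m + 1) ≤ Real.pi / 2 := by
        apply div_le_div_of_nonneg_left hπ.le (by norm_num) h2le
      linarith
    have hc' : Real.pi / 2 - Real.pi / 2 ^ (m + 1) ≤ Real.pi / 2 := by
      have : 0 ≤ Real.pi / 2 ^ (m + 1) := by positivity
      linarith
    have hU : 0 ≤ T ^ (2 ^ (n - m - 1)) + star (T ^ (2 ^ (n - m - 1))) :=
      pos_of_inner _ (h (n - m - 1) (by omega))
    have hU2 : ∀ ψ : ℝ, |ψ| ≤ Real.pi / 2 - Real.pi / 2 ^ (m + 1) →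
        0 ≤ rotRe ψ (T ^ (2 ^ (n - m - 1)) * T ^ (2 ^ (n - m - 1))) := by
      intro ψ hψ
      rw [hUU]
      exact ih hm' ψ hψ
    have hstep := sect_step (T ^ (2 ^ (n - m - 1))) hc hc' hU hU2 φ
    have hangle : (Real.pi / 2 - Real.pi / 2 ^ (m + 1)) / 2 + Real.pi / 4
        = Real.pi / 2 - Real.pi / 2 ^ (m + 1 + 1) := by
      rw [pow_succ]
      ring
    have hidx : n - (m + 1) = n - m - 1 := by omega
    rw [hidx]
    exact hstep (by rw [hangle]; exact hφ)

end Hilbert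

/-- If `Re(T^(2^k)) ≥ 0` for every `k ∈ {0, 1, …, n}`, then
`−Re T ≤ cot(π/2^(n+1)) · Im T ≤ Re T`, i.e.
`|cot(π/2^(n+1)) · Im⟨Tx, x⟩| ≤ Re⟨Tx, x⟩` for all `x`. -/
theorem cot_im_le_re_of_two_powers_accretive
    {H : Type*} [NormedAddCommGroup H] [InnerProductSpace ℂ H] [CompleteSpace H]
    (T : H →L[ℂ] H) (n : ℕ) (hn : 0 < n)
    (h : ∀ k : ℕ, k ≤ n → ∀ x : H, 0 ≤ (inner ℂ ((T ^ (2 ^ k)) x) x : ℂ).re) :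
    ∀ x : H,
      |Real.cot (Real.pi / 2 ^ (n + 1)) * (inner ℂ (T x) x : ℂ).im| ≤
        (inner ℂ (T x) x : ℂ).re := by
  intro x
  rcases subsingleton_or_nontrivial H with hs | hn'
  · have hx : x = 0 := Subsingleton.elim x 0
    subst hx
    simp
  · have hπ := Real.pi_pos
    set θ : ℝ := Real.pi / 2 ^ (n + 1) with hθ
    have hθpos : 0 < θ := by positivity
    have h4le : (4 : ℝ) ≤ 2 ^ (n + 1) := by
      calc (4 : ℝ) = 2 ^ 2 := by norm_num
        _ ≤ 2 ^ (n + 1) := by apply pow_le_pow_right₀ (by norm_num) (by omega)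
    have hθle : θ ≤ Real.pi / 4 := by
      rw [hθ]
      apply div_le_div_of_nonneg_left hπ.le (by norm_num) h4le
    have hsin : 0 < Real.sin θ :=
      Real.sin_pos_of_pos_of_lt_pi hθpos (by linarith)
    have hcos : 0 ≤ Real.cos θ :=
      Real.cos_nonneg_of_mem_Icc ⟨by linarith, by linarith⟩
    have hmain := sect_induction T n h n le_rfl
    have hTn : T ^ (2 ^ (n - n)) = T := by norm_num
    rw [hTn] at hmain
    have hφ0nn : 0 ≤ Real.pi / 2 - θ := by linarith
    have habs : |Real.pi / 2 - θ| ≤ Real.pi / 2 - Real.pi / 2 ^ (n + 1) := by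
      rw [abs_of_nonneg hφ0nn]
    have hplus := inner_rotRe_nonneg (hmain (Real.pi / 2 - θ) habs) x
    have hminus := inner_rotRe_nonneg (hmain (-(Real.pi / 2 - θ)) (by rwa [abs_neg])) x
    rw [Real.cos_pi_div_two_sub, Real.sin_pi_div_two_sub] at hplus
    rw [Real.cos_neg, Real.sin_neg, Real.cos_pi_div_two_sub, Real.sin_pi_div_two_sub] at hminus
    set z : ℂ := inner ℂ (T x) x
    rw [Real.cot_eq_cos_div_sin, abs_le]
    constructor
    · rw [div_mul_eq_mul_div, le_div_iff₀ hsin]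
      nlinarith [hplus, hminus]
    · rw [div_mul_eq_mul_div, div_le_iff₀ hsin]
      nlinarith [hplus, hminus]
end

section
/- Let T be a bounded linear operator on a complex Hilbert space H with real part A = Re T and imaginary part B = Im T. If Re T ≥ 0 and Re(T²) ≥ 0, then A ≥ |B|, where |B| = (B*B)^(1/2) is the modulus of B; in particular −A ≤ B ≤ A. -/
open scoped NNReal ENNReal

section aux

variable {A : Type*} [CStarAlgebra A] [PartialOrder A] [StarOrderedRing A]

omit [PartialOrder A] [StarOrderedRing A] in
lemma aux_spectralRadius_mul_comm (a b : A) :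
    spectralRadius ℂ (a * b) = spectralRadius ℂ (b * a) := by
  have key : ∀ x y : A, spectralRadius ℂ (x * y) ≤ spectralRadius ℂ (y * x) := by
    intro x y
    refine iSup₂_le fun k hk => ?_
    rcases eq_or_ne k 0 with rfl | hk0
    · simp
    · have hh := spectrum.nonzero_mul_comm (𝕜 := ℂ) x y
      have hmem : k ∈ spectrum ℂ (x * y) \ {0} := ⟨hk, hk0⟩
      rw [hh] at hmem
      exact le_iSup₂ (f := fun k (_ : k ∈ spectrum ℂ (y * x)) => (‖k‖₊ : ℝ≥0∞)) k hmem.1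
  exact le_antisymm (key a b) (key b a)

lemma aux_smul_nonneg {a : A} (ha : 0 ≤ a) {r : ℝ} (hr : 0 ≤ r) : 0 ≤ r • a := by
  have h1 : r • a = star (Real.sqrt r • CFC.sqrt a) * (Real.sqrt r • CFC.sqrt a) := by
    rw [star_smul, star_trivial, (IsSelfAdjoint.of_nonneg (CFC.sqrt_nonneg _)).star_eq,
      smul_mul_smul_comm, CFC.sqrt_mul_sqrt_self a ha, Real.mul_self_sqrt hr]
  rw [h1]
  exact star_mul_self_nonneg _

/-- If `0 ≤ a`, `0 ≤ b` and `b ^ 2 ≤ a ^ 2` in a unital C⋆-algebra, then `b ≤ a`. -/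
lemma aux_le_of_sq_le_sq {a b : A} (ha : 0 ≤ a) (hb : 0 ≤ b) (h : b ^ 2 ≤ a ^ 2) : b ≤ a := by
  nontriviality A
  have key : ∀ ε : ℝ, 0 < ε → b ≤ a + ε • 1 := by
    intro ε hε
    have hε1 : (0 : A) ≤ ε • 1 := aux_smul_nonneg zero_le_one hε.le
    have hc0 : (0 : A) ≤ a + ε • 1 := add_nonneg ha hε1
    have hcu : IsUnit (a + ε • 1) := by
      refine CStarAlgebra.isUnit_of_le (ε • 1) (le_add_of_nonneg_left ha) ⟨hε1, ?_⟩
      exact ⟨⟨ε • 1, ε⁻¹ • 1, by rw [smul_mul_smul_comm, mul_inv_cancel₀ hε.ne', mul_one, one_smul],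
        by rw [smul_mul_smul_comm, inv_mul_cancel₀ hε.ne', mul_one, one_smul]⟩, rfl⟩
    set cu : Aˣ := hcu.unit with hcu_def
    have hcuv : (cu : A) = a + ε • 1 := hcu.unit_spec
    have hcuv0 : (0 : A) ≤ (cu : A) := hcuv ▸ hc0
    have hinv0 : (0 : A) ≤ (↑cu⁻¹ : A) := CFC.inv_nonneg_of_nonneg cu hcuv0
    have hb2 : (0 : A) ≤ b ^ 2 := by
      have hsms := star_mul_self_nonneg b
      rwa [(IsSelfAdjoint.of_nonneg hb).star_eq, ← sq] at hsms
    have hbc : b ^ 2 ≤ ((cu ^ 2 : Aˣ) : A) := by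
      have expand : ((cu ^ 2 : Aˣ) : A) = a ^ 2 + ((2 * ε) • a + (ε ^ 2) • 1) := by
        rw [Units.val_pow_eq_pow_val, hcuv]
        simp only [pow_two, mul_add, add_mul, smul_mul_assoc, mul_smul_comm, smul_smul,
          mul_one, one_mul]
        module
      have h2ea : (0 : A) ≤ (2 * ε) • a := aux_smul_nonneg ha (by positivity)
      have he21 : (0 : A) ≤ (ε ^ 2) • (1 : A) := aux_smul_nonneg zero_le_one (by positivity)
      calc b ^ 2 ≤ a ^ 2 := h
        _ ≤ _ := by rw [expand]; exact le_add_of_nonneg_right (add_nonneg h2ea he21)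
    have hnorm1 : ‖b * (↑cu⁻¹ : A)‖ ≤ 1 := by
      have hiff := le_iff_norm_sqrt_mul_sqrt_inv (A := A) (a := b ^ 2) (b := cu ^ 2) hb2
        (by rw [Units.val_pow_eq_pow_val]; exact CStarAlgebra.pow_nonneg hcuv0 2)
      have h1 := hiff.mp hbc
      rwa [CFC.sqrt_sq b hb, show ((cu ^ 2)⁻¹ : Aˣ) = (cu⁻¹) ^ 2 by rw [inv_pow],
        Units.val_pow_eq_pow_val, CFC.sqrt_sq _ hinv0] at h1
    have key2 : ‖CFC.sqrt b * CFC.sqrt (↑cu⁻¹ : A)‖ ≤ 1 := by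
      set s := CFC.sqrt b with hs_def
      set t := CFC.sqrt (↑cu⁻¹ : A) with ht_def
      have hs0 : (0 : A) ≤ s := CFC.sqrt_nonneg _
      have ht0 : (0 : A) ≤ t := CFC.sqrt_nonneg _
      have hssa := IsSelfAdjoint.of_nonneg hs0
      have htsa := IsSelfAdjoint.of_nonneg ht0
      have hst : star (s * t) * (s * t) = t * (b * t) := by
        rw [star_mul, hssa.star_eq, htsa.star_eq, mul_assoc, ← mul_assoc s s t,
          CFC.sqrt_mul_sqrt_self b hb]
      have hpos : (0 : A) ≤ t * (b * t) := by
        have := conjugate_nonneg_of_nonneg hb ht0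
        rwa [mul_assoc] at this
      have hnn : (‖s * t‖₊ : ℝ≥0∞) ^ 2 = spectralRadius ℂ (t * (b * t)) := by
        rw [(IsSelfAdjoint.of_nonneg hpos).spectralRadius_eq_nnnorm, ← hst, ← ENNReal.coe_pow]
        norm_cast
        rw [sq, CStarRing.nnnorm_star_mul_self]
      have hsr : spectralRadius ℂ (t * (b * t)) ≤ 1 := by
        rw [aux_spectralRadius_mul_comm t (b * t), mul_assoc,
          CFC.sqrt_mul_sqrt_self _ hinv0]
        refine (spectrum.spectralRadius_le_nnnorm _).trans ?_
        rw [show (1 : ℝ≥0∞) = ((1 : ℝ≥0) : ℝ≥0∞) by simp]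
        exact_mod_cast ENNReal.coe_le_coe.mpr (by exact_mod_cast hnorm1)
      have hle1 : (‖s * t‖₊ : ℝ≥0∞) ^ 2 ≤ 1 := hnn ▸ hsr
      have h2 : (‖s * t‖₊ : ℝ≥0∞) ≤ 1 := by
        by_contra hgt
        push_neg at hgt
        exact absurd hle1 (by simpa using (one_lt_pow₀ (n := 2) hgt (by norm_num)).not_ge)
      have h3 := ENNReal.coe_le_one_iff.mp h2
      exact_mod_cast h3
    have hble : b ≤ (cu : A) :=
      (le_iff_norm_sqrt_mul_sqrt_inv hb hcuv0).mpr key2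
    rwa [hcuv] at hble
  have hmem : ∀ ε ∈ Set.Ioi (0 : ℝ), a - b + ε • 1 ∈ {x : A | 0 ≤ x} := by
    intro ε hε
    have h1 := key ε hε
    have h2 : (0 : A) ≤ a + ε • 1 - b := sub_nonneg.mpr h1
    have h3 : a + ε • 1 - b = a - b + ε • 1 := by abel
    rwa [h3] at h2
  have htend : Filter.Tendsto (fun ε : ℝ => a - b + ε • 1) (nhdsWithin 0 (Set.Ioi 0))
      (nhds (a - b)) := by
    have hcont : Continuous fun ε : ℝ => a - b + ε • 1 := by fun_prop
    have := hcont.tendsto 0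
    simpa using this.mono_left nhdsWithin_le_nhds
  have hfin : a - b ∈ {x : A | 0 ≤ x} :=
    CStarAlgebra.isClosed_nonneg.mem_of_tendsto htend
      (Filter.eventually_of_mem self_mem_nhdsWithin hmem)
  exact sub_nonneg.mp hfin

end aux

set_option synthInstance.maxHeartbeats 1000000 in
set_option maxHeartbeats 1000000 in
/-- Let `A = Re T` and `B = Im T`. If `Re T ≥ 0` and `Re(T²) ≥ 0`, then `A ≥ |B|`
where `|B| = (B*B)^(1/2)`; in particular `−A ≤ B ≤ A`. -/
theorem re_ge_abs_im_of_accretive_of_sq_accretive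
    {H : Type*} [NormedAddCommGroup H] [InnerProductSpace ℂ H] [CompleteSpace H]
    (T : H →L[ℂ] H)
    (A B : H →L[ℂ] H)
    (hA : A = (2 : ℂ)⁻¹ • (T + ContinuousLinearMap.adjoint T))
    (hB : B = (2 * Complex.I : ℂ)⁻¹ • (T - ContinuousLinearMap.adjoint T))
    (h1 : ∀ x : H, 0 ≤ (inner ℂ (T x) x : ℂ).re)
    (h2 : ∀ x : H, 0 ≤ (inner ℂ ((T ^ 2) x) x : ℂ).re) :
    (A - CFC.sqrt (ContinuousLinearMap.adjoint B * B)).IsPositive ∧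
      (A - B).IsPositive ∧ (A + B).IsPositive := by
  rw [← ContinuousLinearMap.star_eq_adjoint] at hA hB
  -- self-adjointness of A and B
  have hAsa : IsSelfAdjoint A := by
    rw [hA]
    simp only [IsSelfAdjoint, star_smul, star_add, star_star, RCLike.star_def, map_inv₀,
      map_ofNat]
    rw [add_comm]
  have hBsa : IsSelfAdjoint B := by
    rw [hB]
    simp only [IsSelfAdjoint, star_smul, star_sub, star_star, RCLike.star_def, map_inv₀,
      map_mul, Complex.conj_I, Complex.conj_ofNat]
    match_scalars
    all_goals simp [mul_neg, inv_neg]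
  -- the quadratic form of the real part
  have hform : ∀ (S : H →L[ℂ] H) (x : H),
      (inner ℂ (((2 : ℂ)⁻¹ • (S + star S)) x) x : ℂ).re = (inner ℂ (S x) x : ℂ).re := by
    intro S x
    have hz : (inner ℂ x (S x) : ℂ).re = (inner ℂ (S x) x : ℂ).re := by
      rw [← inner_conj_symm x (S x)]; exact Complex.conj_re _
    rw [ContinuousLinearMap.smul_apply, ContinuousLinearMap.add_apply, inner_smul_left,
      inner_add_left, ContinuousLinearMap.star_eq_adjoint, ContinuousLinearMap.adjoint_inner_left]
    have hc : (starRingEnd ℂ) (2⁻¹ : ℂ) = ((2⁻¹ : ℝ) : ℂ) := by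
      rw [map_inv₀, Complex.conj_ofNat]; norm_num
    rw [hc, Complex.re_ofReal_mul, Complex.add_re, hz]
    ring
  -- A is positive
  have hApos : (0 : H →L[ℂ] H) ≤ A := by
    rw [ContinuousLinearMap.nonneg_iff_isPositive]
    refine ContinuousLinearMap.isPositive_def'.mpr ⟨hAsa, fun x => ?_⟩
    rw [ContinuousLinearMap.reApplyInnerSelf_apply, RCLike.re_to_complex]
    rw [hA]
    rw [hform T x]
    exact h1 x
  -- A ^ 2 - B ^ 2 = Re (T ^ 2) is positive
  have keyid : A ^ 2 - B ^ 2 = (2 : ℂ)⁻¹ • (T ^ 2 + star (T ^ 2)) := by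
    rw [hA, hB, star_pow]
    simp only [pow_two, smul_mul_smul_comm, mul_add, add_mul, mul_sub, sub_mul, smul_add,
      smul_sub]
    match_scalars
    all_goals (ring_nf; simp [Complex.I_sq]; try norm_num)
  have hsq : (0 : H →L[ℂ] H) ≤ A ^ 2 - B ^ 2 := by
    rw [ContinuousLinearMap.nonneg_iff_isPositive]
    refine ContinuousLinearMap.isPositive_def'.mpr ⟨((hAsa.pow 2).sub (hBsa.pow 2)), fun x => ?_⟩
    rw [ContinuousLinearMap.reApplyInnerSelf_apply, RCLike.re_to_complex]
    rw [keyid, hform (T ^ 2) x]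
    exact h2 x
  -- the modulus of B
  have hB2 : (0 : H →L[ℂ] H) ≤ B ^ 2 := by
    have hsms := star_mul_self_nonneg B
    rwa [hBsa.star_eq, ← sq] at hsms
  set m : H →L[ℂ] H := CFC.sqrt (B ^ 2) with hm_def
  have hmA : m ≤ A := by
    refine aux_le_of_sq_le_sq hApos (CFC.sqrt_nonneg _) ?_
    rw [CFC.sq_sqrt _ hB2]
    exact sub_nonneg.mp hsq
  -- m = cfc |·| B, hence ±B ≤ m
  have hmcfc : m = cfc (fun y : ℝ => |y|) B := by
    rw [hm_def]
    refine CFC.sqrt_unique ?_ (cfc_nonneg fun y _ => abs_nonneg y)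
    rw [← cfc_mul (R := ℝ) (fun y : ℝ => |y|) (fun y : ℝ => |y|) B (by fun_prop) (by fun_prop)]
    calc cfc (fun y : ℝ => |y| * |y|) B = cfc (fun y : ℝ => y ^ 2) B :=
          cfc_congr fun y _ => by rw [abs_mul_abs_self, sq]
      _ = B ^ 2 := by rw [cfc_pow_id (R := ℝ) B 2]
  have hBm : B ≤ m := by
    have h0 : (0 : H →L[ℂ] H) ≤ m - B := by
      conv_lhs => skip
      have hBid : B = cfc (fun y : ℝ => y) B := (cfc_id' ℝ B hBsa).symm
      rw [hmcfc]
      nth_rewrite 2 [hBid]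
      rw [← cfc_sub (a := B) (f := fun y : ℝ => |y|) (g := fun y : ℝ => y) (by fun_prop) (by fun_prop)]
      exact cfc_nonneg fun y _ => sub_nonneg.mpr (le_abs_self y)
    exact sub_nonneg.mp h0
  have hnegBm : -B ≤ m := by
    have h0 : (0 : H →L[ℂ] H) ≤ m + B := by
      have hBid : B = cfc (fun y : ℝ => y) B := (cfc_id' ℝ B hBsa).symm
      rw [hmcfc]
      nth_rewrite 2 [hBid]
      rw [← cfc_add (a := B) (f := fun y : ℝ => |y|) (g := fun y : ℝ => y) (by fun_prop) (by fun_prop)]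
      exact cfc_nonneg fun y _ => by linarith [neg_abs_le y]
    have h1' : (0 : H →L[ℂ] H) ≤ m - -B := by rwa [sub_neg_eq_add]
    exact sub_nonneg.mp h1'
  refine ⟨?_, ?_, ?_⟩
  · rw [← ContinuousLinearMap.star_eq_adjoint, hBsa.star_eq, ← sq]
    exact (ContinuousLinearMap.le_def m A).mp hmA
  · exact (ContinuousLinearMap.le_def B A).mp (hBm.trans hmA)
  · have h3 : -B ≤ A := hnegBm.trans hmA
    have h4 := (ContinuousLinearMap.le_def (-B) A).mp h3
    rwa [sub_neg_eq_add] at h4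
end
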